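/- arXiv:1307.5666 — 3 statements merged into one kernel-verified Lean document; each statement's English description precedes it below -/
import Mathlib

section
/- For every n ≥ 5 there exists a family of Θ(4ⁿ/n) lines in general position in the plane (specifically, of size C(2k-2, k-1)² when n = 2k+2) that contains no n lines in convex position. -/
open Set

/-- A non-vertical line in the plane represented by (slope, intercept). -/
def lineSet (l : ℝ × ℝ) : Set (ℝ × ℝ) := {p | p.2 = l.1 * p.1 + l.2}

/-- General position: pairwise distinct slopes (hence no two parallel, none vertical
by the representation) and no three concurrent. -/
def GenPos (F : Finset (ℝ × ℝ)) : Prop :=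
  (∀ l₁ ∈ F, ∀ l₂ ∈ F, l₁ ≠ l₂ → l₁.1 ≠ l₂.1) ∧
  (∀ l₁ ∈ F, ∀ l₂ ∈ F, ∀ l₃ ∈ F, l₁ ≠ l₂ → l₁ ≠ l₃ → l₂ ≠ l₃ →
    ¬ ∃ p, p ∈ lineSet l₁ ∧ p ∈ lineSet l₂ ∧ p ∈ lineSet l₃)

/-- Intersection point of two non-parallel lines. -/
noncomputable def interPt (l₁ l₂ : ℝ × ℝ) : ℝ × ℝ :=
  ((l₂.2 - l₁.2) / (l₁.1 - l₂.1),
   l₁.1 * ((l₂.2 - l₁.2) / (l₁.1 - l₂.1)) + l₁.2)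

/-- The point `p` lies strictly below the line `l` (the line is strictly above `p`). -/
def Below (p : ℝ × ℝ) (l : ℝ × ℝ) : Prop := p.2 < l.1 * p.1 + l.2

/-- The point `p` lies strictly above the line `l` (the line is strictly below `p`). -/
def Above (p : ℝ × ℝ) (l : ℝ × ℝ) : Prop := p.2 > l.1 * p.1 + l.2

/-- A sequence of lines ordered by strictly increasing slope forms a cup: each
intermediate line lies strictly above the intersection of its two neighbours. -/
def IsCup {k : ℕ} (a : Fin k → ℝ × ℝ) : Prop :=
  StrictMono (fun i => (a i).1) ∧
  ∀ i : Fin k, ∀ _h1 : 0 < (i : ℕ), ∀ h2 : (i : ℕ) + 1 < k,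
    Below (interPt (a ⟨(i : ℕ) - 1, by omega⟩) (a ⟨(i : ℕ) + 1, h2⟩)) (a i)

/-- A sequence of lines ordered by strictly increasing slope forms a cap: each
intermediate line lies strictly below the intersection of its two neighbours. -/
def IsCap {k : ℕ} (a : Fin k → ℝ × ℝ) : Prop :=
  StrictMono (fun i => (a i).1) ∧
  ∀ i : Fin k, ∀ _h1 : 0 < (i : ℕ), ∀ h2 : (i : ℕ) + 1 < k,
    Above (interPt (a ⟨(i : ℕ) - 1, by omega⟩) (a ⟨(i : ℕ) + 1, h2⟩)) (a i)

/-- `F` contains `k` lines forming a `k`-cup. -/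
def HasCup (k : ℕ) (F : Finset (ℝ × ℝ)) : Prop :=
  ∃ a : Fin k → ℝ × ℝ, (∀ i, a i ∈ F) ∧ IsCup a

/-- `F` contains `l` lines forming an `l`-cap. -/
def HasCap (l : ℕ) (F : Finset (ℝ × ℝ)) : Prop :=
  ∃ a : Fin l → ℝ × ℝ, (∀ i, a i ∈ F) ∧ IsCap a

/-- Union of the lines of a family. -/
def linesUnion (F : Finset (ℝ × ℝ)) : Set (ℝ × ℝ) := ⋃ l ∈ F, lineSet l

/-- `P` is a cell of the arrangement of `F`: a connected component of the
complement of the union of the lines. -/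
def IsCellOf (F : Finset (ℝ × ℝ)) (P : Set (ℝ × ℝ)) : Prop :=
  ∃ p ∈ (linesUnion F)ᶜ, P = connectedComponentIn (linesUnion F)ᶜ p

/-- The line `l` contributes a (positive length) segment to the boundary of `P`:
the closure of `P` meets `l` in more than one point. -/
def Contributes (l : ℝ × ℝ) (P : Set (ℝ × ℝ)) : Prop :=
  ∃ p q : ℝ × ℝ, p ≠ q ∧ p ∈ closure P ∩ lineSet l ∧ q ∈ closure P ∩ lineSet l

/-- `P` is a cell of the arrangement of `F` with a boundary segment on every line of `F`. -/
def IsNCell (F : Finset (ℝ × ℝ)) (P : Set (ℝ × ℝ)) : Prop :=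
  IsCellOf F P ∧ ∀ l ∈ F, Contributes l P

/-- The lines of `F` are in convex position: they define a cell bounded by all of them. -/
def ConvexPos (F : Finset (ℝ × ℝ)) : Prop := ∃ P, IsNCell F P

/-!
A set of lines in convex position splits into the lines `A` below its cell and the lines `B`
above it, and on every line the crossings that cut its edge off from the left precede those
that cut it off from the right (`IsCellSplit`).

The family `F_{k,k}` (no `(k+1)`-cup, no `(k+1)`-cap, no four-sided cell unbounded to the right)
is built recursively from `F_{k-1,k}` and a steep copy of `F_{k,k-1}` far to the right. Take a
copy `O` of it, translated so that its crossings lie left of those of the mirror image `I`, and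
replace every `o ∈ O` by the cluster of lines `o + ε v`, `v ∈ I`. As `ε → 0`, a split of these
lines reduces to: inside a cluster a cup of `A`-lines and a cap of `B`-lines of `I`; the
clusters meeting `A` form a cup of `O` and those meeting `B` a cap of `O`; a cluster bounded from
the right by another cluster carries at most one line of each side. Only the steepest cluster
meeting `A` and the flattest meeting `B` can carry more, and when they do, the clusters or the
lines of one cluster form a cell unbounded to one side, of which `O` and `I` have no large ones.
Altogether at most `2 k + 1` lines fit.
-/

namespace ConvexLines

open Filter Topology

noncomputable section

abbrev Line := ℝ × ℝ

/-- The abscissa of the crossing of `l` and `m`; `0` when they are parallel. -/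
def crossX (l m : Line) : ℝ := (m.2 - l.2) / (l.1 - m.1)

lemma crossX_comm (l m : Line) : crossX l m = crossX m l := by
  rw [crossX, crossX, ← neg_sub l.2, ← neg_sub m.1, neg_div_neg_eq]

/- A cell lying above the lines of `A` and below those of `B` has its edge on `l` cut off on the
left by the crossings of `l` with `leftBounds A B l` and on the right by those with
`rightBounds A B l`. -/
def leftBounds (A B : Finset Line) (l : Line) : Finset Line :=
  A.filter (·.1 < l.1) ∪ B.filter (l.1 < ·.1)

def rightBounds (A B : Finset Line) (l : Line) : Finset Line :=
  A.filter (l.1 < ·.1) ∪ B.filter (·.1 < l.1)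

def IsCellSplit (A B : Finset Line) : Prop :=
  ∀ l ∈ A ∪ B, ∀ m₁ ∈ leftBounds A B l, ∀ m₂ ∈ rightBounds A B l, crossX l m₁ < crossX l m₂

def IsCupSet (S : Finset Line) : Prop :=
  ∀ a ∈ S, ∀ b ∈ S, ∀ c ∈ S, a.1 < b.1 → b.1 < c.1 → crossX a b < crossX b c

def IsCapSet (S : Finset Line) : Prop :=
  ∀ a ∈ S, ∀ b ∈ S, ∀ c ∈ S, a.1 < b.1 → b.1 < c.1 → crossX b c < crossX a b

def SlopesLT (A B : Finset Line) : Prop := ∀ a ∈ A, ∀ b ∈ B, a.1 < b.1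

def SlopeInj (F : Finset Line) : Prop := ∀ l ∈ F, ∀ m ∈ F, l ≠ m → l.1 ≠ m.1

def NoConcurrent (F : Finset Line) : Prop :=
  ∀ l ∈ F, ∀ m ∈ F, ∀ m' ∈ F, l ≠ m → l ≠ m' → m ≠ m' → crossX l m ≠ crossX l m'

/- When all slopes of `A` are below those of `B`, a cell above `A` and below `B` is unbounded
to the right; these conditions forbid such cells with four or more sides. -/
def NoOpenCellRight (F : Finset Line) : Prop :=
  ∀ A ⊆ F, ∀ B ⊆ F, A.Nonempty → B.Nonempty → Disjoint A B → SlopesLT A B → IsCellSplit A B →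
    (A ∪ B).card ≤ 3

def NoOpenCellLeft (F : Finset Line) : Prop :=
  ∀ A ⊆ F, ∀ B ⊆ F, A.Nonempty → B.Nonempty → Disjoint A B → SlopesLT B A → IsCellSplit A B →
    (A ∪ B).card ≤ 3

structure IsCupCapFamily (a b : ℕ) (F : Finset Line) : Prop where
  card : F.card = Nat.choose (a + b - 2) (a - 1)
  slopeInj : SlopeInj F
  noConcurrent : NoConcurrent F
  cup_card_le : ∀ S ⊆ F, IsCupSet S → S.card ≤ a
  cap_card_le : ∀ S ⊆ F, IsCapSet S → S.card ≤ b

lemma mem_leftBounds {A B : Finset Line} {l m : Line} :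
    m ∈ leftBounds A B l ↔ m ∈ A ∧ m.1 < l.1 ∨ m ∈ B ∧ l.1 < m.1 := by
  simp [leftBounds]

lemma mem_rightBounds {A B : Finset Line} {l m : Line} :
    m ∈ rightBounds A B l ↔ m ∈ A ∧ l.1 < m.1 ∨ m ∈ B ∧ m.1 < l.1 := by
  simp [rightBounds]

lemma slope_ne_of_mem_leftBounds {A B : Finset Line} {l m : Line} (h : m ∈ leftBounds A B l) :
    l.1 ≠ m.1 := by
  rcases mem_leftBounds.mp h with ⟨-, h⟩ | ⟨-, h⟩
  exacts [h.ne', h.ne]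

lemma slope_ne_of_mem_rightBounds {A B : Finset Line} {l m : Line} (h : m ∈ rightBounds A B l) :
    l.1 ≠ m.1 := by
  rcases mem_rightBounds.mp h with ⟨-, h⟩ | ⟨-, h⟩
  exacts [h.ne, h.ne']

lemma SlopeInj.card_le_one {S : Finset Line} (hS : SlopeInj S)
    (h : ∀ x ∈ S, ∀ y ∈ S, ¬ x.1 < y.1) : S.card ≤ 1 := by
  refine Finset.card_le_one.mpr fun x hx y hy => ?_
  by_contra hxy
  rcases (hS x hx y hy hxy).lt_or_gt with hlt | hlt
  exacts [h x hx y hy hlt, h y hy x hx hlt]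

lemma SlopeInj.mono {S F : Finset Line} (hF : SlopeInj F) (hS : S ⊆ F) : SlopeInj S :=
  fun l hl m hm => hF l (hS hl) m (hS hm)

lemma IsCupSet.mono {S T : Finset Line} (hT : IsCupSet T) (hS : S ⊆ T) : IsCupSet S :=
  fun a ha b hb c hc => hT a (hS ha) b (hS hb) c (hS hc)

lemma IsCapSet.mono {S T : Finset Line} (hT : IsCapSet T) (hS : S ⊆ T) : IsCapSet S :=
  fun a ha b hb c hc => hT a (hS ha) b (hS hb) c (hS hc)

section Transport

variable {φ : Line → Line} (hφ : Function.Injective φ)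
  (hslope : ∀ l m : Line, (φ l).1 < (φ m).1 ↔ l.1 < m.1) {c : ℝ}
  (hcross : ∀ l m : Line, l.1 ≠ m.1 → crossX (φ l) (φ m) = crossX l m + c)
include hslope

lemma leftBounds_image (A B : Finset Line) (l : Line) :
    leftBounds (A.image φ) (B.image φ) (φ l) = (leftBounds A B l).image φ := by
  simp only [leftBounds, Finset.image_union, Finset.filter_image, hslope]

lemma rightBounds_image (A B : Finset Line) (l : Line) :
    rightBounds (A.image φ) (B.image φ) (φ l) = (rightBounds A B l).image φ := by
  simp only [rightBounds, Finset.image_union, Finset.filter_image, hslope]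

include hcross

lemma isCellSplit_image_iff (A B : Finset Line) :
    IsCellSplit (A.image φ) (B.image φ) ↔ IsCellSplit A B := by
  simp only [IsCellSplit, ← Finset.image_union, Finset.forall_mem_image,
    leftBounds_image hslope, rightBounds_image hslope]
  refine forall₂_congr fun l _ => forall₂_congr fun m₁ h₁ => forall₂_congr fun m₂ h₂ => ?_
  rw [hcross _ _ (slope_ne_of_mem_leftBounds h₁), hcross _ _ (slope_ne_of_mem_rightBounds h₂),
    add_lt_add_iff_right]

include hφ

lemma IsCupCapFamily.image {a b : ℕ} {F : Finset Line} (hF : IsCupCapFamily a b F) :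
    IsCupCapFamily a b (F.image φ) where
  card := by rw [Finset.card_image_of_injective _ hφ, hF.card]
  slopeInj := by
    simp only [SlopeInj, Finset.forall_mem_image]
    intro l hl m hm hne
    rcases (hF.slopeInj l hl m hm (ne_of_apply_ne φ hne)).lt_or_gt with h | h
    exacts [((hslope l m).mpr h).ne, ((hslope m l).mpr h).ne']
  noConcurrent := by
    simp only [NoConcurrent, Finset.forall_mem_image]
    intro l hl m hm m' hm' h₁ h₂ h₃
    have h₁ := ne_of_apply_ne φ h₁
    have h₂ := ne_of_apply_ne φ h₂
    rw [hcross _ _ (hF.slopeInj l hl m hm h₁), hcross _ _ (hF.slopeInj l hl m' hm' h₂),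
      Ne, add_left_inj]
    exact hF.noConcurrent l hl m hm m' hm' h₁ h₂ (ne_of_apply_ne φ h₃)
  cup_card_le := by
    intro S hS hcup
    obtain ⟨S, hSF, rfl⟩ := Finset.subset_image_iff.mp hS
    refine Finset.card_image_le.trans (hF.cup_card_le S hSF fun x hx y hy z hz hxy hyz => ?_)
    have := hcup _ (Finset.mem_image_of_mem φ hx) _ (Finset.mem_image_of_mem φ hy) _
      (Finset.mem_image_of_mem φ hz) ((hslope x y).mpr hxy) ((hslope y z).mpr hyz)
    rwa [hcross _ _ hxy.ne, hcross _ _ hyz.ne, add_lt_add_iff_right] at this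
  cap_card_le := by
    intro S hS hcap
    obtain ⟨S, hSF, rfl⟩ := Finset.subset_image_iff.mp hS
    refine Finset.card_image_le.trans (hF.cap_card_le S hSF fun x hx y hy z hz hxy hyz => ?_)
    have := hcap _ (Finset.mem_image_of_mem φ hx) _ (Finset.mem_image_of_mem φ hy) _
      (Finset.mem_image_of_mem φ hz) ((hslope x y).mpr hxy) ((hslope y z).mpr hyz)
    rwa [hcross _ _ hxy.ne, hcross _ _ hyz.ne, add_lt_add_iff_right] at this

lemma NoOpenCellRight.image {F : Finset Line} (hF : NoOpenCellRight F) :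
    NoOpenCellRight (F.image φ) := by
  intro A hA B hB hAne hBne hAB hsep hsplit
  obtain ⟨A, hAF, rfl⟩ := Finset.subset_image_iff.mp hA
  obtain ⟨B, hBF, rfl⟩ := Finset.subset_image_iff.mp hB
  rw [← Finset.image_union, Finset.card_image_of_injective _ hφ]
  refine hF A hAF B hBF (by simpa using hAne) (by simpa using hBne)
    ((Finset.disjoint_image hφ).mp hAB) (fun a ha b hb => ?_)
    ((isCellSplit_image_iff hslope hcross A B).mp hsplit)
  exact (hslope a b).mp (hsep _ (Finset.mem_image_of_mem φ ha) _ (Finset.mem_image_of_mem φ hb))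

end Transport

section Mirror

def mirror (l : Line) : Line := (-l.1, l.2)

lemma mirror_injective : Function.Injective mirror := fun l m h => by
  simpa [mirror, Prod.ext_iff] using h

@[simp] lemma mirror_slope_lt (l m : Line) : (mirror l).1 < (mirror m).1 ↔ m.1 < l.1 :=
  neg_lt_neg_iff

lemma crossX_mirror (l m : Line) : crossX (mirror l) (mirror m) = -crossX l m := by
  simp only [crossX, mirror, ← neg_sub l.1, neg_sub_neg, div_neg]

lemma leftBounds_mirror (A B : Finset Line) (l : Line) :
    leftBounds (A.image mirror) (B.image mirror) (mirror l) = (rightBounds A B l).image mirror := by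
  simp only [leftBounds, rightBounds, Finset.image_union, Finset.filter_image, mirror_slope_lt]

lemma rightBounds_mirror (A B : Finset Line) (l : Line) :
    rightBounds (A.image mirror) (B.image mirror) (mirror l) = (leftBounds A B l).image mirror := by
  simp only [leftBounds, rightBounds, Finset.image_union, Finset.filter_image, mirror_slope_lt]

lemma isCellSplit_mirror_iff (A B : Finset Line) :
    IsCellSplit (A.image mirror) (B.image mirror) ↔ IsCellSplit A B := by
  simp only [IsCellSplit, ← Finset.image_union, Finset.forall_mem_image,
    leftBounds_mirror, rightBounds_mirror, crossX_mirror, neg_lt_neg_iff]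
  exact forall₂_congr fun l _ => forall₂_comm

lemma IsCupCapFamily.mirror {a b : ℕ} {F : Finset Line} (hF : IsCupCapFamily a b F) :
    IsCupCapFamily a b (F.image mirror) where
  card := by rw [Finset.card_image_of_injective _ mirror_injective, hF.card]
  slopeInj := by
    simp only [SlopeInj, Finset.forall_mem_image]
    exact fun l hl m hm hne => neg_injective.ne (hF.slopeInj l hl m hm (ne_of_apply_ne _ hne))
  noConcurrent := by
    simp only [NoConcurrent, Finset.forall_mem_image, crossX_mirror, Ne, neg_inj]
    exact fun l hl m hm m' hm' h₁ h₂ h₃ => hF.noConcurrent l hl m hm m' hm'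
      (ne_of_apply_ne _ h₁) (ne_of_apply_ne _ h₂) (ne_of_apply_ne _ h₃)
  cup_card_le := by
    intro S hS hcup
    obtain ⟨S, hSF, rfl⟩ := Finset.subset_image_iff.mp hS
    refine Finset.card_image_le.trans (hF.cup_card_le S hSF fun x hx y hy z hz hxy hyz => ?_)
    have := hcup _ (Finset.mem_image_of_mem _ hz) _ (Finset.mem_image_of_mem _ hy) _
      (Finset.mem_image_of_mem _ hx) ((mirror_slope_lt z y).mpr hyz) ((mirror_slope_lt y x).mpr hxy)
    rwa [crossX_mirror, crossX_mirror, neg_lt_neg_iff, crossX_comm z y, crossX_comm y x] at this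
  cap_card_le := by
    intro S hS hcap
    obtain ⟨S, hSF, rfl⟩ := Finset.subset_image_iff.mp hS
    refine Finset.card_image_le.trans (hF.cap_card_le S hSF fun x hx y hy z hz hxy hyz => ?_)
    have := hcap _ (Finset.mem_image_of_mem _ hz) _ (Finset.mem_image_of_mem _ hy) _
      (Finset.mem_image_of_mem _ hx) ((mirror_slope_lt z y).mpr hyz) ((mirror_slope_lt y x).mpr hxy)
    rwa [crossX_mirror, crossX_mirror, neg_lt_neg_iff, crossX_comm z y, crossX_comm y x] at this

lemma NoOpenCellRight.mirror {F : Finset Line} (hF : NoOpenCellRight F) :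
    NoOpenCellLeft (F.image mirror) := by
  intro A hA B hB hAne hBne hAB hsep hsplit
  obtain ⟨A, hAF, rfl⟩ := Finset.subset_image_iff.mp hA
  obtain ⟨B, hBF, rfl⟩ := Finset.subset_image_iff.mp hB
  rw [← Finset.image_union, Finset.card_image_of_injective _ mirror_injective]
  refine hF A hAF B hBF (by simpa using hAne) (by simpa using hBne)
    ((Finset.disjoint_image mirror_injective).mp hAB) (fun a ha b hb => ?_)
    ((isCellSplit_mirror_iff A B).mp hsplit)
  exact (mirror_slope_lt b a).mp
    (hsep _ (Finset.mem_image_of_mem _ hb) _ (Finset.mem_image_of_mem _ ha))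

end Mirror

section ConvexPosition

lemma crossX_le_of_nonneg {l m : Line} {x : ℝ} (hlm : l.1 ≠ m.1)
    (h : 0 ≤ (l.1 - m.1) * ((l.1 * x + l.2) - (m.1 * x + m.2))) : crossX l m ≤ x := by
  have hd : l.1 - m.1 ≠ 0 := sub_ne_zero.mpr hlm
  rcases hd.lt_or_gt with hd | hd
  · rw [crossX, div_le_iff_of_neg hd]; nlinarith
  · rw [crossX, div_le_iff₀ hd]; nlinarith

lemma le_crossX_of_nonpos {l m : Line} {x : ℝ} (hlm : l.1 ≠ m.1)
    (h : (l.1 - m.1) * ((l.1 * x + l.2) - (m.1 * x + m.2)) ≤ 0) : x ≤ crossX l m := by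
  have hd : l.1 - m.1 ≠ 0 := sub_ne_zero.mpr hlm
  rcases hd.lt_or_gt with hd | hd
  · rw [crossX, le_div_iff_of_neg hd]; nlinarith
  · rw [crossX, le_div_iff₀ hd]; nlinarith

lemma closure_subset_of_isPreconnected {P : Set (ℝ × ℝ)} (hP : IsPreconnected P) {l : Line}
    (hPl : Disjoint P (lineSet l)) {p : ℝ × ℝ} (hp : p ∈ P) :
    (Above p l → closure P ⊆ {z | l.1 * z.1 + l.2 ≤ z.2}) ∧
    (Below p l → closure P ⊆ {z | z.2 ≤ l.1 * z.1 + l.2}) := by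
  have hcont : Continuous fun z : ℝ × ℝ => l.1 * z.1 + l.2 := by fun_prop
  have hcover : P ⊆ {z | Above z l} ∪ {z | Below z l} := fun z hz =>
    (show z.2 ≠ _ from Set.disjoint_left.mp hPl hz).lt_or_gt.symm
  rcases hP.subset_or_subset (isOpen_lt hcont continuous_snd) (isOpen_lt continuous_snd hcont)
    (Set.disjoint_left.mpr fun z (h₁ : _ < z.2) (h₂ : z.2 < _) => lt_asymm h₁ h₂) hcover
    with hside | hside
  · refine ⟨fun _ => closure_minimal (fun z hz => le_of_lt (α := ℝ) (hside hz))
      (isClosed_le hcont continuous_snd), fun h => absurd (hside hp) h.not_gt⟩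
  · refine ⟨fun h => absurd (hside hp) h.not_gt, fun _ => closure_minimal
      (fun z hz => le_of_lt (α := ℝ) (hside hz)) (isClosed_le continuous_snd hcont)⟩

lemma crossX_le_of_mem_leftBounds {A B : Finset Line} {l m : Line} {y : ℝ × ℝ}
    (hA : ∀ a ∈ A, a.1 * y.1 + a.2 ≤ y.2) (hB : ∀ b ∈ B, y.2 ≤ b.1 * y.1 + b.2)
    (hy : y ∈ lineSet l) (hm : m ∈ leftBounds A B l) : crossX l m ≤ y.1 := by
  refine crossX_le_of_nonneg (slope_ne_of_mem_leftBounds hm) ?_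
  rw [← show y.2 = _ from hy]
  rcases mem_leftBounds.mp hm with ⟨hm, hs⟩ | ⟨hm, hs⟩
  · exact mul_nonneg (sub_nonneg.mpr hs.le) (sub_nonneg.mpr (hA m hm))
  · exact mul_nonneg_of_nonpos_of_nonpos (sub_nonpos.mpr hs.le) (sub_nonpos.mpr (hB m hm))

lemma le_crossX_of_mem_rightBounds {A B : Finset Line} {l m : Line} {y : ℝ × ℝ}
    (hA : ∀ a ∈ A, a.1 * y.1 + a.2 ≤ y.2) (hB : ∀ b ∈ B, y.2 ≤ b.1 * y.1 + b.2)
    (hy : y ∈ lineSet l) (hm : m ∈ rightBounds A B l) : y.1 ≤ crossX l m := by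
  refine le_crossX_of_nonpos (slope_ne_of_mem_rightBounds hm) ?_
  rw [← show y.2 = _ from hy]
  rcases mem_rightBounds.mp hm with ⟨hm, hs⟩ | ⟨hm, hs⟩
  · exact mul_nonpos_of_nonpos_of_nonneg (sub_nonpos.mpr hs.le) (sub_nonneg.mpr (hA m hm))
  · exact mul_nonpos_of_nonneg_of_nonpos (sub_nonneg.mpr hs.le) (sub_nonpos.mpr (hB m hm))

/- `A` collects the lines below a point of the cell, `B` those above it. -/
lemma exists_isCellSplit_of_convexPos {G : Finset Line} (h : ConvexPos G) :
    ∃ A B : Finset Line, Disjoint A B ∧ A ∪ B = G ∧ IsCellSplit A B := by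
  obtain ⟨P, ⟨p, hp, rfl⟩, hedge⟩ := h
  set P := connectedComponentIn (linesUnion G)ᶜ p
  have hpP : p ∈ P := mem_connectedComponentIn hp
  have hPl : ∀ l ∈ G, Disjoint P (lineSet l) := fun l hl => Set.disjoint_left.mpr fun z hz hzl =>
    connectedComponentIn_subset _ _ hz (Set.mem_biUnion hl hzl)
  have hside := fun l hl => closure_subset_of_isPreconnected
    isPreconnected_connectedComponentIn (hPl l hl) hpP
  have hoff : ∀ l ∈ G, p.2 ≠ l.1 * p.1 + l.2 := fun l hl =>
    Set.disjoint_left.mp (hPl l hl) hpP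
  set A := G.filter fun l => l.1 * p.1 + l.2 < p.2
  set B := G.filter fun l => p.2 < l.1 * p.1 + l.2
  have hA : ∀ y ∈ closure P, ∀ a ∈ A, a.1 * y.1 + a.2 ≤ y.2 := fun y hy a ha =>
    (hside a (Finset.mem_filter.mp ha).1).1 (Finset.mem_filter.mp ha).2 hy
  have hB : ∀ y ∈ closure P, ∀ b ∈ B, y.2 ≤ b.1 * y.1 + b.2 := fun y hy b hb =>
    (hside b (Finset.mem_filter.mp hb).1).2 (Finset.mem_filter.mp hb).2 hy
  refine ⟨A, B, Finset.disjoint_filter.mpr fun l _ h₁ h₂ => lt_asymm h₁ h₂, ?_, ?_⟩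
  · rw [← Finset.filter_or, Finset.filter_true_of_mem fun l hl => (hoff l hl).lt_or_gt.symm]
  intro l hl m₁ hm₁ m₂ hm₂
  have hlG : l ∈ G := by simp only [A, B, ← Finset.filter_or, Finset.mem_filter] at hl; exact hl.1
  obtain ⟨z, w, hzw, ⟨hz, hzl⟩, ⟨hw, hwl⟩⟩ := hedge l hlG
  have hx : z.1 ≠ w.1 := fun h => hzw (Prod.ext h (by rw [show z.2 = _ from hzl,
    show w.2 = _ from hwl, h]))
  rcases hx.lt_or_gt with h | h
  · exact (crossX_le_of_mem_leftBounds (hA z hz) (hB z hz) hzl hm₁).trans_lt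
      (h.trans_le (le_crossX_of_mem_rightBounds (hA w hw) (hB w hw) hwl hm₂))
  · exact (crossX_le_of_mem_leftBounds (hA w hw) (hB w hw) hwl hm₁).trans_lt
      (h.trans_le (le_crossX_of_mem_rightBounds (hA z hz) (hB z hz) hzl hm₂))

end ConvexPosition

lemma genPos_of_noConcurrent {F : Finset Line} (hinj : SlopeInj F) (hconc : NoConcurrent F) :
    GenPos F := by
  refine ⟨hinj, fun l₁ h₁ l₂ h₂ l₃ h₃ h₁₂ h₁₃ h₂₃ ⟨p, hp₁, hp₂, hp₃⟩ => ?_⟩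
  have hcross : ∀ m, l₁.1 ≠ m.1 → p ∈ lineSet m → p.1 = crossX l₁ m := fun m hm hpm => by
    rw [crossX, eq_div_iff (sub_ne_zero.mpr hm)]
    linarith [show p.2 = _ from hp₁, show p.2 = _ from hpm]
  exact hconc l₁ h₁ l₂ h₂ l₃ h₃ h₁₂ h₁₃ h₂₃ <| by
    rw [← hcross l₂ (hinj l₁ h₁ l₂ h₂ h₁₂) hp₂, ← hcross l₃ (hinj l₁ h₁ l₃ h₃ h₁₃) hp₃]

lemma card_le_card_inter_add_card_inter {α : Type*} [DecidableEq α] {S L R : Finset α}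
    (hS : S ⊆ L ∪ R) : S.card ≤ (S ∩ L).card + (S ∩ R).card :=
  (Finset.card_le_card fun x hx => by simpa [hx] using hS hx).trans (Finset.card_union_le _ _)

structure FarRight (L R : Finset Line) : Prop where
  slopesLT : SlopesLT L R
  crossX_lt_of_left : ∀ u ∈ L, ∀ r ∈ R, ∀ w ∈ L, ∀ w' ∈ L, w ≠ w' → crossX w w' < crossX u r
  crossX_lt_of_right : ∀ u ∈ L, ∀ r ∈ R, ∀ w ∈ R, ∀ w' ∈ R, w ≠ w' → crossX w w' < crossX u r
  crossX_anti : ∀ u ∈ L, ∀ r ∈ R, ∀ r' ∈ R, r.1 < r'.1 → crossX u r' < crossX u r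
  crossX_mono : ∀ u ∈ L, ∀ u' ∈ L, ∀ r ∈ R, u.1 < u'.1 → crossX u r < crossX u' r

namespace FarRight

variable {L R : Finset Line} (h : FarRight L R)
include h

lemma disjoint : Disjoint L R :=
  Finset.disjoint_left.mpr fun x hxL hxR => lt_irrefl _ (h.slopesLT x hxL x hxR)

lemma crossX_lt_crossX {u r w w' : Line} (hu : u ∈ L) (hr : r ∈ R)
    (hww' : w ∈ L ∧ w' ∈ L ∨ w ∈ R ∧ w' ∈ R) (hne : w ≠ w') : crossX w w' < crossX u r := by
  rcases hww' with ⟨hw, hw'⟩ | ⟨hw, hw'⟩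
  exacts [h.crossX_lt_of_left u hu r hr w hw w' hw' hne,
    h.crossX_lt_of_right u hu r hr w hw w' hw' hne]

lemma slopeInj (hL : SlopeInj L) (hR : SlopeInj R) : SlopeInj (L ∪ R) := by
  intro l hl m hm hne
  rcases Finset.mem_union.mp hl with hl | hl <;> rcases Finset.mem_union.mp hm with hm | hm
  exacts [hL l hl m hm hne, (h.slopesLT l hl m hm).ne, (h.slopesLT m hm l hl).ne',
    hR l hl m hm hne]

lemma noConcurrent (hLi : SlopeInj L) (hRi : SlopeInj R) (hL : NoConcurrent L)
    (hR : NoConcurrent R) : NoConcurrent (L ∪ R) := by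
  intro l hl m hm m' hm' h₁ h₂ h₃
  simp only [Finset.mem_union] at hl hm hm'
  rcases hl with hl | hl <;> rcases hm with hm | hm <;> rcases hm' with hm' | hm'
  · exact hL l hl m hm m' hm' h₁ h₂ h₃
  · exact (h.crossX_lt_of_left l hl m' hm' l hl m hm h₁).ne
  · exact (h.crossX_lt_of_left l hl m hm l hl m' hm' h₂).ne'
  · rcases (hRi m hm m' hm' h₃).lt_or_gt with ho | ho
    exacts [(h.crossX_anti l hl m hm m' hm' ho).ne', (h.crossX_anti l hl m' hm' m hm ho).ne]
  · rw [crossX_comm l m, crossX_comm l m']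
    rcases (hLi m hm m' hm' h₃).lt_or_gt with ho | ho
    exacts [(h.crossX_mono m hm m' hm' l hl ho).ne, (h.crossX_mono m' hm' m hm l hl ho).ne']
  · rw [crossX_comm l m]
    exact (h.crossX_lt_of_right m hm l hl l hl m' hm' h₂).ne'
  · rw [crossX_comm l m']
    exact (h.crossX_lt_of_right m' hm' l hl l hl m hm h₁).ne
  · exact hR l hl m hm m' hm' h₁ h₂ h₃

lemma cup_card_le {a : ℕ} (hRi : SlopeInj R) (hL : ∀ S ⊆ L, IsCupSet S → S.card ≤ a)
    (hR : ∀ S ⊆ R, IsCupSet S → S.card ≤ a + 1) :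
    ∀ S ⊆ L ∪ R, IsCupSet S → S.card ≤ a + 1 := by
  intro S hS hcup
  by_cases hSL : ∃ u ∈ S, u ∈ L
  · obtain ⟨u, huS, huL⟩ := hSL
    -- `u, r, r'` would be a cup, but `crossX r r'` lies left of `crossX u r`
    have hSR : (S ∩ R).card ≤ 1 := (hRi.mono Finset.inter_subset_right).card_le_one
      fun r hr r' hr' hrr' => by
        simp only [Finset.mem_inter] at hr hr'
        exact (hcup u huS r hr.1 r' hr'.1 (h.slopesLT u huL r hr.2) hrr').not_gt
          (h.crossX_lt_of_right u huL r hr.2 r hr.2 r' hr'.2 (ne_of_apply_ne _ hrr'.ne))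
    have := hL _ Finset.inter_subset_right (hcup.mono Finset.inter_subset_left)
    linarith [card_le_card_inter_add_card_inter hS]
  · push Not at hSL
    refine hR S (fun x hx => ?_) hcup
    exact (Finset.mem_union.mp (hS hx)).resolve_left (hSL x hx)

lemma cap_card_le {b : ℕ} (hLi : SlopeInj L) (hL : ∀ S ⊆ L, IsCapSet S → S.card ≤ b + 1)
    (hR : ∀ S ⊆ R, IsCapSet S → S.card ≤ b) :
    ∀ S ⊆ L ∪ R, IsCapSet S → S.card ≤ b + 1 := by
  intro S hS hcap
  by_cases hSR : ∃ r ∈ S, r ∈ R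
  · obtain ⟨r, hrS, hrR⟩ := hSR
    -- `u, u', r` would be a cap, but `crossX u u'` lies left of `crossX u' r`
    have hSL : (S ∩ L).card ≤ 1 := (hLi.mono Finset.inter_subset_right).card_le_one
      fun u hu u' hu' huu' => by
        simp only [Finset.mem_inter] at hu hu'
        exact (hcap u hu.1 u' hu'.1 r hrS huu' (h.slopesLT u' hu'.2 r hrR)).not_gt
          (h.crossX_lt_of_left u' hu'.2 r hrR u hu.2 u' hu'.2 (ne_of_apply_ne _ huu'.ne))
    have := hR _ Finset.inter_subset_right (hcap.mono Finset.inter_subset_left)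
    linarith [card_le_card_inter_add_card_inter hS]
  · push Not at hSR
    refine hL S (fun x hx => ?_) hcap
    exact (Finset.mem_union.mp (hS hx)).resolve_right (hSR x hx)

/- A crossing of `L` with `R` lies right of every crossing inside `L` or inside `R`, so it cannot
be a left bound of `l` while a line from the same part as `l` is a right bound. -/
lemma not_isCellSplit {A B : Finset Line} (hsplit : IsCellSplit A B) {l m₁ m₂ : Line}
    (hl : l ∈ A ∪ B) (hm₁ : m₁ ∈ leftBounds A B l) (hm₂ : m₂ ∈ rightBounds A B l)
    (hcross : l ∈ L ∧ m₁ ∈ R ∨ l ∈ R ∧ m₁ ∈ L) (hsame : l ∈ L ∧ m₂ ∈ L ∨ l ∈ R ∧ m₂ ∈ R) :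
    False := by
  have hne : l ≠ m₂ := ne_of_apply_ne Prod.fst (slope_ne_of_mem_rightBounds hm₂)
  refine (hsplit l hl m₁ hm₁ m₂ hm₂).not_gt ?_
  rcases hcross with ⟨hlL, hm₁R⟩ | ⟨hlR, hm₁L⟩
  · exact h.crossX_lt_crossX hlL hm₁R hsame hne
  · rw [crossX_comm l m₁]; exact h.crossX_lt_crossX hm₁L hlR hsame hne

/- A split using lines from both `L` and `R` has at most one line in each of `A ∩ L`, `A ∩ R`,
`B ∩ L`, `B ∩ R`, and `A ∩ R`, `B ∩ L` cannot both be occupied. -/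
lemma card_le_three_of_mixed (hLi : SlopeInj L) (hRi : SlopeInj R) {A B : Finset Line}
    (hA : A ⊆ L ∪ R) (hB : B ⊆ L ∪ R) (hsep : SlopesLT A B) (hsplit : IsCellSplit A B)
    {u v : Line} (huA : u ∈ A) (huL : u ∈ L) (hvB : v ∈ B) (hvR : v ∈ R) :
    (A ∪ B).card ≤ 3 := by
  have inj := (h.slopeInj hLi hRi).mono (Finset.union_subset hA hB)
  have hcard : ∀ {S : Finset Line}, S ⊆ A ∪ B → (∀ x ∈ S, ∀ y ∈ S, x.1 < y.1 → False) →
      S.card ≤ 1 := fun hS hS' => (inj.mono hS).card_le_one hS'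
  have hAL : (A ∩ L).card ≤ 1 := hcard (Finset.inter_subset_left.trans Finset.subset_union_left)
    fun x hx y hy hxy => by
      simp only [Finset.mem_inter] at hx hy
      exact h.not_isCellSplit hsplit (l := x) (m₁ := v) (m₂ := y) (Finset.mem_union_left _ hx.1)
        (mem_leftBounds.mpr (Or.inr ⟨hvB, h.slopesLT x hx.2 v hvR⟩))
        (mem_rightBounds.mpr (Or.inl ⟨hy.1, hxy⟩)) (Or.inl ⟨hx.2, hvR⟩) (Or.inl ⟨hx.2, hy.2⟩)
  have hAR : (A ∩ R).card ≤ 1 := hcard (Finset.inter_subset_left.trans Finset.subset_union_left)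
    fun x hx y hy hxy => by
      simp only [Finset.mem_inter] at hx hy
      exact h.not_isCellSplit hsplit (l := x) (m₁ := u) (m₂ := y) (Finset.mem_union_left _ hx.1)
        (mem_leftBounds.mpr (Or.inl ⟨huA, h.slopesLT u huL x hx.2⟩))
        (mem_rightBounds.mpr (Or.inl ⟨hy.1, hxy⟩)) (Or.inr ⟨hx.2, huL⟩) (Or.inr ⟨hx.2, hy.2⟩)
  have hBL : (B ∩ L).card ≤ 1 := hcard (Finset.inter_subset_left.trans Finset.subset_union_right)
    fun x hx y hy hxy => by
      simp only [Finset.mem_inter] at hx hy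
      exact h.not_isCellSplit hsplit (l := y) (m₁ := v) (m₂ := x) (Finset.mem_union_right _ hy.1)
        (mem_leftBounds.mpr (Or.inr ⟨hvB, h.slopesLT y hy.2 v hvR⟩))
        (mem_rightBounds.mpr (Or.inr ⟨hx.1, hxy⟩)) (Or.inl ⟨hy.2, hvR⟩) (Or.inl ⟨hy.2, hx.2⟩)
  have hBR : (B ∩ R).card ≤ 1 := hcard (Finset.inter_subset_left.trans Finset.subset_union_right)
    fun x hx y hy hxy => by
      simp only [Finset.mem_inter] at hx hy
      exact h.not_isCellSplit hsplit (l := y) (m₁ := u) (m₂ := x) (Finset.mem_union_right _ hy.1)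
        (mem_leftBounds.mpr (Or.inl ⟨huA, h.slopesLT u huL y hy.2⟩))
        (mem_rightBounds.mpr (Or.inr ⟨hx.1, hxy⟩)) (Or.inr ⟨hy.2, huL⟩) (Or.inr ⟨hy.2, hx.2⟩)
  have hexcl : (A ∩ R).card = 0 ∨ (B ∩ L).card = 0 := by
    by_contra! hc
    obtain ⟨x, hx⟩ := Finset.card_pos.mp (Nat.pos_of_ne_zero hc.1)
    obtain ⟨y, hy⟩ := Finset.card_pos.mp (Nat.pos_of_ne_zero hc.2)
    simp only [Finset.mem_inter] at hx hy
    exact lt_asymm (hsep x hx.1 y hy.1) (h.slopesLT y hy.2 x hx.2)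
  have := card_le_card_inter_add_card_inter hA
  have := card_le_card_inter_add_card_inter hB
  have := Finset.card_union_le A B
  omega

lemma noOpenCellRight (hLi : SlopeInj L) (hRi : SlopeInj R) (hL : NoOpenCellRight L)
    (hR : NoOpenCellRight R) : NoOpenCellRight (L ∪ R) := by
  intro A hA B hB hAne hBne hAB hsep hsplit
  by_cases hAL : ∃ u ∈ A, u ∈ L
  swap
  · -- everything lies in `R`, since `B` is steeper than `A`
    push Not at hAL
    have hAR : A ⊆ R := fun x hx => (Finset.mem_union.mp (hA hx)).resolve_left (hAL x hx)
    obtain ⟨a, ha⟩ := hAne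
    refine hR A hAR B (fun x hx => (Finset.mem_union.mp (hB hx)).resolve_left fun hxL => ?_)
      ⟨a, ha⟩ hBne hAB hsep hsplit
    exact lt_asymm (hsep a ha x hx) (h.slopesLT x hxL a (hAR ha))
  by_cases hBR : ∃ v ∈ B, v ∈ R
  swap
  · push Not at hBR
    have hBL : B ⊆ L := fun x hx => (Finset.mem_union.mp (hB hx)).resolve_right (hBR x hx)
    obtain ⟨b, hb⟩ := hBne
    refine hL A (fun x hx => (Finset.mem_union.mp (hA hx)).resolve_right fun hxR => ?_) B hBL
      hAne ⟨b, hb⟩ hAB hsep hsplit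
    exact lt_asymm (hsep x hx b hb) (h.slopesLT b (hBL hb) x hxR)
  obtain ⟨u, huA, huL⟩ := hAL
  obtain ⟨v, hvB, hvR⟩ := hBR
  exact h.card_le_three_of_mixed hLi hRi hA hB hsep hsplit huA huL hvB hvR

lemma isCupCapFamily {a b : ℕ} (ha : 2 ≤ a) (hb : 2 ≤ b) (hL : IsCupCapFamily (a - 1) b L)
    (hR : IsCupCapFamily a (b - 1) R) : IsCupCapFamily a b (L ∪ R) where
  card := by
    rw [Finset.card_union_of_disjoint h.disjoint, hL.card, hR.card]
    obtain ⟨a, rfl⟩ := Nat.exists_eq_add_of_le' ha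
    obtain ⟨b, rfl⟩ := Nat.exists_eq_add_of_le' hb
    rw [show a + 2 - 1 + (b + 2) - 2 = a + b + 1 by omega,
      show a + 2 + (b + 2 - 1) - 2 = a + b + 1 by omega,
      show a + 2 + (b + 2) - 2 = a + b + 1 + 1 by omega, show a + 2 - 1 - 1 = a by omega,
      show a + 2 - 1 = a + 1 by omega]
    exact (Nat.choose_succ_succ _ _).symm
  slopeInj := h.slopeInj hL.slopeInj hR.slopeInj
  noConcurrent := h.noConcurrent hL.slopeInj hR.slopeInj hL.noConcurrent hR.noConcurrent
  cup_card_le := by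
    have := h.cup_card_le (a := a - 1) hR.slopeInj hL.cup_card_le
      (by rw [Nat.sub_add_cancel (by omega)]; exact hR.cup_card_le)
    rwa [Nat.sub_add_cancel (by omega)] at this
  cap_card_le := by
    have := h.cap_card_le (b := b - 1) hL.slopeInj
      (by rw [Nat.sub_add_cancel (by omega)]; exact hL.cap_card_le) hR.cap_card_le
    rwa [Nat.sub_add_cancel (by omega)] at this

end FarRight

/-- Adds the line `y = M x - M ^ 2`: crossings keep their abscissae, slopes grow by `M`. -/
def tilt (M : ℝ) (l : Line) : Line := (l.1 + M, l.2 - M ^ 2)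

lemma tilt_injective (M : ℝ) : Function.Injective (tilt M) := fun l m h => by
  simpa [tilt, Prod.ext_iff] using h

lemma tilt_slope_lt (M : ℝ) (l m : Line) : (tilt M l).1 < (tilt M m).1 ↔ l.1 < m.1 :=
  add_lt_add_iff_right M

lemma crossX_tilt (M : ℝ) (l m : Line) : crossX (tilt M l) (tilt M m) = crossX l m := by
  simp only [crossX, tilt]
  congr 1 <;> ring

lemma tendsto_crossX_tilt_sub (u r : Line) :
    Tendsto (fun M => crossX u (tilt M r) - M) atTop (𝓝 (u.1 - r.1)) := by
  have hev : (fun M => (u.1 - r.1) + ((r.1 - u.1) ^ 2 - (r.2 - u.2)) / (M + (r.1 - u.1)))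
      =ᶠ[atTop] fun M => crossX u (tilt M r) - M := by
    filter_upwards [eventually_gt_atTop (u.1 - r.1)] with M hM
    have hD : M + (r.1 - u.1) ≠ 0 := by linarith
    rw [crossX, tilt, show u.1 - (r.1 + M) = -(M + (r.1 - u.1)) by ring]
    field_simp
    ring
  refine Tendsto.congr' hev ?_
  simpa using (tendsto_const_nhds (x := u.1 - r.1)).add
    ((tendsto_const_nhds (x := (r.1 - u.1) ^ 2 - (r.2 - u.2))).div_atTop
      (tendsto_atTop_add_const_right _ (r.1 - u.1) tendsto_id))

lemma eventually_farRight (L R : Finset Line) :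
    ∀ᶠ M in atTop, FarRight L (R.image (tilt M)) := by
  have htop : ∀ u r, Tendsto (fun M => crossX u (tilt M r)) atTop atTop := fun u r => by
    simpa using (tendsto_crossX_tilt_sub u r).add_atTop tendsto_id
  have e₀ : ∀ᶠ M in atTop, ∀ u ∈ L, ∀ r ∈ R, u.1 < (tilt M r).1 := by
    simp only [eventually_all_finset]
    exact fun u _ r _ => (eventually_gt_atTop (u.1 - r.1)).mono fun M hM => by
      simp only [tilt]; linarith
  have e₁ : ∀ᶠ M in atTop, ∀ u ∈ L, ∀ r ∈ R, ∀ w ∈ L ∪ R, ∀ w' ∈ L ∪ R,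
      crossX w w' < crossX u (tilt M r) := by
    simp only [eventually_all_finset]
    exact fun u _ r _ w _ w' _ => (htop u r).eventually_gt_atTop _
  have e₂ : ∀ᶠ M in atTop, ∀ u ∈ L, ∀ r ∈ R, ∀ r' ∈ R, r.1 < r'.1 →
      crossX u (tilt M r') < crossX u (tilt M r) := by
    simp only [eventually_all_finset, eventually_imp_distrib_left]
    intro u _ r _ r' _ hrr'
    filter_upwards [(tendsto_crossX_tilt_sub u r').eventually_lt (tendsto_crossX_tilt_sub u r)
      (by linarith)] with M hM
    linarith
  have e₃ : ∀ᶠ M in atTop, ∀ u ∈ L, ∀ u' ∈ L, ∀ r ∈ R, u.1 < u'.1 →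
      crossX u (tilt M r) < crossX u' (tilt M r) := by
    simp only [eventually_all_finset, eventually_imp_distrib_left]
    intro u _ u' _ r _ huu'
    filter_upwards [(tendsto_crossX_tilt_sub u r).eventually_lt (tendsto_crossX_tilt_sub u' r)
      (by linarith)] with M hM
    linarith
  filter_upwards [e₀, e₁, e₂, e₃] with M h₀ h₁ h₂ h₃
  constructor <;> simp only [SlopesLT, Finset.forall_mem_image]
  · exact h₀
  · exact fun u hu r hr w hw w' hw' _ =>
      h₁ u hu r hr w (Finset.mem_union_left _ hw) w' (Finset.mem_union_left _ hw')
  · intro u hu r hr w hw w' hw' _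
    rw [crossX_tilt]
    exact h₁ u hu r hr w (Finset.mem_union_right _ hw) w' (Finset.mem_union_right _ hw')
  · exact fun u hu r hr r' hr' hrr' => h₂ u hu r hr r' hr' ((tilt_slope_lt M r r').mp hrr')
  · exact h₃

lemma isCupCapFamily_singleton {a b : ℕ} (l : Line) (hab : a = 1 ∧ 1 ≤ b ∨ 1 ≤ a ∧ b = 1) :
    IsCupCapFamily a b {l} where
  card := by
    rcases hab with ⟨rfl, -⟩ | ⟨-, rfl⟩
    · simp
    · simp [show a + 1 - 2 = a - 1 by omega]
  slopeInj := by simp [SlopeInj]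
  noConcurrent := by simp [NoConcurrent]
  cup_card_le S hS _ := (Finset.card_le_card hS).trans (by simp; omega)
  cap_card_le S hS _ := (Finset.card_le_card hS).trans (by simp; omega)

lemma noOpenCellRight_singleton (l : Line) : NoOpenCellRight {l} := fun A hA B hB _ _ _ _ _ =>
  (Finset.card_le_card (Finset.union_subset hA hB)).trans (by simp)

/- The family `F_{a,b}` of the paper: `F_{a-1,b}` together with a copy of `F_{a,b-1}`
placed far to the right. -/
theorem exists_isCupCapFamily (a b : ℕ) (ha : 1 ≤ a) (hb : 1 ≤ b) :
    ∃ F, IsCupCapFamily a b F ∧ NoOpenCellRight F := by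
  by_cases hab : a = 1 ∨ b = 1
  · exact ⟨{0}, isCupCapFamily_singleton 0 (by omega), noOpenCellRight_singleton 0⟩
  obtain ⟨L, hL, hL'⟩ := exists_isCupCapFamily (a - 1) b (by omega) hb
  obtain ⟨R, hR, hR'⟩ := exists_isCupCapFamily a (b - 1) ha (by omega)
  obtain ⟨M, hM⟩ := (eventually_farRight L R).exists
  have hcross : ∀ l m : Line, l.1 ≠ m.1 → crossX (tilt M l) (tilt M m) = crossX l m + 0 :=
    fun l m _ => by rw [crossX_tilt, add_zero]
  have hR₁ := hR.image (tilt_injective M) (tilt_slope_lt M) hcross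
  exact ⟨_, hM.isCupCapFamily (by omega) (by omega) hL hR₁, hM.noOpenCellRight hL.slopeInj
    hR₁.slopeInj hL' (hR'.image (tilt_injective M) (tilt_slope_lt M) hcross)⟩
termination_by a + b

section Clusters

variable {S : Finset (Line × Line)}

def clusters (S : Finset (Line × Line)) : Finset Line := S.image Prod.fst

def fiber (S : Finset (Line × Line)) (o : Line) : Finset Line :=
  (S.filter (·.1 = o)).image Prod.snd

lemma mem_fiber {o v : Line} : v ∈ fiber S o ↔ (o, v) ∈ S := by
  simp only [fiber, Finset.mem_image, Finset.mem_filter]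
  exact ⟨fun ⟨p, ⟨hp, h₁⟩, h₂⟩ => by rwa [← h₁, ← h₂], fun h => ⟨_, ⟨h, rfl⟩, rfl⟩⟩

lemma mem_clusters {o : Line} : o ∈ clusters S ↔ ∃ v, (o, v) ∈ S := by
  simp [clusters]

lemma fiber_subset {O I : Finset Line} (hS : S ⊆ O ×ˢ I) (o : Line) : fiber S o ⊆ I :=
  fun _ hv => (Finset.mem_product.mp (hS (mem_fiber.mp hv))).2

lemma clusters_subset {O I : Finset Line} (hS : S ⊆ O ×ˢ I) : clusters S ⊆ O := by
  intro o ho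
  obtain ⟨v, hv⟩ := mem_clusters.mp ho
  exact (Finset.mem_product.mp (hS hv)).1

lemma card_eq_sum_card_fiber : S.card = ∑ o ∈ clusters S, (fiber S o).card := by
  rw [Finset.card_eq_sum_card_fiberwise fun p hp => Finset.mem_image_of_mem Prod.fst hp]
  refine Finset.sum_congr rfl fun o _ => (Finset.card_image_of_injOn fun p hp q hq hpq => ?_).symm
  simp only [Finset.coe_filter, Set.mem_ofPred_eq] at hp hq
  exact Prod.ext (hp.2.trans hq.2.symm) hpq

lemma card_le_card_fiber_add {x : Line} (hx : x ∈ clusters S)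
    (h : ∀ o ∈ clusters S, o ≠ x → (fiber S o).card ≤ 1) :
    S.card ≤ (fiber S x).card + ((clusters S).card - 1) := by
  rw [card_eq_sum_card_fiber, ← Finset.add_sum_erase _ _ hx, ← Finset.card_erase_of_mem hx]
  gcongr
  simpa using Finset.sum_le_card_nsmul _ _ 1 fun o ho =>
    h o (Finset.mem_of_mem_erase ho) (Finset.ne_of_mem_erase ho)

end Clusters

/-- The slope order of the lines `o + ε v` for small `ε > 0`. -/
def LexSlopeLT (p q : Line × Line) : Prop := p.1.1 < q.1.1 ∨ p.1 = q.1 ∧ p.2.1 < q.2.1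

lemma LexSlopeLT.asymm {p q : Line × Line} (h₁ : LexSlopeLT p q) (h₂ : LexSlopeLT q p) : False := by
  rcases h₁ with h | ⟨he, h⟩ <;> rcases h₂ with h' | ⟨he', h'⟩
  · exact lt_asymm h h'
  · exact (he' ▸ h).false
  · exact (he ▸ h').false
  · exact lt_asymm h h'

/- The left and right bounds of the line indexed by `p`, read off through `LexSlopeLT`. -/
def IsLeftIdx (SA SB : Finset (Line × Line)) (p q : Line × Line) : Prop :=
  q ∈ SA ∧ LexSlopeLT q p ∨ q ∈ SB ∧ LexSlopeLT p q

def IsRightIdx (SA SB : Finset (Line × Line)) (p q : Line × Line) : Prop :=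
  q ∈ SA ∧ LexSlopeLT p q ∨ q ∈ SB ∧ LexSlopeLT q p

lemma IsLeftIdx.mem {SA SB : Finset (Line × Line)} {p q : Line × Line}
    (h : IsLeftIdx SA SB p q) : q ∈ SA ∪ SB := by
  rcases h with ⟨h, -⟩ | ⟨h, -⟩
  exacts [Finset.mem_union_left _ h, Finset.mem_union_right _ h]

lemma IsRightIdx.mem {SA SB : Finset (Line × Line)} {p q : Line × Line}
    (h : IsRightIdx SA SB p q) : q ∈ SA ∪ SB := by
  rcases h with ⟨h, -⟩ | ⟨h, -⟩
  exacts [Finset.mem_union_left _ h, Finset.mem_union_right _ h]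

lemma IsLeftIdx.ne {SA SB : Finset (Line × Line)} {p q₁ q₂ : Line × Line}
    (hdisj : Disjoint SA SB) (h₁ : IsLeftIdx SA SB p q₁) (h₂ : IsRightIdx SA SB p q₂) :
    q₁ ≠ q₂ := by
  rintro rfl
  rcases h₁ with ⟨hm, hs⟩ | ⟨hm, hs⟩ <;> rcases h₂ with ⟨hm', hs'⟩ | ⟨hm', hs'⟩
  · exact hs.asymm hs'
  · exact Finset.disjoint_left.mp hdisj hm hm'
  · exact Finset.disjoint_left.mp hdisj hm' hm
  · exact hs.asymm hs'

lemma IsLeftIdx.snd_ne {SA SB : Finset (Line × Line)} {o v : Line} {q : Line × Line}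
    (h : IsLeftIdx SA SB (o, v) q) (hq : q.1 = o) : v ≠ q.2 := by
  rintro rfl
  rcases h with ⟨-, hs | ⟨-, hs⟩⟩ | ⟨-, hs | ⟨-, hs⟩⟩ <;> simp_all

/- What a cell split of the lines `o + ε v`, `(o, v) ∈ SA` below and `(o, v) ∈ SB` above, forces
as `ε → 0⁺` when every crossing of outer lines `o` lies left of every crossing of inner lines
`v`. -/
structure IsLimitSplit (SA SB : Finset (Line × Line)) : Prop where
  inner : ∀ p ∈ SA ∪ SB, ∀ q₁ q₂, IsLeftIdx SA SB p q₁ → IsRightIdx SA SB p q₂ →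
    q₁.1 = p.1 → q₂.1 = p.1 → crossX p.2 q₁.2 < crossX p.2 q₂.2
  not_inner_outer : ∀ p ∈ SA ∪ SB, ∀ q₁ q₂, IsLeftIdx SA SB p q₁ → IsRightIdx SA SB p q₂ →
    q₁.1 = p.1 → q₂.1 ≠ p.1 → False
  outer : ∀ p ∈ SA ∪ SB, ∀ q₁ q₂, IsLeftIdx SA SB p q₁ → IsRightIdx SA SB p q₂ →
    q₁.1 ≠ p.1 → q₂.1 ≠ p.1 → q₁.1 ≠ q₂.1 → crossX p.1 q₁.1 < crossX p.1 q₂.1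
  outer_same : ∀ p ∈ SA ∪ SB, ∀ q₁ q₂, IsLeftIdx SA SB p q₁ → IsRightIdx SA SB p q₂ →
    q₁.1 ≠ p.1 → q₁.1 = q₂.1 → 0 < (p.1.1 - q₁.1.1) * (q₁.2.1 - q₂.2.1)

namespace IsLimitSplit

variable {SA SB : Finset (Line × Line)} (h : IsLimitSplit SA SB)
include h

lemma isCupSet_fiber (o : Line) : IsCupSet (fiber SA o) := by
  intro v₁ h₁ v₂ h₂ v₃ h₃ h₁₂ h₂₃
  simp only [mem_fiber] at h₁ h₂ h₃
  have := h.inner (o, v₂) (Finset.mem_union_left _ h₂) (o, v₁) (o, v₃)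
    (Or.inl ⟨h₁, Or.inr ⟨rfl, h₁₂⟩⟩) (Or.inl ⟨h₃, Or.inr ⟨rfl, h₂₃⟩⟩) rfl rfl
  rwa [crossX_comm v₂ v₁] at this

lemma isCapSet_fiber (o : Line) : IsCapSet (fiber SB o) := by
  intro v₁ h₁ v₂ h₂ v₃ h₃ h₁₂ h₂₃
  simp only [mem_fiber] at h₁ h₂ h₃
  have := h.inner (o, v₂) (Finset.mem_union_right _ h₂) (o, v₃) (o, v₁)
    (Or.inr ⟨h₃, Or.inr ⟨rfl, h₂₃⟩⟩) (Or.inr ⟨h₁, Or.inr ⟨rfl, h₁₂⟩⟩) rfl rfl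
  rwa [crossX_comm v₂ v₁] at this

lemma isCellSplit_fiber (o : Line) : IsCellSplit (fiber SA o) (fiber SB o) := by
  intro v hv m₁ hm₁ m₂ hm₂
  simp only [Finset.mem_union, mem_fiber, mem_leftBounds, mem_rightBounds] at hv hm₁ hm₂
  refine h.inner (o, v) (Finset.mem_union.mpr hv) (o, m₁) (o, m₂) ?_ ?_ rfl rfl
  · rcases hm₁ with ⟨hm, hs⟩ | ⟨hm, hs⟩
    exacts [Or.inl ⟨hm, Or.inr ⟨rfl, hs⟩⟩, Or.inr ⟨hm, Or.inr ⟨rfl, hs⟩⟩]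
  · rcases hm₂ with ⟨hm, hs⟩ | ⟨hm, hs⟩
    exacts [Or.inl ⟨hm, Or.inr ⟨rfl, hs⟩⟩, Or.inr ⟨hm, Or.inr ⟨rfl, hs⟩⟩]

/- A line `w` of another cluster bounding the cluster `o` on the right rules out left bounds
inside the cluster, so `o` then carries at most one line of each side. -/
lemma card_fiber_le_one {O I : Finset Line} (hSA : SA ⊆ O ×ˢ I) (hSB : SB ⊆ O ×ˢ I)
    (hIinj : SlopeInj I) {o : Line} {w : Line × Line}
    (hw : w ∈ SA ∧ o.1 < w.1.1 ∨ w ∈ SB ∧ w.1.1 < o.1) :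
    (fiber SA o).card ≤ 1 ∧ (fiber SB o).card ≤ 1 := by
  have hright : ∀ v, IsRightIdx SA SB (o, v) w := fun v => by
    rcases hw with ⟨hw, hs⟩ | ⟨hw, hs⟩
    exacts [Or.inl ⟨hw, Or.inl hs⟩, Or.inr ⟨hw, Or.inl hs⟩]
  have hwo : w.1 ≠ o := by rintro rfl; rcases hw with ⟨-, hs⟩ | ⟨-, hs⟩ <;> exact hs.false
  have key : ∀ v v', (o, v) ∈ SA ∪ SB → IsLeftIdx SA SB (o, v) (o, v') → False :=
    fun v v' hv hv' => h.not_inner_outer _ hv _ w hv' (hright v) rfl hwo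
  constructor
  · refine (hIinj.mono (fiber_subset hSA o)).card_le_one fun v₁ h₁ v₂ h₂ h₁₂ => ?_
    rw [mem_fiber] at h₁ h₂
    exact key v₂ v₁ (Finset.mem_union_left _ h₂) (Or.inl ⟨h₁, Or.inr ⟨rfl, h₁₂⟩⟩)
  · refine (hIinj.mono (fiber_subset hSB o)).card_le_one fun v₁ h₁ v₂ h₂ h₁₂ => ?_
    rw [mem_fiber] at h₁ h₂
    exact key v₁ v₂ (Finset.mem_union_right _ h₁) (Or.inr ⟨h₂, Or.inr ⟨rfl, h₁₂⟩⟩)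

lemma isCupSet_clusters : IsCupSet (clusters SA) := by
  intro o₁ h₁ o₂ h₂ o₃ h₃ h₁₂ h₂₃
  obtain ⟨v₁, h₁⟩ := mem_clusters.mp h₁
  obtain ⟨v₂, h₂⟩ := mem_clusters.mp h₂
  obtain ⟨v₃, h₃⟩ := mem_clusters.mp h₃
  have := h.outer (o₂, v₂) (Finset.mem_union_left _ h₂) (o₁, v₁) (o₃, v₃)
    (Or.inl ⟨h₁, Or.inl h₁₂⟩) (Or.inl ⟨h₃, Or.inl h₂₃⟩) (ne_of_apply_ne _ h₁₂.ne)
    (ne_of_apply_ne _ h₂₃.ne') (ne_of_apply_ne _ (h₁₂.trans h₂₃).ne)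
  rwa [crossX_comm o₂ o₁] at this

lemma isCapSet_clusters : IsCapSet (clusters SB) := by
  intro o₁ h₁ o₂ h₂ o₃ h₃ h₁₂ h₂₃
  obtain ⟨v₁, h₁⟩ := mem_clusters.mp h₁
  obtain ⟨v₂, h₂⟩ := mem_clusters.mp h₂
  obtain ⟨v₃, h₃⟩ := mem_clusters.mp h₃
  have := h.outer (o₂, v₂) (Finset.mem_union_right _ h₂) (o₃, v₃) (o₁, v₁)
    (Or.inr ⟨h₃, Or.inl h₂₃⟩) (Or.inr ⟨h₁, Or.inl h₁₂⟩) (ne_of_apply_ne _ h₂₃.ne')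
    (ne_of_apply_ne _ h₁₂.ne) (ne_of_apply_ne _ (h₁₂.trans h₂₃).ne')
  rwa [crossX_comm o₂ o₁] at this

lemma isCellSplit_clusters (hdisj : Disjoint (clusters SA) (clusters SB)) :
    IsCellSplit (clusters SA) (clusters SB) := by
  intro l hl m₁ hm₁ m₂ hm₂
  obtain ⟨v, hv⟩ : ∃ v, (l, v) ∈ SA ∪ SB := by
    simp only [Finset.mem_union, mem_clusters] at hl
    rcases hl with ⟨v, hv⟩ | ⟨v, hv⟩
    exacts [⟨v, Finset.mem_union_left _ hv⟩, ⟨v, Finset.mem_union_right _ hv⟩]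
  have hne : m₁ ≠ m₂ := by
    rintro rfl
    rcases mem_leftBounds.mp hm₁ with ⟨h₁, s₁⟩ | ⟨h₁, s₁⟩ <;>
      rcases mem_rightBounds.mp hm₂ with ⟨h₂, s₂⟩ | ⟨h₂, s₂⟩
    · exact lt_asymm s₁ s₂
    · exact Finset.disjoint_left.mp hdisj h₁ h₂
    · exact Finset.disjoint_left.mp hdisj h₂ h₁
    · exact lt_asymm s₁ s₂
  obtain ⟨w₁, hw₁⟩ : ∃ w, IsLeftIdx SA SB (l, v) (m₁, w) := by
    rcases mem_leftBounds.mp hm₁ with ⟨hc, hs⟩ | ⟨hc, hs⟩ <;>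
      obtain ⟨w, hw⟩ := mem_clusters.mp hc
    exacts [⟨w, Or.inl ⟨hw, Or.inl hs⟩⟩, ⟨w, Or.inr ⟨hw, Or.inl hs⟩⟩]
  obtain ⟨w₂, hw₂⟩ : ∃ w, IsRightIdx SA SB (l, v) (m₂, w) := by
    rcases mem_rightBounds.mp hm₂ with ⟨hc, hs⟩ | ⟨hc, hs⟩ <;>
      obtain ⟨w, hw⟩ := mem_clusters.mp hc
    exacts [⟨w, Or.inl ⟨hw, Or.inl hs⟩⟩, ⟨w, Or.inr ⟨hw, Or.inl hs⟩⟩]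
  exact h.outer (l, v) hv _ _ hw₁ hw₂
    (ne_of_apply_ne Prod.fst (slope_ne_of_mem_leftBounds hm₁).symm)
    (ne_of_apply_ne Prod.fst (slope_ne_of_mem_rightBounds hm₂).symm) hne

lemma slopesLT_fiber {O I : Finset Line} (hSA : SA ⊆ O ×ˢ I) (hSB : SB ⊆ O ×ˢ I)
    (hIinj : SlopeInj I) (hdisj : Disjoint SA SB) {o : Line} {p : Line × Line}
    (hp : p ∈ SA ∪ SB) (hpo : p.1.1 ≠ o.1) : SlopesLT (fiber SB o) (fiber SA o) := by
  intro w hw v hv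
  have hvw : v ≠ w := by
    rintro rfl
    exact Finset.disjoint_left.mp hdisj (mem_fiber.mp hv) (mem_fiber.mp hw)
  refine ((hIinj v (fiber_subset hSA o hv) w (fiber_subset hSB o hw) hvw).lt_or_gt).resolve_left
    fun hvw => ?_
  rw [mem_fiber] at hv hw
  have hop : o ≠ p.1 := ne_of_apply_ne Prod.fst hpo.symm
  rcases hpo.lt_or_gt with hc | hc
  · exact (mul_neg_of_neg_of_pos (sub_neg.mpr hc) (sub_pos.mpr hvw)).not_gt
      (h.outer_same p hp (o, w) (o, v) (Or.inr ⟨hw, Or.inl hc⟩) (Or.inl ⟨hv, Or.inl hc⟩) hop rfl)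
  · exact (mul_neg_of_pos_of_neg (sub_pos.mpr hc) (sub_neg.mpr hvw)).not_gt
      (h.outer_same p hp (o, v) (o, w) (Or.inl ⟨hv, Or.inl hc⟩) (Or.inr ⟨hw, Or.inl hc⟩) hop rfl)

variable {O I : Finset Line} (hSA : SA ⊆ O ×ˢ I) (hSB : SB ⊆ O ×ˢ I)
include hSA hSB

lemma card_le_of_steepest (hO : SlopeInj O) (hI : SlopeInj I) {α : Line}
    (hα : α ∈ clusters SA) (hmax : ∀ o ∈ clusters SA, o.1 ≤ α.1) :
    SA.card ≤ (fiber SA α).card + ((clusters SA).card - 1) := by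
  obtain ⟨v, hv⟩ := mem_clusters.mp hα
  refine card_le_card_fiber_add hα fun o ho hoα => (h.card_fiber_le_one
    hSA hSB hI (w := (α, v)) (Or.inl ⟨hv, ?_⟩)).1
  exact (hmax o ho).lt_of_ne (hO o (clusters_subset hSA ho) α (clusters_subset hSA hα) hoα)

lemma card_le_of_flattest (hO : SlopeInj O) (hI : SlopeInj I) {β : Line}
    (hβ : β ∈ clusters SB) (hmin : ∀ o ∈ clusters SB, β.1 ≤ o.1) :
    SB.card ≤ (fiber SB β).card + ((clusters SB).card - 1) := by
  obtain ⟨v, hv⟩ := mem_clusters.mp hβ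
  refine card_le_card_fiber_add hβ fun o ho hoβ => (h.card_fiber_le_one
    hSA hSB hI (w := (β, v)) (Or.inr ⟨hv, ?_⟩)).2
  exact (hmin o ho).lt_of_ne (hO β (clusters_subset hSB hβ) o (clusters_subset hSB ho) hoβ.symm)

variable {k : ℕ} (hO : IsCupCapFamily k k O) (hI : IsCupCapFamily k k I)
include hO hI

/- The cluster `α` carries both the steepest line of `SA` and the flattest of `SB`: if some line
lies outside it, its two fibers form a cell split unbounded to the left. -/
lemma card_add_card_le_of_mixed (hI' : NoOpenCellLeft I) (hdisj : Disjoint SA SB) {α : Line}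
    (hαA : α ∈ clusters SA) (hαB : α ∈ clusters SB)
    (hA : SA.card ≤ (fiber SA α).card + ((clusters SA).card - 1))
    (hB : SB.card ≤ (fiber SB α).card + ((clusters SB).card - 1)) :
    SA.card + SB.card ≤ 2 * k + 1 := by
  have hCA := hO.cup_card_le _ (clusters_subset hSA) h.isCupSet_clusters
  have hCB := hO.cap_card_le _ (clusters_subset hSB) h.isCapSet_clusters
  have hFA := hI.cup_card_le _ (fiber_subset hSA α) (h.isCupSet_fiber α)
  have hFB := hI.cap_card_le _ (fiber_subset hSB α) (h.isCapSet_fiber α)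
  by_cases hout : ∃ p ∈ SA ∪ SB, p.1.1 ≠ α.1
  · obtain ⟨p, hp, hpα⟩ := hout
    have hdisjα : Disjoint (fiber SA α) (fiber SB α) := Finset.disjoint_left.mpr fun v hA hB =>
      Finset.disjoint_left.mp hdisj (mem_fiber.mp hA) (mem_fiber.mp hB)
    have h3 := hI' _ (fiber_subset hSA α) _ (fiber_subset hSB α)
      (by simpa [Finset.Nonempty, mem_fiber, mem_clusters] using hαA)
      (by simpa [Finset.Nonempty, mem_fiber, mem_clusters] using hαB) hdisjα
      (h.slopesLT_fiber hSA hSB hI.slopeInj hdisj hp hpα) (h.isCellSplit_fiber α)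
    rw [Finset.card_union_of_disjoint hdisjα] at h3
    omega
  · push Not at hout
    have hαO := clusters_subset hSA hαA
    have hall : ∀ p ∈ SA ∪ SB, p.1 = α := fun p hp => by
      by_contra hne
      have hpO : p.1 ∈ O := clusters_subset (Finset.union_subset hSA hSB)
        (mem_clusters.mpr ⟨p.2, hp⟩)
      exact hO.slopeInj _ hpO α hαO hne (hout p hp)
    have hsingle : ∀ S ⊆ SA ∪ SB, (clusters S).card ≤ 1 := fun S hS =>
      Finset.card_le_one.mpr fun o ho o' ho' => by
        obtain ⟨v, hv⟩ := mem_clusters.mp ho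
        obtain ⟨v', hv'⟩ := mem_clusters.mp ho'
        exact (hall _ (hS hv)).trans (hall _ (hS hv')).symm
    have := hsingle SA Finset.subset_union_left
    have := hsingle SB Finset.subset_union_right
    omega

/- If `α` carries two lines of `SA`, then by `card_fiber_le_one` no line of `SB` lies in a flatter
cluster, and symmetrically for `β`; either way all clusters of `SA` lie left of those of `SB`. -/
lemma card_add_card_le_of_ne (hO' : NoOpenCellRight O) {α β : Line}
    (hα : α ∈ clusters SA) (hmax : ∀ o ∈ clusters SA, o.1 ≤ α.1)
    (hβ : β ∈ clusters SB) (hmin : ∀ o ∈ clusters SB, β.1 ≤ o.1) (hαβ : α ≠ β)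
    (hA : SA.card ≤ (fiber SA α).card + ((clusters SA).card - 1))
    (hB : SB.card ≤ (fiber SB β).card + ((clusters SB).card - 1)) :
    SA.card + SB.card ≤ 2 * k + 1 := by
  have hFA := hI.cup_card_le _ (fiber_subset hSA α) (h.isCupSet_fiber α)
  have hFB := hI.cap_card_le _ (fiber_subset hSB β) (h.isCapSet_fiber β)
  have hCA := hO.cup_card_le _ (clusters_subset hSA) h.isCupSet_clusters
  have hCB := hO.cap_card_le _ (clusters_subset hSB) h.isCapSet_clusters
  by_cases hsmall : (fiber SA α).card ≤ 1 ∧ (fiber SB β).card ≤ 1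
  · omega
  have hsep : α.1 < β.1 := by
    obtain ⟨vα, hvα⟩ := mem_clusters.mp hα
    obtain ⟨vβ, hvβ⟩ := mem_clusters.mp hβ
    refine lt_of_le_of_ne (not_lt.mp fun hlt => hsmall ⟨?_, ?_⟩)
      (hO.slopeInj α (clusters_subset hSA hα) β (clusters_subset hSB hβ) hαβ)
    · exact (h.card_fiber_le_one hSA hSB hI.slopeInj (w := (β, vβ)) (Or.inr ⟨hvβ, hlt⟩)).1
    · exact (h.card_fiber_le_one hSA hSB hI.slopeInj (w := (α, vα)) (Or.inl ⟨hvα, hlt⟩)).2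
  have hslopes : SlopesLT (clusters SA) (clusters SB) := fun o ho o' ho' =>
    (hmax o ho).trans_lt (hsep.trans_le (hmin o' ho'))
  have hdisj : Disjoint (clusters SA) (clusters SB) :=
    Finset.disjoint_left.mpr fun {_} ho ho' => lt_irrefl _ (hslopes _ ho _ ho')
  have h3 := hO' _ (clusters_subset hSA) _ (clusters_subset hSB) ⟨α, hα⟩ ⟨β, hβ⟩ hdisj hslopes
    (h.isCellSplit_clusters hdisj)
  rw [Finset.card_union_of_disjoint hdisj] at h3
  have := Finset.card_pos.mpr ⟨α, hα⟩
  have := Finset.card_pos.mpr ⟨β, hβ⟩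
  omega

theorem card_union_le (hO' : NoOpenCellRight O) (hI' : NoOpenCellLeft I)
    (hdisj : Disjoint SA SB) : (SA ∪ SB).card ≤ 2 * k + 1 := by
  have hCA := hO.cup_card_le _ (clusters_subset hSA) h.isCupSet_clusters
  have hCB := hO.cap_card_le _ (clusters_subset hSB) h.isCapSet_clusters
  rw [Finset.card_union_of_disjoint hdisj]
  rcases (clusters SA).eq_empty_or_nonempty with hA | hA
  · rcases (clusters SB).eq_empty_or_nonempty with hB | hB
    · simp [Finset.image_eq_empty.mp hA, Finset.image_eq_empty.mp hB]
    obtain ⟨β, hβ, hmin⟩ := (clusters SB).exists_min_image Prod.fst hB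
    have := h.card_le_of_flattest hSA hSB hO.slopeInj hI.slopeInj hβ hmin
    have := hI.cap_card_le _ (fiber_subset hSB β) (h.isCapSet_fiber β)
    simp only [Finset.image_eq_empty.mp hA, Finset.card_empty]
    omega
  obtain ⟨α, hα, hmax⟩ := (clusters SA).exists_max_image Prod.fst hA
  have hAα := h.card_le_of_steepest hSA hSB hO.slopeInj hI.slopeInj hα hmax
  rcases (clusters SB).eq_empty_or_nonempty with hB | hB
  · have := hI.cup_card_le _ (fiber_subset hSA α) (h.isCupSet_fiber α)
    simp only [Finset.image_eq_empty.mp hB, Finset.card_empty]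
    omega
  obtain ⟨β, hβ, hmin⟩ := (clusters SB).exists_min_image Prod.fst hB
  have hBβ := h.card_le_of_flattest hSA hSB hO.slopeInj hI.slopeInj hβ hmin
  by_cases hαβ : α = β
  · subst hαβ
    exact h.card_add_card_le_of_mixed hSA hSB hO hI hI' hdisj hα hβ hAα hBβ
  · exact h.card_add_card_le_of_ne hSA hSB hO hI hO' hα hmax hβ hmin hαβ hAα hBβ

end IsLimitSplit

lemma le_of_tendsto_of_frequently_lt {f g : ℝ → ℝ} {l : Filter ℝ} {x y : ℝ}
    (hf : Tendsto f l (𝓝 x)) (hg : Tendsto g l (𝓝 y)) (h : ∃ᶠ ε in l, f ε < g ε) : x ≤ y :=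
  not_lt.mp fun hxy => (h.and_eventually (hg.eventually_lt hf hxy)).exists.elim
    fun _ hε => lt_asymm hε.1 hε.2

lemma mul_pos_of_mul_div_nonpos {d s c : ℝ} (hd : d ≠ 0) (hs : s ≠ 0) (hc : c < 0)
    (h : s * c / d ≤ 0) : 0 < d * s := by
  have hprod : s * c * d ≤ 0 := by
    rw [show s * c * d = s * c / d * (d * d) by field_simp]
    exact mul_nonpos_of_nonpos_of_nonneg h (mul_self_nonneg d)
  rcases (mul_ne_zero hd hs).lt_or_gt with hneg | hpos
  · nlinarith [mul_pos_of_neg_of_neg hneg hc]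
  · exact hpos

/-- For `p = (o, v)`: the line `v`, flattened by `ε`, in the cluster of the line `o`. -/
def clusterLine (ε : ℝ) (p : Line × Line) : Line := p.1 + ε • p.2

@[simp] lemma clusterLine_fst (ε : ℝ) (p : Line × Line) :
    (clusterLine ε p).1 = p.1.1 + ε * p.2.1 := rfl

lemma crossX_clusterLine (ε : ℝ) (o o' u v : Line) :
    crossX (clusterLine ε (o, u)) (clusterLine ε (o', v)) =
      ((o'.2 - o.2) + ε * (v.2 - u.2)) / ((o.1 - o'.1) + ε * (u.1 - v.1)) := by
  simp only [crossX, clusterLine, Prod.fst_add, Prod.snd_add, Prod.smul_fst, Prod.smul_snd,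
    smul_eq_mul]
  congr 1 <;> ring

lemma crossX_clusterLine_same {ε : ℝ} (hε : ε ≠ 0) (o u v : Line) :
    crossX (clusterLine ε (o, u)) (clusterLine ε (o, v)) = crossX u v := by
  rw [crossX_clusterLine, sub_self, sub_self, zero_add, zero_add, mul_div_mul_left _ _ hε, crossX]

lemma eventually_crossX_clusterLine_eq {o v v₁ : Line} :
    ∀ᶠ ε in 𝓝[>] 0, crossX (clusterLine ε (o, v)) (clusterLine ε (o, v₁)) = crossX v v₁ := by
  filter_upwards [self_mem_nhdsWithin] with ε (hε : 0 < ε)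
  exact crossX_clusterLine_same hε.ne' o v v₁

lemma tendsto_affine (a b : ℝ) : Tendsto (fun ε => a + ε * b) (𝓝[>] 0) (𝓝 a) := by
  simpa using ((show Continuous fun ε : ℝ => a + ε * b by fun_prop).tendsto 0).mono_left
    nhdsWithin_le_nhds

lemma tendsto_crossX_clusterLine {o o' : Line} (hoo : o.1 ≠ o'.1) (u v : Line) :
    Tendsto (fun ε => crossX (clusterLine ε (o, u)) (clusterLine ε (o', v))) (𝓝[>] 0)
      (𝓝 (crossX o o')) := by
  simp only [crossX_clusterLine]
  exact (tendsto_affine _ _).div (tendsto_affine _ _) (sub_ne_zero.mpr hoo)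

/- Two lines of one cluster `o'` seen from a line of another cluster `o`: their crossings
merge at rate `ε`, in an order fixed by the slopes and by how `crossX o o'` compares with
`crossX v₁ v₂`. -/
lemma tendsto_crossX_clusterLine_sub_div {o o' : Line} (hoo : o.1 ≠ o'.1) (u : Line) {v₁ v₂ : Line}
    (hv : v₁.1 ≠ v₂.1) :
    Tendsto (fun ε => (crossX (clusterLine ε (o, u)) (clusterLine ε (o', v₁)) -
        crossX (clusterLine ε (o, u)) (clusterLine ε (o', v₂))) / ε) (𝓝[>] 0)
      (𝓝 ((v₁.1 - v₂.1) * (crossX o o' - crossX v₁ v₂) / (o.1 - o'.1))) := by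
  have hE : o.1 - o'.1 ≠ 0 := sub_ne_zero.mpr hoo
  have hlim : (v₁.1 - v₂.1) * (crossX o o' - crossX v₁ v₂) / (o.1 - o'.1) =
      ((o'.2 - o.2) * (v₁.1 - v₂.1) + (o.1 - o'.1) * (v₁.2 - v₂.2)) /
        ((o.1 - o'.1) * (o.1 - o'.1)) := by
    rw [crossX, crossX]
    field_simp [sub_ne_zero.mpr hv]
    ring
  rw [hlim]
  have hnum := tendsto_affine ((o'.2 - o.2) * (v₁.1 - v₂.1) + (o.1 - o'.1) * (v₁.2 - v₂.2))
    ((v₁.2 - u.2) * (u.1 - v₂.1) - (v₂.2 - u.2) * (u.1 - v₁.1))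
  have hd₁ := tendsto_affine (o.1 - o'.1) (u.1 - v₁.1)
  have hd₂ := tendsto_affine (o.1 - o'.1) (u.1 - v₂.1)
  refine (hnum.div (hd₁.mul hd₂) (mul_ne_zero hE hE)).congr' ?_
  filter_upwards [self_mem_nhdsWithin, hd₁.eventually_ne hE, hd₂.eventually_ne hE]
    with ε hε h₁ h₂
  have hε : ε ≠ 0 := (Set.mem_Ioi.mp hε).ne'
  simp only [Pi.div_apply, crossX_clusterLine]
  field_simp
  ring

lemma eventually_clusterLine_slope_lt (P : Finset (Line × Line)) :
    ∀ᶠ ε in 𝓝[>] 0, ∀ p ∈ P, ∀ q ∈ P, LexSlopeLT p q →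
      (clusterLine ε p).1 < (clusterLine ε q).1 := by
  simp only [eventually_all_finset, eventually_imp_distrib_left]
  rintro p - q - (h | ⟨he, h⟩)
  · simpa using (tendsto_affine _ _).eventually_lt (tendsto_affine _ _) h
  · filter_upwards [self_mem_nhdsWithin] with ε (hε : 0 < ε)
    simpa [he] using mul_lt_mul_of_pos_left h hε

lemma LexSlopeLT.lt_or_gt {O I : Finset Line} (hO : SlopeInj O) (hI : SlopeInj I)
    {p q : Line × Line} (hp : p ∈ O ×ˢ I) (hq : q ∈ O ×ˢ I) (hne : p ≠ q) :
    LexSlopeLT p q ∨ LexSlopeLT q p := by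
  rw [Finset.mem_product] at hp hq
  by_cases h : p.1 = q.1
  · rcases (hI _ hp.2 _ hq.2 fun h' => hne (Prod.ext h h')).lt_or_gt with h' | h'
    exacts [Or.inl (Or.inr ⟨h, h'⟩), Or.inr (Or.inr ⟨h.symm, h'⟩)]
  · rcases (hO _ hp.1 _ hq.1 h).lt_or_gt with h' | h'
    exacts [Or.inl (Or.inl h'), Or.inr (Or.inl h')]

def CrossingsBefore (O I : Finset Line) : Prop :=
  ∀ o ∈ O, ∀ o' ∈ O, o ≠ o' → ∀ v ∈ I, ∀ v' ∈ I, v ≠ v' → crossX o o' < crossX v v'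

section LimitSplit

variable {O I : Finset Line} {SA SB : Finset (Line × Line)}

lemma frequently_crossX_lt
    (hsplit : ∃ᶠ ε in 𝓝[>] 0, IsCellSplit (SA.image (clusterLine ε)) (SB.image (clusterLine ε)))
    {p q₁ q₂ : Line × Line} (hp : p ∈ SA ∪ SB) (hq₁ : IsLeftIdx SA SB p q₁)
    (hq₂ : IsRightIdx SA SB p q₂) :
    ∃ᶠ ε in 𝓝[>] 0, 0 < ε ∧
      crossX (clusterLine ε p) (clusterLine ε q₁) <
        crossX (clusterLine ε p) (clusterLine ε q₂) := by
  refine (hsplit.and_eventually ((eventually_clusterLine_slope_lt (SA ∪ SB)).and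
    self_mem_nhdsWithin)).mono fun ε ⟨hε, hord, hpos⟩ => ⟨hpos, ?_⟩
  refine hε _ (by rw [← Finset.image_union]; exact Finset.mem_image_of_mem _ hp) _ ?_ _ ?_
  · rcases hq₁ with ⟨hq, hs⟩ | ⟨hq, hs⟩
    · exact mem_leftBounds.mpr (Or.inl ⟨Finset.mem_image_of_mem _ hq,
        hord _ (Finset.mem_union_left _ hq) _ hp hs⟩)
    · exact mem_leftBounds.mpr (Or.inr ⟨Finset.mem_image_of_mem _ hq,
        hord _ hp _ (Finset.mem_union_right _ hq) hs⟩)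
  · rcases hq₂ with ⟨hq, hs⟩ | ⟨hq, hs⟩
    · exact mem_rightBounds.mpr (Or.inl ⟨Finset.mem_image_of_mem _ hq,
        hord _ hp _ (Finset.mem_union_left _ hq) hs⟩)
    · exact mem_rightBounds.mpr (Or.inr ⟨Finset.mem_image_of_mem _ hq,
        hord _ (Finset.mem_union_right _ hq) _ hp hs⟩)

variable
  (hsplit : ∃ᶠ ε in 𝓝[>] 0, IsCellSplit (SA.image (clusterLine ε)) (SB.image (clusterLine ε)))
include hsplit

lemma inner_of_frequently {p q₁ q₂ : Line × Line} (hp : p ∈ SA ∪ SB)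
    (hq₁ : IsLeftIdx SA SB p q₁) (hq₂ : IsRightIdx SA SB p q₂) (e₁ : q₁.1 = p.1)
    (e₂ : q₂.1 = p.1) : crossX p.2 q₁.2 < crossX p.2 q₂.2 := by
  obtain ⟨ε, hε, hlt⟩ := (frequently_crossX_lt hsplit hp hq₁ hq₂).exists
  obtain ⟨o, v⟩ := p
  obtain ⟨o₁, v₁⟩ := q₁
  obtain ⟨o₂, v₂⟩ := q₂
  dsimp only at e₁ e₂ ⊢
  subst e₁ e₂
  rwa [crossX_clusterLine_same hε.ne', crossX_clusterLine_same hε.ne'] at hlt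

variable (hSA : SA ⊆ O ×ˢ I) (hSB : SB ⊆ O ×ˢ I)
include hSA hSB

lemma not_inner_outer_of_frequently (hplace : CrossingsBefore O I) (hO : SlopeInj O)
    {p q₁ q₂ : Line × Line} (hp : p ∈ SA ∪ SB) (hq₁ : IsLeftIdx SA SB p q₁)
    (hq₂ : IsRightIdx SA SB p q₂) (e₁ : q₁.1 = p.1) (hne₂ : q₂.1 ≠ p.1) : False := by
  have hsub := Finset.union_subset hSA hSB
  have hfreq := frequently_crossX_lt hsplit hp hq₁ hq₂
  obtain ⟨o, v⟩ := p
  obtain ⟨o₁, v₁⟩ := q₁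
  obtain ⟨o₂, v₂⟩ := q₂
  dsimp only at e₁ hne₂ hfreq
  subst o₁
  have hp := Finset.mem_product.mp (hsub hp)
  have h₁ := Finset.mem_product.mp (hsub hq₁.mem)
  have h₂ := Finset.mem_product.mp (hsub hq₂.mem)
  have hlim₁ : Tendsto (fun ε => crossX (clusterLine ε (o, v)) (clusterLine ε (o, v₁))) (𝓝[>] 0)
      (𝓝 (crossX v v₁)) :=
    tendsto_const_nhds.congr' (eventually_crossX_clusterLine_eq.mono fun _ h => h.symm)
  have hlim₂ := tendsto_crossX_clusterLine (hO o hp.1 o₂ h₂.1 hne₂.symm) v v₂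
  have hle := le_of_tendsto_of_frequently_lt hlim₁ hlim₂ (hfreq.mono fun _ h => h.2)
  exact (hplace o hp.1 o₂ h₂.1 hne₂.symm v hp.2 v₁ h₁.2 (hq₁.snd_ne rfl)).not_ge hle

lemma outer_of_frequently (hO : SlopeInj O) (hOconc : NoConcurrent O)
    {p q₁ q₂ : Line × Line} (hp : p ∈ SA ∪ SB) (hq₁ : IsLeftIdx SA SB p q₁)
    (hq₂ : IsRightIdx SA SB p q₂) (hne₁ : q₁.1 ≠ p.1) (hne₂ : q₂.1 ≠ p.1) (hne : q₁.1 ≠ q₂.1) :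
    crossX p.1 q₁.1 < crossX p.1 q₂.1 := by
  have hsub := Finset.union_subset hSA hSB
  have hfreq := frequently_crossX_lt hsplit hp hq₁ hq₂
  obtain ⟨o, v⟩ := p
  obtain ⟨o₁, v₁⟩ := q₁
  obtain ⟨o₂, v₂⟩ := q₂
  dsimp only at hne₁ hne₂ hne hfreq ⊢
  have hp := (Finset.mem_product.mp (hsub hp)).1
  have h₁ := (Finset.mem_product.mp (hsub hq₁.mem)).1
  have h₂ := (Finset.mem_product.mp (hsub hq₂.mem)).1
  refine lt_of_le_of_ne (le_of_tendsto_of_frequently_lt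
    (tendsto_crossX_clusterLine (hO o hp o₁ h₁ hne₁.symm) v v₁)
    (tendsto_crossX_clusterLine (hO o hp o₂ h₂ hne₂.symm) v v₂) (hfreq.mono fun _ h => h.2)) ?_
  exact hOconc o hp o₁ h₁ o₂ h₂ hne₁.symm hne₂.symm hne

lemma outer_same_of_frequently (hplace : CrossingsBefore O I) (hO : SlopeInj O)
    (hI : SlopeInj I) (hdisj : Disjoint SA SB) {p q₁ q₂ : Line × Line} (hp : p ∈ SA ∪ SB)
    (hq₁ : IsLeftIdx SA SB p q₁) (hq₂ : IsRightIdx SA SB p q₂) (hne₁ : q₁.1 ≠ p.1)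
    (e : q₁.1 = q₂.1) : 0 < (p.1.1 - q₁.1.1) * (q₁.2.1 - q₂.2.1) := by
  have hsub := Finset.union_subset hSA hSB
  have hfreq := frequently_crossX_lt hsplit hp hq₁ hq₂
  have hq := hq₁.ne hdisj hq₂
  obtain ⟨o, v⟩ := p
  obtain ⟨o₁, v₁⟩ := q₁
  obtain ⟨o₂, v₂⟩ := q₂
  dsimp only at hne₁ e hfreq ⊢
  subst e
  have hp := (Finset.mem_product.mp (hsub hp)).1
  have h₁ := Finset.mem_product.mp (hsub hq₁.mem)
  have h₂ := Finset.mem_product.mp (hsub hq₂.mem)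
  have hv : v₁ ≠ v₂ := fun h => hq (by rw [h])
  have hlim := tendsto_crossX_clusterLine_sub_div (hO o hp o₁ h₁.1 hne₁.symm) v
    (hI v₁ h₁.2 v₂ h₂.2 hv)
  have hle := le_of_tendsto_of_frequently_lt hlim tendsto_const_nhds
    (hfreq.mono fun ε ⟨hε, hlt⟩ => div_neg_of_neg_of_pos (sub_neg.mpr hlt) hε)
  exact mul_pos_of_mul_div_nonpos (sub_ne_zero.mpr (hO o hp o₁ h₁.1 hne₁.symm))
    (sub_ne_zero.mpr (hI v₁ h₁.2 v₂ h₂.2 hv))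
    (sub_neg.mpr (hplace o hp o₁ h₁.1 hne₁.symm v₁ h₁.2 v₂ h₂.2 hv)) hle

end LimitSplit

section Placed

variable {O I : Finset Line}

lemma isLimitSplit_of_frequently {SA SB : Finset (Line × Line)} (hSA : SA ⊆ O ×ˢ I)
    (hSB : SB ⊆ O ×ˢ I) (hdisj : Disjoint SA SB) (hplace : CrossingsBefore O I)
    (hO : SlopeInj O) (hOconc : NoConcurrent O) (hI : SlopeInj I)
    (hsplit : ∃ᶠ ε in 𝓝[>] 0, IsCellSplit (SA.image (clusterLine ε)) (SB.image (clusterLine ε))) :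
    IsLimitSplit SA SB where
  inner _ hp _ _ hq₁ hq₂ := inner_of_frequently hsplit hp hq₁ hq₂
  not_inner_outer _ hp _ _ hq₁ hq₂ :=
    not_inner_outer_of_frequently hsplit hSA hSB hplace hO hp hq₁ hq₂
  outer _ hp _ _ hq₁ hq₂ := outer_of_frequently hsplit hSA hSB hO hOconc hp hq₁ hq₂
  outer_same _ hp _ _ hq₁ hq₂ :=
    outer_same_of_frequently hsplit hSA hSB hplace hO hI hdisj hp hq₁ hq₂

lemma eventually_slopeInj (hO : SlopeInj O) (hI : SlopeInj I) :
    ∀ᶠ ε in 𝓝[>] 0, ∀ p ∈ O ×ˢ I, ∀ q ∈ O ×ˢ I, p ≠ q →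
      (clusterLine ε p).1 ≠ (clusterLine ε q).1 := by
  filter_upwards [eventually_clusterLine_slope_lt (O ×ˢ I)] with ε hε p hp q hq hpq
  rcases LexSlopeLT.lt_or_gt hO hI hp hq hpq with h | h
  exacts [(hε p hp q hq h).ne, (hε q hq p hp h).ne']

lemma eventually_crossX_ne_of_inner_outer (hplace : CrossingsBefore O I) (hO : SlopeInj O)
    {o v v₁ o₂ v₂ : Line} (ho : o ∈ O) (ho₂ : o₂ ∈ O) (hv : v ∈ I) (hv₁ : v₁ ∈ I)
    (hoo₂ : o ≠ o₂) (hvv₁ : v ≠ v₁) :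
    ∀ᶠ ε in 𝓝[>] 0, crossX (clusterLine ε (o, v)) (clusterLine ε (o, v₁)) ≠
      crossX (clusterLine ε (o, v)) (clusterLine ε (o₂, v₂)) := by
  filter_upwards [eventually_crossX_clusterLine_eq, (tendsto_crossX_clusterLine
    (hO o ho o₂ ho₂ hoo₂) v v₂).eventually_ne (hplace o ho o₂ ho₂ hoo₂ v hv v₁ hv₁ hvv₁).ne]
    with ε h₁ h₂
  rw [h₁]
  exact h₂.symm

lemma eventually_crossX_ne_of_same_outer (hplace : CrossingsBefore O I) (hO : SlopeInj O)
    (hI : SlopeInj I) {o o₁ v v₁ v₂ : Line} (ho : o ∈ O) (ho₁ : o₁ ∈ O) (hv₁ : v₁ ∈ I)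
    (hv₂ : v₂ ∈ I) (hoo₁ : o ≠ o₁) (hv : v₁ ≠ v₂) :
    ∀ᶠ ε in 𝓝[>] 0, crossX (clusterLine ε (o, v)) (clusterLine ε (o₁, v₁)) ≠
      crossX (clusterLine ε (o, v)) (clusterLine ε (o₁, v₂)) := by
  have hlim := tendsto_crossX_clusterLine_sub_div (hO o ho o₁ ho₁ hoo₁) v (hI v₁ hv₁ v₂ hv₂ hv)
  have hne : (v₁.1 - v₂.1) * (crossX o o₁ - crossX v₁ v₂) / (o.1 - o₁.1) ≠ 0 :=
    div_ne_zero (mul_ne_zero (sub_ne_zero.mpr (hI v₁ hv₁ v₂ hv₂ hv))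
      (sub_ne_zero.mpr (hplace o ho o₁ ho₁ hoo₁ v₁ hv₁ v₂ hv₂ hv).ne))
      (sub_ne_zero.mpr (hO o ho o₁ ho₁ hoo₁))
  filter_upwards [hlim.eventually_ne hne] with ε hε heq
  exact hε (by rw [heq, sub_self, zero_div])

lemma eventually_crossX_ne (hplace : CrossingsBefore O I) (hO : SlopeInj O)
    (hOconc : NoConcurrent O) (hI : SlopeInj I) (hIconc : NoConcurrent I)
    {p q r : Line × Line} (hp : p ∈ O ×ˢ I) (hq : q ∈ O ×ˢ I) (hr : r ∈ O ×ˢ I)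
    (hpq : p ≠ q) (hpr : p ≠ r) (hqr : q ≠ r) :
    ∀ᶠ ε in 𝓝[>] 0,
      crossX (clusterLine ε p) (clusterLine ε q) ≠ crossX (clusterLine ε p) (clusterLine ε r) := by
  obtain ⟨o, v⟩ := p
  obtain ⟨o₁, v₁⟩ := q
  obtain ⟨o₂, v₂⟩ := r
  simp only [Finset.mem_product] at hp hq hr
  by_cases e₁ : o₁ = o <;> by_cases e₂ : o₂ = o
  · subst o₁ o₂
    filter_upwards [eventually_crossX_clusterLine_eq, eventually_crossX_clusterLine_eq]
      with ε h₁ h₂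
    rw [h₁, h₂]
    exact hIconc v hp.2 v₁ hq.2 v₂ hr.2 (by simpa using hpq) (by simpa using hpr)
      (by simpa using hqr)
  · subst o₁
    exact eventually_crossX_ne_of_inner_outer hplace hO hp.1 hr.1 hp.2 hq.2 (Ne.symm e₂)
      (by simpa using hpq)
  · subst o₂
    exact (eventually_crossX_ne_of_inner_outer hplace hO hp.1 hq.1 hp.2 hr.2 (Ne.symm e₁)
      (by simpa using hpr)).mono fun _ h => h.symm
  by_cases e : o₁ = o₂
  · subst o₂
    exact eventually_crossX_ne_of_same_outer hplace hO hI hp.1 hq.1 hq.2 hr.2 (Ne.symm e₁)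
      (by simpa using hqr)
  · have hlim := (tendsto_crossX_clusterLine (hO o hp.1 o₁ hq.1 (Ne.symm e₁)) v v₁).sub
      (tendsto_crossX_clusterLine (hO o hp.1 o₂ hr.1 (Ne.symm e₂)) v v₂)
    filter_upwards [hlim.eventually_ne (sub_ne_zero.mpr (hOconc o hp.1 o₁ hq.1 o₂ hr.1
      (Ne.symm e₁) (Ne.symm e₂) e))] with ε hε
    exact sub_ne_zero.mp hε

lemma eventually_noConcurrent (hplace : CrossingsBefore O I) (hO : SlopeInj O)
    (hOconc : NoConcurrent O) (hI : SlopeInj I) (hIconc : NoConcurrent I) :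
    ∀ᶠ ε in 𝓝[>] 0, NoConcurrent ((O ×ˢ I).image (clusterLine ε)) := by
  have h : ∀ᶠ ε in 𝓝[>] 0, ∀ p ∈ O ×ˢ I, ∀ q ∈ O ×ˢ I, ∀ r ∈ O ×ˢ I, p ≠ q → p ≠ r →
      q ≠ r → crossX (clusterLine ε p) (clusterLine ε q) ≠
        crossX (clusterLine ε p) (clusterLine ε r) := by
    simp only [eventually_all_finset, eventually_imp_distrib_left]
    exact fun p hp q hq r hr => eventually_crossX_ne hplace hO hOconc hI hIconc hp hq hr
  filter_upwards [h] with ε h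
  simp only [NoConcurrent, Finset.forall_mem_image]
  exact fun p hp q hq r hr h₁ h₂ h₃ => h p hp q hq r hr (ne_of_apply_ne _ h₁)
    (ne_of_apply_ne _ h₂) (ne_of_apply_ne _ h₃)

end Placed

/-- Translates the line `l` by `T` to the left. -/
def shiftLeft (T : ℝ) (l : Line) : Line := (l.1, l.2 + T * l.1)

lemma shiftLeft_injective (T : ℝ) : Function.Injective (shiftLeft T) := fun l m h => by
  simp only [shiftLeft, Prod.mk.injEq] at h
  exact Prod.ext h.1 (by rw [h.1] at h; linarith [h.2])

lemma crossX_shiftLeft (T : ℝ) (l m : Line) (h : l.1 ≠ m.1) :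
    crossX (shiftLeft T l) (shiftLeft T m) = crossX l m + -T := by
  simp only [crossX, shiftLeft]
  field_simp [sub_ne_zero.mpr h]
  ring

lemma exists_crossingsBefore {H : Finset Line} (hH : SlopeInj H) (I : Finset Line) :
    ∃ T, CrossingsBefore (H.image (shiftLeft T)) I := by
  obtain ⟨T, hT⟩ := (((H ×ˢ H) ×ˢ (I ×ˢ I)).image
    fun w => crossX w.1.1 w.1.2 - crossX w.2.1 w.2.2).bddAbove
  refine ⟨T + 1, ?_⟩
  simp only [CrossingsBefore, Finset.forall_mem_image]
  intro o ho o' ho' hne v hv v' hv' _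
  have := hT (Finset.mem_coe.mpr (Finset.mem_image.mpr
    ⟨((o, o'), (v, v')), by simp [ho, ho', hv, hv'], rfl⟩))
  rw [crossX_shiftLeft _ _ _ (hH o ho o' ho' (ne_of_apply_ne _ hne))]
  linarith

/- For each pair of candidate index sets, a cell split survives only for arbitrarily small `ε`
if it has a limit, and limits have at most `2 k + 1` lines. -/
lemma eventually_card_le_of_isCellSplit {k : ℕ} {O I : Finset Line} (hO : IsCupCapFamily k k O)
    (hO' : NoOpenCellRight O) (hI : IsCupCapFamily k k I) (hI' : NoOpenCellLeft I)
    (hplace : CrossingsBefore O I) :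
    ∀ᶠ ε in 𝓝[>] 0, ∀ SA ∈ (O ×ˢ I).powerset, ∀ SB ∈ (O ×ˢ I).powerset, Disjoint SA SB →
      IsCellSplit (SA.image (clusterLine ε)) (SB.image (clusterLine ε)) →
        (SA ∪ SB).card ≤ 2 * k + 1 := by
  simp only [eventually_all_finset, eventually_imp_distrib_left]
  intro SA hSA SB hSB hdisj
  rw [Finset.mem_powerset] at hSA hSB
  by_cases hcard : (SA ∪ SB).card ≤ 2 * k + 1
  · exact Eventually.of_forall fun _ _ => hcard
  refine (not_frequently.mp fun hsplit => hcard ?_).mono fun _ h h' => absurd h' h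
  exact (isLimitSplit_of_frequently hSA hSB hdisj hplace hO.slopeInj hO.noConcurrent
    hI.slopeInj hsplit).card_union_le hSA hSB hO hI hO' hI' hdisj

lemma exists_outer_inner (k : ℕ) (hk : 1 ≤ k) :
    ∃ O I : Finset Line, IsCupCapFamily k k O ∧ NoOpenCellRight O ∧ IsCupCapFamily k k I ∧
      NoOpenCellLeft I ∧ CrossingsBefore O I := by
  obtain ⟨H, hH, hH'⟩ := exists_isCupCapFamily k k hk hk
  obtain ⟨T, hplace⟩ := exists_crossingsBefore hH.slopeInj (H.image mirror)
  have hmono : ∀ l m, (shiftLeft T l).1 < (shiftLeft T m).1 ↔ l.1 < m.1 := fun _ _ => Iff.rfl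
  exact ⟨_, _, hH.image (shiftLeft_injective T) hmono (crossX_shiftLeft T),
    hH'.image (shiftLeft_injective T) hmono (crossX_shiftLeft T), hH.mirror, hH'.mirror, hplace⟩

/- The paper's family: each line of `O`, a copy of `F_{k,k}`, is replaced by a flattened copy
of `I`, the mirror image of `F_{k,k}`. -/
theorem exists_family (k : ℕ) (hk : 1 ≤ k) :
    ∃ F : Finset Line, SlopeInj F ∧ NoConcurrent F ∧
      F.card = Nat.choose (2 * k - 2) (k - 1) ^ 2 ∧
      ∀ A ⊆ F, ∀ B ⊆ F, Disjoint A B → IsCellSplit A B → (A ∪ B).card ≤ 2 * k + 1 := by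
  obtain ⟨O, I, hO, hO', hI, hI', hplace⟩ := exists_outer_inner k hk
  obtain ⟨ε, hinj, hconc, hsplit⟩ := ((eventually_slopeInj hO.slopeInj hI.slopeInj).and
    ((eventually_noConcurrent hplace hO.slopeInj hO.noConcurrent hI.slopeInj hI.noConcurrent).and
      (eventually_card_le_of_isCellSplit hO hO' hI hI' hplace))).exists
  have hinjOn : Set.InjOn (clusterLine ε) ↑(O ×ˢ I) := fun p hp q hq h =>
    by_contra fun hne => hinj p hp q hq hne (congrArg Prod.fst h)
  refine ⟨(O ×ˢ I).image (clusterLine ε), ?_, hconc, ?_, ?_⟩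
  · simp only [SlopeInj, Finset.forall_mem_image]
    exact fun p hp q hq hne => hinj p hp q hq (ne_of_apply_ne _ hne)
  · rw [Finset.card_image_of_injOn hinjOn, Finset.card_product, hO.card, hI.card, sq,
      show k + k - 2 = 2 * k - 2 by omega]
  · intro A hA B hB hAB hAB'
    obtain ⟨SA, hSA, rfl⟩ := Finset.subset_image_iff.mp hA
    obtain ⟨SB, hSB, rfl⟩ := Finset.subset_image_iff.mp hB
    rw [← Finset.image_union, Finset.card_image_of_injOn (hinjOn.mono (by
      exact_mod_cast Finset.union_subset hSA hSB))]
    exact hsplit SA (Finset.mem_powerset.mpr hSA) SB (Finset.mem_powerset.mpr hSB)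
      (Finset.disjoint_left.mpr fun {_} hA hB => Finset.disjoint_left.mp hAB
        (Finset.mem_image_of_mem _ hA) (Finset.mem_image_of_mem _ hB)) hAB'

end

end ConvexLines

/-- For n = 2k + 2 ≥ 5 there is a family of C(2k-2, k-1)² (which is Θ(4ⁿ/n)) lines
in general position containing no n lines in convex position. -/
theorem stmt12 (n k : ℕ) (hnk : n = 2 * k + 2) (hn : 5 ≤ n) :
    ∃ F : Finset (ℝ × ℝ), GenPos F ∧ F.card = (Nat.choose (2 * k - 2) (k - 1)) ^ 2 ∧
      ¬ ∃ G ⊆ F, G.card = n ∧ ConvexPos G := by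
  obtain ⟨F, hinj, hconc, hcard, hsplit⟩ := ConvexLines.exists_family k (by omega)
  refine ⟨F, ConvexLines.genPos_of_noConcurrent hinj hconc, hcard, ?_⟩
  rintro ⟨G, hGF, hGcard, hG⟩
  obtain ⟨A, B, hAB, rfl, hsplitAB⟩ := ConvexLines.exists_isCellSplit_of_convexPos hG
  have := hsplit A (Finset.subset_union_left.trans hGF) B (Finset.subset_union_right.trans hGF)
    hAB hsplitAB
  omega
end

section
/- For every integer k ≥ 1 and l ≥ 1 there exists a family F_{k,l} of C(k+l-2, k-1) lines in general position such that no subfamily of F_{k,l} forms a (k+1)-cup, no subfamily forms an (l+1)-cap, and no 4 lines of F_{k,l} define a 4-cell unbounded to the right. -/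
open Set

/-- A cell is unbounded to the right: unbounded and to the right of some vertical line. -/
def UnboundedRight (P : Set (ℝ × ℝ)) : Prop :=
  ¬ Bornology.IsBounded P ∧ ∃ x₀ : ℝ, ∀ p ∈ P, x₀ < p.1

def lev (l : ℝ × ℝ) (x : ℝ) : ℝ := l.1 * x + l.2

-- AUX START
section Aux


lemma mem_lineSet_iff {l p : ℝ × ℝ} : p ∈ lineSet l ↔ p.2 = lev l p.1 := Iff.rfl

lemma interPt_fst (l₁ l₂ : ℝ × ℝ) : (interPt l₁ l₂).1 = (l₂.2 - l₁.2) / (l₁.1 - l₂.1) := rfl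

lemma interPt_snd_fst (l₁ l₂ : ℝ × ℝ) : (interPt l₁ l₂).2 = lev l₁ (interPt l₁ l₂).1 := rfl

lemma interPt_snd_snd {l₁ l₂ : ℝ × ℝ} (h : l₁.1 ≠ l₂.1) :
    (interPt l₁ l₂).2 = lev l₂ (interPt l₁ l₂).1 := by
  have h0 : l₁.1 - l₂.1 ≠ 0 := sub_ne_zero.2 h
  unfold interPt lev
  field_simp
  ring

lemma interPt_symm_fst (l₁ l₂ : ℝ × ℝ) : (interPt l₂ l₁).1 = (interPt l₁ l₂).1 := by
  unfold interPt
  simp only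
  rw [show l₁.2 - l₂.2 = -(l₂.2 - l₁.2) by ring, show l₂.1 - l₁.1 = -(l₁.1 - l₂.1) by ring,
    neg_div_neg_eq]

lemma eq_interPt {l₁ l₂ p : ℝ × ℝ} (h : l₁.1 ≠ l₂.1) (h1 : p ∈ lineSet l₁)
    (h2 : p ∈ lineSet l₂) : p = interPt l₁ l₂ := by
  have h0 : l₁.1 - l₂.1 ≠ 0 := sub_ne_zero.2 h
  have hx : p.1 = (l₂.2 - l₁.2) / (l₁.1 - l₂.1) := by
    rw [eq_div_iff h0]
    have e1 : p.2 = l₁.1 * p.1 + l₁.2 := h1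
    have e2 : p.2 = l₂.1 * p.1 + l₂.2 := h2
    nlinarith [e1, e2]
  have hy : p.2 = l₁.1 * p.1 + l₁.2 := h1
  have : p = (p.1, p.2) := rfl
  rw [this]
  unfold interPt
  rw [← hx, hy]

-- four interval bound helpers
lemma interPt_le_of {m g : ℝ × ℝ} {x : ℝ} (h : lev m x ≤ lev g x) (hs : m.1 < g.1) :
    (interPt m g).1 ≤ x := by
  rw [interPt_fst, div_le_iff_of_neg (by linarith : m.1 - g.1 < 0)]
  unfold lev at h; nlinarith

lemma interPt_le_of' {m g : ℝ × ℝ} {x : ℝ} (h : lev g x ≤ lev m x) (hs : g.1 < m.1) :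
    (interPt m g).1 ≤ x := by
  rw [interPt_fst, div_le_iff₀ (by linarith : (0:ℝ) < m.1 - g.1)]
  unfold lev at h; nlinarith

lemma le_interPt_of {m g : ℝ × ℝ} {x : ℝ} (h : lev g x ≤ lev m x) (hs : m.1 < g.1) :
    x ≤ (interPt m g).1 := by
  rw [interPt_fst, le_div_iff_of_neg (by linarith : m.1 - g.1 < 0)]
  unfold lev at h; nlinarith

lemma le_interPt_of' {m g : ℝ × ℝ} {x : ℝ} (h : lev m x ≤ lev g x) (hs : g.1 < m.1) :
    x ≤ (interPt m g).1 := by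
  rw [interPt_fst, le_div_iff₀ (by linarith : (0:ℝ) < m.1 - g.1)]
  unfold lev at h; nlinarith

/-- middle line of a mixed cup-triple is below the outer intersection -/
lemma notBelow_mid {p q r : ℝ × ℝ} {mth : ℝ} (hqr : q.1 < r.1) (hpr : p.1 ≠ r.1)
    (hintra : (interPt q r).1 < mth) (hcross : mth < (interPt p r).1) :
    ¬ Below (interPt p r) q := by
  intro hb
  have hz2 : (interPt p r).2 = lev r (interPt p r).1 := interPt_snd_snd hpr
  have hx : (interPt q r).1 < (interPt p r).1 := lt_trans hintra hcross
  have hne : q.1 - r.1 ≠ 0 := by linarith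
  have hxq : r.2 - q.2 = (interPt q r).1 * (q.1 - r.1) := by
    rw [interPt_fst, div_mul_cancel₀ _ hne]
  have hlt : lev q (interPt p r).1 < lev r (interPt p r).1 := by
    unfold lev
    nlinarith [mul_pos (show (0:ℝ) < r.1 - q.1 by linarith)
      (show (0:ℝ) < (interPt p r).1 - (interPt q r).1 by linarith)]
  have hB : (interPt p r).2 < lev q (interPt p r).1 := hb
  rw [hz2] at hB
  linarith

/-- middle line of a mixed cap-triple is above the outer intersection -/
lemma notAbove_mid {p q r : ℝ × ℝ} {mth : ℝ} (hpq : p.1 < q.1)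
    (hintra : (interPt p q).1 < mth) (hcross : mth < (interPt p r).1) :
    ¬ Above (interPt p r) q := by
  intro hb
  have hz2 : (interPt p r).2 = lev p (interPt p r).1 := interPt_snd_fst p r
  have hx : (interPt p q).1 < (interPt p r).1 := lt_trans hintra hcross
  have hne : p.1 - q.1 ≠ 0 := by linarith
  have hxq : q.2 - p.2 = (interPt p q).1 * (p.1 - q.1) := by
    rw [interPt_fst, div_mul_cancel₀ _ hne]
  have hlt : lev p (interPt p r).1 < lev q (interPt p r).1 := by
    unfold lev
    nlinarith [mul_pos (show (0:ℝ) < q.1 - p.1 by linarith)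
      (show (0:ℝ) < (interPt p r).1 - (interPt p q).1 by linarith)]
  have hB : (interPt p r).2 > lev q (interPt p r).1 := hb
  rw [hz2] at hB
  linarith

end Aux

-- PART B
section Transport

/-- line transformation induced by the plane map `(x,y) ↦ (lam*x+mu, s*x+h+d*y)` -/
noncomputable def tmap (lam mu s h d : ℝ) (l : ℝ × ℝ) : ℝ × ℝ :=
  ((s + d * l.1) / lam, h + d * l.2 - mu * ((s + d * l.1) / lam))

/-- the plane map itself -/
def pmap (lam mu s h d : ℝ) (p : ℝ × ℝ) : ℝ × ℝ :=
  (lam * p.1 + mu, s * p.1 + h + d * p.2)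

def NoURCell (F : Finset (ℝ × ℝ)) : Prop :=
  ¬ ∃ G ⊆ F, G.card = 4 ∧ ∃ P, IsNCell G P ∧ UnboundedRight P

variable {lam mu s h d : ℝ}

lemma tmap_eval (hlam : lam ≠ 0) (l : ℝ × ℝ) (x : ℝ) :
    lev (tmap lam mu s h d l) (lam * x + mu) = s * x + h + d * lev l x := by
  unfold tmap lev
  field_simp
  ring

lemma pmap_mem_tmap_iff (hlam : lam ≠ 0) (hd : d ≠ 0) (l p : ℝ × ℝ) :
    pmap lam mu s h d p ∈ lineSet (tmap lam mu s h d l) ↔ p ∈ lineSet l := by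
  show (pmap lam mu s h d p).2 = _ ↔ p.2 = _
  have heval := tmap_eval (mu := mu) (s := s) (h := h) (d := d) hlam l p.1
  unfold lev at heval
  unfold pmap
  simp only
  rw [heval]
  constructor
  · intro hh
    exact mul_left_cancel₀ hd (by linarith)
  · intro hh; rw [hh]

lemma below_tmap (hlam : lam ≠ 0) (hd : 0 < d) (l p : ℝ × ℝ) :
    Below (pmap lam mu s h d p) (tmap lam mu s h d l) ↔ Below p l := by
  show (pmap lam mu s h d p).2 < _ ↔ p.2 < _
  have heval := tmap_eval (mu := mu) (s := s) (h := h) (d := d) hlam l p.1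
  unfold lev at heval
  unfold pmap
  simp only
  rw [heval]
  constructor
  · intro hh
    nlinarith [hh]
  · intro hh
    nlinarith [hh]

lemma above_tmap (hlam : lam ≠ 0) (hd : 0 < d) (l p : ℝ × ℝ) :
    Above (pmap lam mu s h d p) (tmap lam mu s h d l) ↔ Above p l := by
  show (pmap lam mu s h d p).2 > _ ↔ p.2 > _
  have heval := tmap_eval (mu := mu) (s := s) (h := h) (d := d) hlam l p.1
  unfold lev at heval
  unfold pmap
  simp only
  rw [heval]
  constructor
  · intro hh
    nlinarith [hh]
  · intro hh
    nlinarith [hh]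

lemma tmap_fst (l : ℝ × ℝ) : (tmap lam mu s h d l).1 = (s + d * l.1) / lam := rfl

lemma tmap_slope_lt (hlam : 0 < lam) (hd : 0 < d) {l₁ l₂ : ℝ × ℝ} (hl : l₁.1 < l₂.1) :
    (tmap lam mu s h d l₁).1 < (tmap lam mu s h d l₂).1 := by
  rw [tmap_fst, tmap_fst, div_lt_div_iff₀ hlam hlam]
  nlinarith [mul_pos (mul_pos hd (sub_pos.2 hl)) hlam]

lemma tmap_slope_lt_iff (hlam : 0 < lam) (hd : 0 < d) {l₁ l₂ : ℝ × ℝ} :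
    (tmap lam mu s h d l₁).1 < (tmap lam mu s h d l₂).1 ↔ l₁.1 < l₂.1 := by
  constructor
  · intro hh
    by_contra hc
    push_neg at hc
    rcases eq_or_lt_of_le hc with he | hlt
    · rw [tmap_fst, tmap_fst, he] at hh; exact lt_irrefl _ hh
    · exact absurd (tmap_slope_lt hlam hd hlt) (by linarith)
  · exact tmap_slope_lt hlam hd

lemma tmap_injective (hlam : lam ≠ 0) (hd : d ≠ 0) :
    Function.Injective (tmap lam mu s h d) := by
  intro l₁ l₂ he
  have h1 : (tmap lam mu s h d l₁).1 = (tmap lam mu s h d l₂).1 := by rw [he]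
  rw [tmap_fst, tmap_fst, div_eq_div_iff hlam hlam] at h1
  have h1' : s + d * l₁.1 = s + d * l₂.1 := mul_right_cancel₀ hlam h1
  have hslope : l₁.1 = l₂.1 := mul_left_cancel₀ hd (by linarith)
  have h2 : (tmap lam mu s h d l₁).2 = (tmap lam mu s h d l₂).2 := by rw [he]
  unfold tmap at h2
  simp only [hslope] at h2
  have hint : l₁.2 = l₂.2 := mul_left_cancel₀ hd (by linarith)
  exact Prod.ext hslope hint

lemma tmap_slope_sub (hlam : lam ≠ 0) (l₁ l₂ : ℝ × ℝ) :
    (tmap lam mu s h d l₁).1 - (tmap lam mu s h d l₂).1 = d * (l₁.1 - l₂.1) / lam := by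
  rw [tmap_fst, tmap_fst]
  field_simp
  ring

lemma interPt_tmap (hlam : lam ≠ 0) (hd : d ≠ 0) {l₁ l₂ : ℝ × ℝ} (hne : l₁.1 ≠ l₂.1) :
    interPt (tmap lam mu s h d l₁) (tmap lam mu s h d l₂) =
      pmap lam mu s h d (interPt l₁ l₂) := by
  have h0 : l₁.1 - l₂.1 ≠ 0 := sub_ne_zero.2 hne
  have hden : (tmap lam mu s h d l₁).1 - (tmap lam mu s h d l₂).1 ≠ 0 := by
    rw [tmap_slope_sub hlam]
    exact div_ne_zero (mul_ne_zero hd h0) hlam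
  have hfst : (interPt (tmap lam mu s h d l₁) (tmap lam mu s h d l₂)).1
      = lam * (interPt l₁ l₂).1 + mu := by
    rw [interPt_fst, div_eq_iff hden, interPt_fst]
    unfold tmap
    simp only
    field_simp
    ring
  refine Prod.ext hfst ?_
  rw [interPt_snd_fst, hfst]
  have hx : (interPt l₁ l₂).1 = (l₂.2 - l₁.2) / (l₁.1 - l₂.1) := rfl
  rw [tmap_eval hlam]
  rfl

end Transport
-- PART C : plane homeomorphism and cell transfer
section CellTransport

open Bornology

variable {lam mu s h d : ℝ}

/-- inverse parameters -/
noncomputable def ivl (lam mu s h d : ℝ) : ℝ × ℝ × ℝ × ℝ × ℝ :=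
  (1/lam, -mu/lam, -s/(lam*d), s*mu/(lam*d) - h/d, 1/d)

noncomputable def tinv (lam mu s h d : ℝ) : (ℝ × ℝ) → (ℝ × ℝ) :=
  tmap (1/lam) (-mu/lam) (-s/(lam*d)) (s*mu/(lam*d) - h/d) (1/d)

noncomputable def pinv (lam mu s h d : ℝ) : (ℝ × ℝ) → (ℝ × ℝ) :=
  pmap (1/lam) (-mu/lam) (-s/(lam*d)) (s*mu/(lam*d) - h/d) (1/d)

lemma pinv_pmap (hlam : lam ≠ 0) (hd : d ≠ 0) (p : ℝ × ℝ) :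
    pinv lam mu s h d (pmap lam mu s h d p) = p := by
  unfold pinv pmap
  refine Prod.ext ?_ ?_ <;> (simp only; field_simp; try ring)

lemma pmap_pinv (hlam : lam ≠ 0) (hd : d ≠ 0) (p : ℝ × ℝ) :
    pmap lam mu s h d (pinv lam mu s h d p) = p := by
  unfold pinv pmap
  refine Prod.ext ?_ ?_ <;> (simp only; field_simp; try ring)

lemma tinv_tmap (hlam : lam ≠ 0) (hd : d ≠ 0) (l : ℝ × ℝ) :
    tinv lam mu s h d (tmap lam mu s h d l) = l := by
  unfold tinv tmap
  refine Prod.ext ?_ ?_ <;> (simp only; field_simp; ring)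

lemma pmap_continuous : Continuous (pmap lam mu s h d) := by
  unfold pmap
  fun_prop

/-- the plane map as a homeomorphism -/
noncomputable def pmHomeo (lam mu s h d : ℝ) (hlam : lam ≠ 0) (hd : d ≠ 0) :
    (ℝ × ℝ) ≃ₜ (ℝ × ℝ) where
  toFun := pmap lam mu s h d
  invFun := pinv lam mu s h d
  left_inv := pinv_pmap hlam hd
  right_inv := pmap_pinv hlam hd
  continuous_toFun := pmap_continuous
  continuous_invFun := pmap_continuous

lemma pmap_bijective (hlam : lam ≠ 0) (hd : d ≠ 0) :
    Function.Bijective (pmap lam mu s h d) :=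
  (pmHomeo lam mu s h d hlam hd).bijective

lemma image_lineSet (hlam : lam ≠ 0) (hd : d ≠ 0) (l : ℝ × ℝ) :
    pmap lam mu s h d '' lineSet l = lineSet (tmap lam mu s h d l) := by
  ext q
  constructor
  · rintro ⟨p, hp, rfl⟩
    exact (pmap_mem_tmap_iff hlam hd l p).2 hp
  · intro hq
    refine ⟨pinv lam mu s h d q, ?_, pmap_pinv hlam hd q⟩
    have : pmap lam mu s h d (pinv lam mu s h d q) ∈ lineSet (tmap lam mu s h d l) := by
      rw [pmap_pinv hlam hd]; exact hq
    exact (pmap_mem_tmap_iff hlam hd l _).1 this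

lemma image_linesUnion (hlam : lam ≠ 0) (hd : d ≠ 0) (G : Finset (ℝ × ℝ)) :
    pmap lam mu s h d '' linesUnion G = linesUnion (G.image (tmap lam mu s h d)) := by
  unfold linesUnion
  rw [Set.image_iUnion₂]
  ext q
  simp only [Set.mem_iUnion, Finset.mem_image]
  constructor
  · rintro ⟨l, hl, hq⟩
    rw [image_lineSet hlam hd] at hq
    exact ⟨tmap lam mu s h d l, ⟨l, hl, rfl⟩, hq⟩
  · rintro ⟨m, ⟨l, hl, rfl⟩, hq⟩
    refine ⟨l, hl, ?_⟩
    rw [image_lineSet hlam hd]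
    exact hq

lemma image_compl_pmap (hlam : lam ≠ 0) (hd : d ≠ 0) (S : Set (ℝ × ℝ)) :
    pmap lam mu s h d '' Sᶜ = (pmap lam mu s h d '' S)ᶜ :=
  Set.image_compl_eq (pmap_bijective hlam hd)

lemma isBounded_pmap_image {S : Set (ℝ × ℝ)} (hS : IsBounded S) :
    IsBounded (pmap lam mu s h d '' S) := by
  rw [isBounded_iff_forall_norm_le] at hS ⊢
  obtain ⟨C, hC⟩ := hS
  refine ⟨(|lam| + |s| + |d|) * C + |mu| + |h|, ?_⟩
  rintro q ⟨p, hp, rfl⟩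
  have hp1 : |p.1| ≤ C := le_trans (by exact norm_fst_le p) (hC p hp)
  have hp2 : |p.2| ≤ C := le_trans (by exact norm_snd_le p) (hC p hp)
  have hC0 : 0 ≤ C := le_trans (abs_nonneg _) hp1
  rw [Prod.norm_def]
  apply max_le
  · rw [Real.norm_eq_abs]
    calc |lam * p.1 + mu| ≤ |lam * p.1| + |mu| := abs_add_le _ _
    _ = |lam| * |p.1| + |mu| := by rw [abs_mul]
    _ ≤ (|lam| + |s| + |d|) * C + |mu| + |h| := by
        have h1 : |lam| * |p.1| ≤ |lam| * C := by
          apply mul_le_mul_of_nonneg_left hp1 (abs_nonneg _)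
        nlinarith [abs_nonneg s, abs_nonneg d, abs_nonneg h, mul_nonneg (abs_nonneg s) hC0,
          mul_nonneg (abs_nonneg d) hC0]
  · rw [Real.norm_eq_abs]
    calc |s * p.1 + h + d * p.2| ≤ |s * p.1 + h| + |d * p.2| := abs_add_le _ _
    _ ≤ |s * p.1| + |h| + |d * p.2| := by nlinarith [abs_add_le (s * p.1) h]
    _ = |s| * |p.1| + |h| + |d| * |p.2| := by rw [abs_mul, abs_mul]
    _ ≤ (|lam| + |s| + |d|) * C + |mu| + |h| := by
        have h1 : |s| * |p.1| ≤ |s| * C := mul_le_mul_of_nonneg_left hp1 (abs_nonneg _)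
        have h2 : |d| * |p.2| ≤ |d| * C := mul_le_mul_of_nonneg_left hp2 (abs_nonneg _)
        nlinarith [abs_nonneg lam, abs_nonneg mu, mul_nonneg (abs_nonneg lam) hC0]

lemma isNCell_image (hlam : lam ≠ 0) (hd : d ≠ 0) {G : Finset (ℝ × ℝ)} {P : Set (ℝ × ℝ)}
    (hc : IsNCell G P) :
    IsNCell (G.image (tmap lam mu s h d)) (pmap lam mu s h d '' P) := by
  obtain ⟨⟨p, hp, hPeq⟩, hcontr⟩ := hc
  constructor
  · refine ⟨pmap lam mu s h d p, ?_, ?_⟩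
    · rw [← image_linesUnion hlam hd, ← image_compl_pmap hlam hd]
      exact Set.mem_image_of_mem _ hp
    · rw [hPeq]
      have := (pmHomeo lam mu s h d hlam hd).image_connectedComponentIn (x := p)
        (s := (linesUnion G)ᶜ) hp
      have hco : ⇑(pmHomeo lam mu s h d hlam hd) = pmap lam mu s h d := rfl
      rw [hco] at this
      have h2 : pmap lam mu s h d '' (linesUnion G)ᶜ
          = (linesUnion (G.image (tmap lam mu s h d)))ᶜ := by
        rw [image_compl_pmap hlam hd, image_linesUnion hlam hd]
      rw [h2] at this
      exact this
  · intro m hm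
    obtain ⟨l, hl, rfl⟩ := Finset.mem_image.1 hm
    obtain ⟨u, v, huv, hu, hv⟩ := hcontr l hl
    have hclos : pmap lam mu s h d '' closure P = closure (pmap lam mu s h d '' P) := by
      have := (pmHomeo lam mu s h d hlam hd).image_closure P
      have hco : ⇑(pmHomeo lam mu s h d hlam hd) = pmap lam mu s h d := rfl
      rw [hco] at this
      exact this
    refine ⟨pmap lam mu s h d u, pmap lam mu s h d v, ?_, ?_, ?_⟩
    · intro hcon
      exact huv ((pmap_bijective hlam hd).1 hcon)
    · constructor
      · rw [← hclos]
        exact Set.mem_image_of_mem _ hu.1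
      · rw [← image_lineSet hlam hd]
        exact Set.mem_image_of_mem _ hu.2
    · constructor
      · rw [← hclos]
        exact Set.mem_image_of_mem _ hv.1
      · rw [← image_lineSet hlam hd]
        exact Set.mem_image_of_mem _ hv.2

lemma ur_image (hlam : 0 < lam) (hd : d ≠ 0) {P : Set (ℝ × ℝ)}
    (hur : UnboundedRight P) : UnboundedRight (pmap lam mu s h d '' P) := by
  obtain ⟨hunb, x₀, hx₀⟩ := hur
  constructor
  · intro hb
    apply hunb
    have himg : pinv lam mu s h d '' (pmap lam mu s h d '' P) = P := by
      rw [Set.image_image]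
      have : ∀ x ∈ P, pinv lam mu s h d (pmap lam mu s h d x) = x :=
        fun x _ => pinv_pmap (ne_of_gt hlam) hd x
      rw [Set.image_congr this, Set.image_id']
    rw [← himg]
    exact isBounded_pmap_image hb
  · refine ⟨lam * x₀ + mu, ?_⟩
    rintro q ⟨p, hp, rfl⟩
    show lam * x₀ + mu < lam * p.1 + mu
    have := hx₀ p hp
    nlinarith

lemma noURCell_image (hlam : 0 < lam) (hd : 0 < d) {F : Finset (ℝ × ℝ)}
    (hF : NoURCell F) : NoURCell (F.image (tmap lam mu s h d)) := by
  rintro ⟨G, hGsub, hG4, P, hNC, hUR⟩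
  apply hF
  have hlam' : lam ≠ 0 := ne_of_gt hlam
  have hd' : d ≠ 0 := ne_of_gt hd
  -- inverse transformation parameters
  set lam2 := 1/lam with hlam2
  set mu2 := -mu/lam with hmu2
  set s2 := -s/(lam*d) with hs2
  set h2 := s*mu/(lam*d) - h/d with hh2
  set d2 := 1/d with hd2
  have hlam2pos : 0 < lam2 := by rw [hlam2]; positivity
  have hd2pos : 0 < d2 := by rw [hd2]; positivity
  have hkey : ∀ g ∈ G, tmap lam2 mu2 s2 h2 d2 g ∈ F := by
    intro g hg
    obtain ⟨f, hf, rfl⟩ := Finset.mem_image.1 (hGsub hg)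
    have : tmap lam2 mu2 s2 h2 d2 (tmap lam mu s h d f) = f := tinv_tmap hlam' hd' f
    rw [this]; exact hf
  refine ⟨G.image (tmap lam2 mu2 s2 h2 d2), ?_, ?_, pmap lam2 mu2 s2 h2 d2 '' P, ?_, ?_⟩
  · intro g hg
    obtain ⟨g0, hg0, rfl⟩ := Finset.mem_image.1 hg
    exact hkey g0 hg0
  · rw [Finset.card_image_of_injective _ (tmap_injective (ne_of_gt hlam2pos) (ne_of_gt hd2pos)),
      hG4]
  · exact isNCell_image (ne_of_gt hlam2pos) (ne_of_gt hd2pos) hNC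
  · exact ur_image hlam2pos (ne_of_gt hd2pos) hUR

lemma point_mem_tmap_back (hlam : lam ≠ 0) (hd : d ≠ 0) {l q : ℝ × ℝ}
    (hq : q ∈ lineSet (tmap lam mu s h d l)) : pinv lam mu s h d q ∈ lineSet l := by
  have : pmap lam mu s h d (pinv lam mu s h d q) ∈ lineSet (tmap lam mu s h d l) := by
    rw [pmap_pinv hlam hd]; exact hq
  exact (pmap_mem_tmap_iff hlam hd l _).1 this

lemma genPos_image (hlam : 0 < lam) (hd : 0 < d) {F : Finset (ℝ × ℝ)}
    (hF : GenPos F) : GenPos (F.image (tmap lam mu s h d)) := by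
  have hlam' : lam ≠ 0 := ne_of_gt hlam
  have hd' : d ≠ 0 := ne_of_gt hd
  constructor
  · rintro m₁ hm₁ m₂ hm₂ hne
    obtain ⟨l₁, hl₁, rfl⟩ := Finset.mem_image.1 hm₁
    obtain ⟨l₂, hl₂, rfl⟩ := Finset.mem_image.1 hm₂
    have hlne : l₁ ≠ l₂ := fun hc => hne (by rw [hc])
    have := hF.1 l₁ hl₁ l₂ hl₂ hlne
    intro hc
    apply this
    rw [tmap_fst, tmap_fst, div_eq_div_iff hlam' hlam'] at hc
    have := mul_right_cancel₀ hlam' hc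
    exact mul_left_cancel₀ hd' (by linarith)
  · rintro m₁ hm₁ m₂ hm₂ m₃ hm₃ h12 h13 h23 ⟨q, hq1, hq2, hq3⟩
    obtain ⟨l₁, hl₁, rfl⟩ := Finset.mem_image.1 hm₁
    obtain ⟨l₂, hl₂, rfl⟩ := Finset.mem_image.1 hm₂
    obtain ⟨l₃, hl₃, rfl⟩ := Finset.mem_image.1 hm₃
    exact hF.2 l₁ hl₁ l₂ hl₂ l₃ hl₃ (fun hc => h12 (by rw [hc]))
      (fun hc => h13 (by rw [hc])) (fun hc => h23 (by rw [hc]))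
      ⟨pinv lam mu s h d q, point_mem_tmap_back hlam' hd' hq1,
        point_mem_tmap_back hlam' hd' hq2, point_mem_tmap_back hlam' hd' hq3⟩

end CellTransport
-- PART D: cups and caps under transformation, subsequences
section CupTransport

variable {lam mu s h d : ℝ}

lemma isCup_tmap_iff (hlam : 0 < lam) (hd : 0 < d) {n : ℕ} (a : Fin n → ℝ × ℝ) :
    IsCup (fun i => tmap lam mu s h d (a i)) ↔ IsCup a := by
  have hlam' : lam ≠ 0 := ne_of_gt hlam
  have hd' : d ≠ 0 := ne_of_gt hd
  have hmono : StrictMono (fun i => (tmap lam mu s h d (a i)).1) ↔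
      StrictMono (fun i => (a i).1) := by
    constructor
    · intro hs i j hij
      exact (tmap_slope_lt_iff hlam hd).1 (hs hij)
    · intro hs i j hij
      exact (tmap_slope_lt_iff hlam hd).2 (hs hij)
  constructor
  · rintro ⟨hs, hcond⟩
    refine ⟨hmono.1 hs, ?_⟩
    intro i h1 h2
    have hne : (a ⟨(i : ℕ) - 1, by omega⟩).1 ≠ (a ⟨(i : ℕ) + 1, h2⟩).1 := by
      apply ne_of_lt
      exact (hmono.1 hs) (by simp [Fin.lt_def])
    have := hcond i h1 h2
    rw [interPt_tmap hlam' hd' hne] at this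
    exact (below_tmap hlam' hd _ _).1 this
  · rintro ⟨hs, hcond⟩
    refine ⟨hmono.2 hs, ?_⟩
    intro i h1 h2
    have hne : (a ⟨(i : ℕ) - 1, by omega⟩).1 ≠ (a ⟨(i : ℕ) + 1, h2⟩).1 := by
      apply ne_of_lt
      exact hs (by simp [Fin.lt_def])
    rw [interPt_tmap hlam' hd' hne]
    exact (below_tmap hlam' hd _ _).2 (hcond i h1 h2)

lemma isCap_tmap_iff (hlam : 0 < lam) (hd : 0 < d) {n : ℕ} (a : Fin n → ℝ × ℝ) :
    IsCap (fun i => tmap lam mu s h d (a i)) ↔ IsCap a := by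
  have hlam' : lam ≠ 0 := ne_of_gt hlam
  have hd' : d ≠ 0 := ne_of_gt hd
  have hmono : StrictMono (fun i => (tmap lam mu s h d (a i)).1) ↔
      StrictMono (fun i => (a i).1) := by
    constructor
    · intro hs i j hij
      exact (tmap_slope_lt_iff hlam hd).1 (hs hij)
    · intro hs i j hij
      exact (tmap_slope_lt_iff hlam hd).2 (hs hij)
  constructor
  · rintro ⟨hs, hcond⟩
    refine ⟨hmono.1 hs, ?_⟩
    intro i h1 h2
    have hne : (a ⟨(i : ℕ) - 1, by omega⟩).1 ≠ (a ⟨(i : ℕ) + 1, h2⟩).1 := by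
      apply ne_of_lt
      exact (hmono.1 hs) (by simp [Fin.lt_def])
    have := hcond i h1 h2
    rw [interPt_tmap hlam' hd' hne] at this
    exact (above_tmap hlam' hd _ _).1 this
  · rintro ⟨hs, hcond⟩
    refine ⟨hmono.2 hs, ?_⟩
    intro i h1 h2
    have hne : (a ⟨(i : ℕ) - 1, by omega⟩).1 ≠ (a ⟨(i : ℕ) + 1, h2⟩).1 := by
      apply ne_of_lt
      exact hs (by simp [Fin.lt_def])
    rw [interPt_tmap hlam' hd' hne]
    exact (above_tmap hlam' hd _ _).2 (hcond i h1 h2)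

lemma hasCup_of_image (hlam : 0 < lam) (hd : 0 < d) {n : ℕ} {F : Finset (ℝ × ℝ)}
    (hc : HasCup n (F.image (tmap lam mu s h d))) : HasCup n F := by
  obtain ⟨a, hmem, hcup⟩ := hc
  choose b hb hb2 using fun i => Finset.mem_image.1 (hmem i)
  have heq : (fun i => tmap lam mu s h d (b i)) = a := funext hb2
  refine ⟨b, hb, ?_⟩
  rw [← heq] at hcup
  exact (isCup_tmap_iff hlam hd b).1 hcup

lemma hasCap_of_image (hlam : 0 < lam) (hd : 0 < d) {n : ℕ} {F : Finset (ℝ × ℝ)}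
    (hc : HasCap n (F.image (tmap lam mu s h d))) : HasCap n F := by
  obtain ⟨a, hmem, hcap⟩ := hc
  choose b hb hb2 using fun i => Finset.mem_image.1 (hmem i)
  have heq : (fun i => tmap lam mu s h d (b i)) = a := funext hb2
  refine ⟨b, hb, ?_⟩
  rw [← heq] at hcap
  exact (isCap_tmap_iff hlam hd b).1 hcap

/-- contiguous subsequence of a cup is a cup -/
lemma isCup_sub {n : ℕ} {a : Fin n → ℝ × ℝ} (ha : IsCup a) (off m : ℕ)
    (hom : off + m ≤ n) : IsCup (fun j : Fin m => a ⟨off + (j : ℕ), by omega⟩) := by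
  obtain ⟨hs, hcond⟩ := ha
  constructor
  · intro i j hij
    exact hs (by
      have hij' : (i : ℕ) < (j : ℕ) := hij
      show off + (i : ℕ) < off + (j : ℕ)
      omega)
  · intro j h1 h2
    have h2' : (off + (j : ℕ)) + 1 < n := by omega
    have := hcond ⟨off + (j : ℕ), by omega⟩ (by show 0 < off + (j : ℕ); omega) h2'
    have e1 : (⟨(off + (j : ℕ)) - 1, by omega⟩ : Fin n)
        = ⟨off + ((j : ℕ) - 1), by omega⟩ := by
      apply Fin.ext; simp; omega
    have e2 : (⟨(off + (j : ℕ)) + 1, h2'⟩ : Fin n)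
        = ⟨off + ((j : ℕ) + 1), by omega⟩ := by
      apply Fin.ext; simp; omega
    rw [e1, e2] at this
    exact this

lemma isCap_sub {n : ℕ} {a : Fin n → ℝ × ℝ} (ha : IsCap a) (off m : ℕ)
    (hom : off + m ≤ n) : IsCap (fun j : Fin m => a ⟨off + (j : ℕ), by omega⟩) := by
  obtain ⟨hs, hcond⟩ := ha
  constructor
  · intro i j hij
    exact hs (by
      have hij' : (i : ℕ) < (j : ℕ) := hij
      show off + (i : ℕ) < off + (j : ℕ)
      omega)
  · intro j h1 h2
    have h2' : (off + (j : ℕ)) + 1 < n := by omega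
    have := hcond ⟨off + (j : ℕ), by omega⟩ (by show 0 < off + (j : ℕ); omega) h2'
    have e1 : (⟨(off + (j : ℕ)) - 1, by omega⟩ : Fin n)
        = ⟨off + ((j : ℕ) - 1), by omega⟩ := by
      apply Fin.ext; simp; omega
    have e2 : (⟨(off + (j : ℕ)) + 1, h2'⟩ : Fin n)
        = ⟨off + ((j : ℕ) + 1), by omega⟩ := by
      apply Fin.ext; simp; omega
    rw [e1, e2] at this
    exact this

end CupTransport
-- PART E : no unbounded-right 4-cell from mixed quadruples
section CellKill

open Bornology

lemma cellKill {G : Finset (ℝ × ℝ)} {P : Set (ℝ × ℝ)} {χ : (ℝ × ℝ) → Prop} {θ mth : ℝ}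
    (hslopes : ∀ l₁ ∈ G, ∀ l₂ ∈ G, l₁ ≠ l₂ → l₁.1 ≠ l₂.1)
    (hθ : ∀ l ∈ G, (χ l → l.1 < θ) ∧ (¬ χ l → θ < l.1))
    (hintra : ∀ l₁ ∈ G, ∀ l₂ ∈ G, l₁ ≠ l₂ → (χ l₁ ↔ χ l₂) → (interPt l₁ l₂).1 < mth)
    (hcross : ∀ l₁ ∈ G, ∀ l₂ ∈ G, χ l₁ → ¬ χ l₂ → mth < (interPt l₁ l₂).1)
    (hmix1 : ∃ l ∈ G, χ l) (hmix2 : ∃ l ∈ G, ¬ χ l)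
    (hG4 : G.card = 4)
    (hcell : IsNCell G P) (hUR : UnboundedRight P) : False := by
  classical
  obtain ⟨⟨p, hp, hPeq⟩, hcontr⟩ := hcell
  obtain ⟨hunb, x₀, hx₀⟩ := hUR
  have hpP : p ∈ P := by rw [hPeq]; exact mem_connectedComponentIn hp
  have hPsub : P ⊆ (linesUnion G)ᶜ := by rw [hPeq]; exact connectedComponentIn_subset _ _
  have hPconn : IsPreconnected P := by rw [hPeq]; exact isPreconnected_connectedComponentIn
  have hnotline : ∀ q ∈ P, ∀ l ∈ G, q.2 ≠ lev l q.1 := by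
    intro q hq l hl hc
    exact (hPsub hq) (Set.mem_biUnion hl hc)
  have hside : ∀ l ∈ G, Above p l ∨ Below p l := by
    intro l hl
    rcases lt_trichotomy p.2 (lev l p.1) with hlt | heq | hgt
    · exact Or.inr hlt
    · exact absurd heq (hnotline p hpP l hl)
    · exact Or.inl hgt
  -- sign persistence on the closure
  have hpersist : ∀ l ∈ G, (Above p l → ∀ q ∈ closure P, lev l q.1 ≤ q.2) ∧
      (Below p l → ∀ q ∈ closure P, q.2 ≤ lev l q.1) := by
    intro l hl
    have hcl : Continuous (fun q : ℝ × ℝ => lev l q.1) := by unfold lev; fun_prop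
    have hU : IsOpen {q : ℝ × ℝ | lev l q.1 < q.2} := isOpen_lt hcl continuous_snd
    have hV : IsOpen {q : ℝ × ℝ | q.2 < lev l q.1} := isOpen_lt continuous_snd hcl
    have hdisj : Disjoint {q : ℝ × ℝ | lev l q.1 < q.2} {q : ℝ × ℝ | q.2 < lev l q.1} := by
      rw [Set.disjoint_left]
      intro q hq1 hq2
      simp only [Set.mem_setOf_eq] at hq1 hq2
      linarith
    have hcover : P ⊆ {q : ℝ × ℝ | lev l q.1 < q.2} ∪ {q : ℝ × ℝ | q.2 < lev l q.1} := by
      intro q hq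
      rcases lt_trichotomy (lev l q.1) q.2 with hlt | heq | hgt
      · exact Or.inl hlt
      · exact absurd heq.symm (hnotline q hq l hl)
      · exact Or.inr hgt
    have hcases := hPconn.subset_or_subset hU hV hdisj hcover
    constructor
    · intro hab
      rcases hcases with hc | hc
      · intro q hq
        have h1 : closure P ⊆ {q : ℝ × ℝ | lev l q.1 ≤ q.2} := by
          refine le_trans (closure_mono hc) (closure_minimal ?_ ?_)
          · intro z hz
            simp only [Set.mem_setOf_eq] at hz ⊢
            exact le_of_lt hz
          · exact isClosed_le hcl continuous_snd
        exact h1 hq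
      · exact absurd (hc hpP) (by simp only [Set.mem_setOf_eq, not_lt]; exact le_of_lt hab)
    · intro hbe
      rcases hcases with hc | hc
      · exact absurd (hc hpP) (by simp only [Set.mem_setOf_eq, not_lt]; exact le_of_lt hbe)
      · intro q hq
        have h1 : closure P ⊆ {q : ℝ × ℝ | q.2 ≤ lev l q.1} := by
          refine le_trans (closure_mono hc) (closure_minimal ?_ ?_)
          · intro z hz
            simp only [Set.mem_setOf_eq] at hz ⊢
            exact le_of_lt hz
          · exact isClosed_le continuous_snd hcl
        exact h1 hq
  have hGne : G.Nonempty := ⟨hmix1.choose, hmix1.choose_spec.1⟩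
  -- both sides are nonempty
  have hApos : ∃ la ∈ G, Above p la := by
    by_contra hng
    push_neg at hng
    have hallB : ∀ l ∈ G, Below p l := by
      intro l hl
      rcases hside l hl with hA | hB
      · exact absurd hA (hng l hl)
      · exact hB
    set Y := (G.image (fun l => lev l x₀)).min' (hGne.image _) - 1 with hY
    set z : ℝ × ℝ := (x₀, Y) with hz
    set S := {q : ℝ × ℝ | ∀ l ∈ G, q.2 < lev l q.1} with hS
    have hzS : z ∈ S := by
      intro l hl
      have h1 : (G.image (fun l => lev l x₀)).min' (hGne.image _) ≤ lev l x₀ :=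
        Finset.min'_le _ _ (Finset.mem_image_of_mem _ hl)
      show z.2 < lev l z.1
      rw [hz]
      simp only
      linarith
    have hpS : p ∈ S := fun l hl => hallB l hl
    have hconv : Convex ℝ S := by
      intro q1 hq1 q2 hq2 a b ha hb hab
      intro l hl
      have e1 : (a • q1 + b • q2).1 = a * q1.1 + b * q2.1 := rfl
      have e2 : (a • q1 + b • q2).2 = a * q1.2 + b * q2.2 := rfl
      show (a • q1 + b • q2).2 < lev l (a • q1 + b • q2).1
      rw [e1, e2]
      have hlev : lev l (a * q1.1 + b * q2.1) = a * lev l q1.1 + b * lev l q2.1 := by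
        unfold lev
        have : b = 1 - a := by linarith
        rw [this]; ring
      rw [hlev]
      have hx1 := hq1 l hl
      have hx2 := hq2 l hl
      rcases eq_or_lt_of_le ha with ha0 | hapos
      · have hb1 : b = 1 := by linarith
        rw [← ha0, hb1]; simpa using hx2
      · rcases eq_or_lt_of_le hb with hb0 | hbpos
        · rw [← hb0]
          simp only [zero_mul, add_zero]
          nlinarith
        · nlinarith
    have hSsub : S ⊆ (linesUnion G)ᶜ := by
      intro q hq hmem
      simp only [linesUnion, Set.mem_iUnion] at hmem
      obtain ⟨l, hl, hql⟩ := hmem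
      exact absurd (hql : q.2 = lev l q.1) (ne_of_lt (hq l hl))
    have hSP : S ⊆ P := by
      rw [hPeq]
      exact (hconv.isPreconnected).subset_connectedComponentIn hpS hSsub
    exact absurd (hx₀ z (hSP hzS)) (by rw [hz]; simp)
  have hBpos : ∃ lb ∈ G, Below p lb := by
    by_contra hng
    push_neg at hng
    have hallA : ∀ l ∈ G, Above p l := by
      intro l hl
      rcases hside l hl with hA | hB
      · exact hA
      · exact absurd hB (hng l hl)
    set Y := (G.image (fun l => lev l x₀)).max' (hGne.image _) + 1 with hY
    set z : ℝ × ℝ := (x₀, Y) with hz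
    set S := {q : ℝ × ℝ | ∀ l ∈ G, lev l q.1 < q.2} with hS
    have hzS : z ∈ S := by
      intro l hl
      have h1 : lev l x₀ ≤ (G.image (fun l => lev l x₀)).max' (hGne.image _) :=
        Finset.le_max' (G.image (fun l => lev l x₀)) (lev l x₀) (Finset.mem_image_of_mem _ hl)
      show lev l z.1 < z.2
      rw [hz]
      simp only
      linarith
    have hpS : p ∈ S := fun l hl => hallA l hl
    have hconv : Convex ℝ S := by
      intro q1 hq1 q2 hq2 a b ha hb hab
      intro l hl
      have e1 : (a • q1 + b • q2).1 = a * q1.1 + b * q2.1 := rfl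
      have e2 : (a • q1 + b • q2).2 = a * q1.2 + b * q2.2 := rfl
      show lev l (a • q1 + b • q2).1 < (a • q1 + b • q2).2
      rw [e1, e2]
      have hlev : lev l (a * q1.1 + b * q2.1) = a * lev l q1.1 + b * lev l q2.1 := by
        unfold lev
        have : b = 1 - a := by linarith
        rw [this]; ring
      rw [hlev]
      have hx1 := hq1 l hl
      have hx2 := hq2 l hl
      rcases eq_or_lt_of_le ha with ha0 | hapos
      · have hb1 : b = 1 := by linarith
        rw [← ha0, hb1]; simpa using hx2
      · rcases eq_or_lt_of_le hb with hb0 | hbpos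
        · rw [← hb0]
          simp only [zero_mul, add_zero]
          nlinarith
        · nlinarith
    have hSsub : S ⊆ (linesUnion G)ᶜ := by
      intro q hq hmem
      simp only [linesUnion, Set.mem_iUnion] at hmem
      obtain ⟨l, hl, hql⟩ := hmem
      exact absurd (hql : q.2 = lev l q.1) (ne_of_gt (hq l hl))
    have hSP : S ⊆ P := by
      rw [hPeq]
      exact (hconv.isPreconnected).subset_connectedComponentIn hpS hSsub
    exact absurd (hx₀ z (hSP hzS)) (by rw [hz]; simp)
  -- slope separation between sides
  have hsep : ∀ la ∈ G, ∀ lb ∈ G, Above p la → Below p lb → la.1 < lb.1 := by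
    intro la hla lb hlb hA hB
    have hne : la ≠ lb := by
      intro he
      rw [he] at hA
      exact absurd (lt_trans hA hB) (lt_irrefl _)
    have hsne : la.1 ≠ lb.1 := hslopes la hla lb hlb hne
    by_contra hc
    push_neg at hc
    have hgt : lb.1 < la.1 := lt_of_le_of_ne hc (Ne.symm hsne)
    -- then P is bounded, contradiction
    apply hunb
    set X := (lb.2 - la.2) / (la.1 - lb.1) with hX
    have hbound : ∀ q ∈ P, x₀ < q.1 ∧ q.1 ≤ X := by
      intro q hq
      refine ⟨hx₀ q hq, ?_⟩
      have h1 : lev la q.1 ≤ q.2 := (hpersist la hla).1 hA q (subset_closure hq)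
      have h2 : q.2 ≤ lev lb q.1 := (hpersist lb hlb).2 hB q (subset_closure hq)
      rw [hX, le_div_iff₀ (by linarith : (0:ℝ) < la.1 - lb.1)]
      unfold lev at h1 h2
      nlinarith
    rw [isBounded_iff_forall_norm_le]
    set M := max |x₀| |X| with hM
    refine ⟨max M (|la.1| * M + |la.2| + |lb.1| * M + |lb.2|), ?_⟩
    intro q hq
    obtain ⟨hq1, hq2⟩ := hbound q hq
    have hM0 : 0 ≤ M := le_trans (abs_nonneg x₀) (le_max_left _ _)
    have hq1abs : |q.1| ≤ M := by
      rw [abs_le]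
      constructor
      · have : -|x₀| ≤ x₀ := neg_abs_le x₀
        have : -M ≤ -|x₀| := by
          simp only [neg_le_neg_iff]
          exact le_max_left _ _
        linarith [neg_abs_le x₀, le_max_left |x₀| |X|]
      · exact le_trans hq2 (le_trans (le_abs_self X) (le_max_right _ _))
    have h1 : lev la q.1 ≤ q.2 := (hpersist la hla).1 hA q (subset_closure hq)
    have h2 : q.2 ≤ lev lb q.1 := (hpersist lb hlb).2 hB q (subset_closure hq)
    have hq2abs : |q.2| ≤ |la.1| * M + |la.2| + |lb.1| * M + |lb.2| := by
      rw [abs_le]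
      have e1 : lb.1 * q.1 ≤ |lb.1| * M := by
        calc lb.1 * q.1 ≤ |lb.1 * q.1| := le_abs_self _
        _ = |lb.1| * |q.1| := abs_mul _ _
        _ ≤ |lb.1| * M := mul_le_mul_of_nonneg_left hq1abs (abs_nonneg _)
      have e2 : -(|la.1| * M) ≤ la.1 * q.1 := by
        have : |la.1 * q.1| ≤ |la.1| * M := by
          rw [abs_mul]
          exact mul_le_mul_of_nonneg_left hq1abs (abs_nonneg _)
        linarith [neg_abs_le (la.1 * q.1)]
      unfold lev at h1 h2
      constructor
      · nlinarith [neg_abs_le la.2, abs_nonneg lb.1, abs_nonneg lb.2,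
          mul_nonneg (abs_nonneg lb.1) hM0]
      · nlinarith [le_abs_self lb.2, abs_nonneg la.1, abs_nonneg la.2,
          mul_nonneg (abs_nonneg la.1) hM0]
    rw [Prod.norm_def]
    apply max_le
    · rw [Real.norm_eq_abs]
      exact le_trans hq1abs (le_max_left _ _)
    · rw [Real.norm_eq_abs]
      exact le_trans hq2abs (le_max_right _ _)
  -- pigeonhole on (side, cluster)
  have hcard2 : (G.filter fun l => Above p l ∧ χ l).card +
      (G.filter fun l => Above p l ∧ ¬ χ l).card +
      ((G.filter fun l => ¬ Above p l ∧ χ l).card +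
      (G.filter fun l => ¬ Above p l ∧ ¬ χ l).card) = 4 := by
    have c0 := Finset.card_filter_add_card_filter_not (s := G)
      (p := fun l => Above p l)
    have c1 := Finset.card_filter_add_card_filter_not
      (s := G.filter fun l => Above p l) (p := fun l => χ l)
    have c2 := Finset.card_filter_add_card_filter_not
      (s := G.filter fun l => ¬ Above p l) (p := fun l => χ l)
    rw [Finset.filter_filter, Finset.filter_filter] at c1 c2
    rw [c1, c2, c0, hG4]
  -- the four elementary kill moves
  have killA : ∀ x ∈ G, ∀ y ∈ G, ∀ g ∈ G, Above p x → Above p y → Below p g →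
      x.1 < y.1 → (χ x ↔ χ y) → χ x → ¬ χ g → False := by
    intro x hx y hy g hg hxA hyA hgB hxy hiff hχx hχg
    obtain ⟨q, q', hqq', hq, _⟩ := hcontr x hx
    have hqm : q.2 = lev x q.1 := hq.2
    have hup : q.1 ≤ (interPt x y).1 := by
      apply le_interPt_of _ hxy
      rw [← hqm]
      exact (hpersist y hy).1 hyA q hq.1
    have hxg : x.1 < g.1 := lt_trans ((hθ x hx).1 hχx) ((hθ g hg).2 hχg)
    have hlow : (interPt x g).1 ≤ q.1 := by
      apply interPt_le_of _ hxg
      rw [← hqm]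
      exact (hpersist g hg).2 hgB q hq.1
    have hxyne : x ≠ y := fun he => absurd (by rw [he] : x.1 = y.1) (ne_of_lt hxy)
    have hi := hintra x hx y hy hxyne hiff
    have hc := hcross x hx g hg hχx hχg
    linarith
  have killA2 : ∀ x ∈ G, ∀ y ∈ G, ∀ g ∈ G, Above p x → Above p y → Above p g →
      x.1 < y.1 → (χ x ↔ χ y) → ¬ χ x → χ g → False := by
    intro x hx y hy g hg hxA hyA hgA hxy hiff hχx hχg
    obtain ⟨q, q', hqq', hq, _⟩ := hcontr x hx
    have hqm : q.2 = lev x q.1 := hq.2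
    have hup : q.1 ≤ (interPt x y).1 := by
      apply le_interPt_of _ hxy
      rw [← hqm]
      exact (hpersist y hy).1 hyA q hq.1
    have hgx : g.1 < x.1 := lt_trans ((hθ g hg).1 hχg) ((hθ x hx).2 hχx)
    have hlow : (interPt x g).1 ≤ q.1 := by
      apply interPt_le_of' _ hgx
      rw [← hqm]
      exact (hpersist g hg).1 hgA q hq.1
    have hxyne : x ≠ y := fun he => absurd (by rw [he] : x.1 = y.1) (ne_of_lt hxy)
    have hi := hintra x hx y hy hxyne hiff
    have hc := hcross g hg x hx hχg hχx
    rw [interPt_symm_fst] at hlow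
    linarith
  have killB : ∀ x ∈ G, ∀ y ∈ G, ∀ g ∈ G, Below p x → Below p y → Below p g →
      x.1 < y.1 → (χ x ↔ χ y) → χ y → ¬ χ g → False := by
    intro x hx y hy g hg hxB hyB hgB hxy hiff hχy hχg
    obtain ⟨q, q', hqq', hq, _⟩ := hcontr y hy
    have hqm : q.2 = lev y q.1 := hq.2
    have hup : q.1 ≤ (interPt y x).1 := by
      apply le_interPt_of' _ hxy
      rw [← hqm]
      exact (hpersist x hx).2 hxB q hq.1
    have hyg : y.1 < g.1 := lt_trans ((hθ y hy).1 hχy) ((hθ g hg).2 hχg)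
    have hlow : (interPt y g).1 ≤ q.1 := by
      apply interPt_le_of _ hyg
      rw [← hqm]
      exact (hpersist g hg).2 hgB q hq.1
    have hxyne : y ≠ x := fun he => absurd (by rw [he] : y.1 = x.1) (ne_of_gt hxy)
    have hi := hintra y hy x hx hxyne (Iff.symm hiff)
    have hc := hcross y hy g hg hχy hχg
    linarith
  have killB2 : ∀ x ∈ G, ∀ y ∈ G, ∀ g ∈ G, Below p x → Below p y → Above p g →
      x.1 < y.1 → (χ x ↔ χ y) → ¬ χ y → χ g → False := by
    intro x hx y hy g hg hxB hyB hgA hxy hiff hχy hχg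
    obtain ⟨q, q', hqq', hq, _⟩ := hcontr y hy
    have hqm : q.2 = lev y q.1 := hq.2
    have hup : q.1 ≤ (interPt y x).1 := by
      apply le_interPt_of' _ hxy
      rw [← hqm]
      exact (hpersist x hx).2 hxB q hq.1
    have hgy : g.1 < y.1 := lt_trans ((hθ g hg).1 hχg) ((hθ y hy).2 hχy)
    have hlow : (interPt y g).1 ≤ q.1 := by
      apply interPt_le_of' _ hgy
      rw [← hqm]
      exact (hpersist g hg).1 hgA q hq.1
    have hxyne : y ≠ x := fun he => absurd (by rw [he] : y.1 = x.1) (ne_of_gt hxy)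
    have hi := hintra y hy x hx hxyne (Iff.symm hiff)
    have hc := hcross g hg y hy hχg hχy
    rw [interPt_symm_fst] at hlow
    linarith
  -- now the case analysis
  by_cases hA1 : 2 ≤ (G.filter fun l => Above p l ∧ χ l).card
  · obtain ⟨x, hx, y, hy, hxy⟩ := Finset.one_lt_card.1 hA1
    rw [Finset.mem_filter] at hx hy
    -- find g in Below ∩ ¬χ
    have hg : ∃ g ∈ G, Below p g ∧ ¬ χ g := by
      by_contra hng
      push_neg at hng
      obtain ⟨c, hc, hχc⟩ := hmix2
      have hcA : Above p c := by
        rcases hside c hc with h | h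
        · exact h
        · exact absurd (hng c hc h) (by simpa using hχc)
      obtain ⟨lb, hlb, hlbB⟩ := hBpos
      have hχlb : χ lb := hng lb hlb hlbB
      have h1 := hsep c hc lb hlb hcA hlbB
      have h2 := (hθ lb hlb).1 hχlb
      have h3 := (hθ c hc).2 hχc
      linarith
    obtain ⟨g, hgG, hgB, hχg⟩ := hg
    rcases lt_trichotomy x.1 y.1 with hlt | heq | hgt
    · exact killA x hx.1 y hy.1 g hgG hx.2.1 hy.2.1 hgB hlt
        (iff_of_true hx.2.2 hy.2.2) hx.2.2 hχg
    · exact absurd heq (hslopes x hx.1 y hy.1 hxy)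
    · exact killA y hy.1 x hx.1 g hgG hy.2.1 hx.2.1 hgB hgt
        (iff_of_true hy.2.2 hx.2.2) hy.2.2 hχg
  by_cases hA2 : 2 ≤ (G.filter fun l => Above p l ∧ ¬ χ l).card
  · obtain ⟨x, hx, y, hy, hxy⟩ := Finset.one_lt_card.1 hA2
    rw [Finset.mem_filter] at hx hy
    have hg : ∃ g ∈ G, Above p g ∧ χ g := by
      by_contra hng
      push_neg at hng
      obtain ⟨c, hc, hχc⟩ := hmix1
      have hcB : Below p c := by
        rcases hside c hc with h | h
        · exact absurd hχc (hng c hc h)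
        · exact h
      have h1 := hsep x hx.1 c hc hx.2.1 hcB
      have h2 := (hθ c hc).1 hχc
      have h3 := (hθ x hx.1).2 hx.2.2
      linarith
    obtain ⟨g, hgG, hgA, hχg⟩ := hg
    rcases lt_trichotomy x.1 y.1 with hlt | heq | hgt
    · exact killA2 x hx.1 y hy.1 g hgG hx.2.1 hy.2.1 hgA hlt
        (iff_of_false hx.2.2 hy.2.2) hx.2.2 hχg
    · exact absurd heq (hslopes x hx.1 y hy.1 hxy)
    · exact killA2 y hy.1 x hx.1 g hgG hy.2.1 hx.2.1 hgA hgt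
        (iff_of_false hy.2.2 hx.2.2) hy.2.2 hχg
  by_cases hB1 : 2 ≤ (G.filter fun l => ¬ Above p l ∧ χ l).card
  · obtain ⟨x, hx, y, hy, hxy⟩ := Finset.one_lt_card.1 hB1
    rw [Finset.mem_filter] at hx hy
    have hxB : Below p x := by
      rcases hside x hx.1 with h | h
      · exact absurd h hx.2.1
      · exact h
    have hyB : Below p y := by
      rcases hside y hy.1 with h | h
      · exact absurd h hy.2.1
      · exact h
    have hg : ∃ g ∈ G, Below p g ∧ ¬ χ g := by
      by_contra hng
      push_neg at hng
      obtain ⟨c, hc, hχc⟩ := hmix2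
      have hcA : Above p c := by
        rcases hside c hc with h | h
        · exact h
        · exact absurd (hng c hc h) (by simpa using hχc)
      have h1 := hsep c hc x hx.1 hcA hxB
      have h2 := (hθ x hx.1).1 hx.2.2
      have h3 := (hθ c hc).2 hχc
      linarith
    obtain ⟨g, hgG, hgB, hχg⟩ := hg
    rcases lt_trichotomy x.1 y.1 with hlt | heq | hgt
    · exact killB x hx.1 y hy.1 g hgG hxB hyB hgB hlt
        (iff_of_true hx.2.2 hy.2.2) hy.2.2 hχg
    · exact absurd heq (hslopes x hx.1 y hy.1 hxy)
    · exact killB y hy.1 x hx.1 g hgG hyB hxB hgB hgt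
        (iff_of_true hy.2.2 hx.2.2) hx.2.2 hχg
  by_cases hB2 : 2 ≤ (G.filter fun l => ¬ Above p l ∧ ¬ χ l).card
  · obtain ⟨x, hx, y, hy, hxy⟩ := Finset.one_lt_card.1 hB2
    rw [Finset.mem_filter] at hx hy
    have hxB : Below p x := by
      rcases hside x hx.1 with h | h
      · exact absurd h hx.2.1
      · exact h
    have hyB : Below p y := by
      rcases hside y hy.1 with h | h
      · exact absurd h hy.2.1
      · exact h
    have hg : ∃ g ∈ G, Above p g ∧ χ g := by
      by_contra hng
      push_neg at hng
      obtain ⟨c, hc, hχc⟩ := hmix1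
      have hcB : Below p c := by
        rcases hside c hc with h | h
        · exact absurd hχc (hng c hc h)
        · exact h
      obtain ⟨la, hla, hlaA⟩ := hApos
      have hχla : ¬ χ la := hng la hla hlaA
      have h1 := hsep la hla c hc hlaA hcB
      have h2 := (hθ c hc).1 hχc
      have h3 := (hθ la hla).2 hχla
      linarith
    obtain ⟨g, hgG, hgA, hχg⟩ := hg
    rcases lt_trichotomy x.1 y.1 with hlt | heq | hgt
    · exact killB2 x hx.1 y hy.1 g hgG hxB hyB hgA hlt
        (iff_of_false hx.2.2 hy.2.2) hy.2.2 hχg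
    · exact absurd heq (hslopes x hx.1 y hy.1 hxy)
    · exact killB2 y hy.1 x hx.1 g hgG hyB hxB hgA hgt
        (iff_of_false hy.2.2 hx.2.2) hx.2.2 hχg
  -- all four classes have exactly one element
  · have e1 : (G.filter fun l => Above p l ∧ ¬ χ l).Nonempty := by
      rw [← Finset.card_pos]
      omega
    have e2 : (G.filter fun l => ¬ Above p l ∧ χ l).Nonempty := by
      rw [← Finset.card_pos]
      omega
    obtain ⟨a2, ha2⟩ := e1
    obtain ⟨b1, hb1⟩ := e2
    rw [Finset.mem_filter] at ha2 hb1
    have hb1B : Below p b1 := by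
      rcases hside b1 hb1.1 with h | h
      · exact absurd h hb1.2.1
      · exact h
    have h1 := hsep a2 ha2.1 b1 hb1.1 ha2.2.1 hb1B
    have h2 := (hθ b1 hb1.1).1 hb1.2.2
    have h3 := (hθ a2 ha2.1).2 ha2.2.2
    linarith

end CellKill
-- PART F : the recursive construction
section Construction

def Std (F : Finset (ℝ × ℝ)) : Prop :=
  (∀ l ∈ F, 0 < l.1 ∧ l.1 < 1 ∧ 0 < l.2 ∧ l.2 < 1) ∧
  (∀ l₁ ∈ F, ∀ l₂ ∈ F, l₁ ≠ l₂ → -1 < (interPt l₁ l₂).1 ∧ (interPt l₁ l₂).1 < 0)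

def Good (k l : ℕ) (F : Finset (ℝ × ℝ)) : Prop :=
  GenPos F ∧ F.card = Nat.choose (k + l - 2) (k - 1) ∧ ¬ HasCup (k + 1) F ∧
    ¬ HasCap (l + 1) F ∧ NoURCell F ∧ Std F

lemma not_hasCup_singleton {F : Finset (ℝ × ℝ)} (hF : F.card ≤ 1) {n : ℕ} (hn : 2 ≤ n) :
    ¬ HasCup n F := by
  rintro ⟨a, hmem, hs, -⟩
  set i0 : Fin n := ⟨0, by omega⟩ with hi0
  set i1 : Fin n := ⟨1, by omega⟩ with hi1
  have h01 : a i0 = a i1 := Finset.card_le_one.1 hF _ (hmem _) _ (hmem _)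
  have hlt := hs (show i0 < i1 from by rw [hi0, hi1]; exact Fin.mk_lt_mk.2 (by omega))
  have hlt' : (a i0).1 < (a i1).1 := hlt
  rw [h01] at hlt'
  exact lt_irrefl _ hlt'

lemma not_hasCap_singleton {F : Finset (ℝ × ℝ)} (hF : F.card ≤ 1) {n : ℕ} (hn : 2 ≤ n) :
    ¬ HasCap n F := by
  rintro ⟨a, hmem, hs, -⟩
  set i0 : Fin n := ⟨0, by omega⟩ with hi0
  set i1 : Fin n := ⟨1, by omega⟩ with hi1
  have h01 : a i0 = a i1 := Finset.card_le_one.1 hF _ (hmem _) _ (hmem _)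
  have hlt := hs (show i0 < i1 from by rw [hi0, hi1]; exact Fin.mk_lt_mk.2 (by omega))
  have hlt' : (a i0).1 < (a i1).1 := hlt
  rw [h01] at hlt'
  exact lt_irrefl _ hlt'

lemma good_base (k l : ℕ) (hk : 1 ≤ k) (hl : 1 ≤ l) (hkl : k = 1 ∨ l = 1) :
    ∃ F, Good k l F := by
  refine ⟨{((1:ℝ)/2, (1:ℝ)/2)}, ⟨?_, ?_⟩, ?_, ?_, ?_, ?_, ?_, ?_⟩
  · rintro l₁ hl₁ l₂ hl₂ hne
    rw [Finset.mem_singleton] at hl₁ hl₂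
    exact absurd (hl₁.trans hl₂.symm) hne
  · rintro l₁ hl₁ l₂ hl₂ l₃ hl₃ h12 _ _
    rw [Finset.mem_singleton] at hl₁ hl₂
    exact absurd (hl₁.trans hl₂.symm) h12
  · rw [Finset.card_singleton]
    rcases hkl with h | h
    · subst h; simp
    · subst h
      have : k + 1 - 2 = k - 1 := by omega
      rw [this, Nat.choose_self]
  · exact not_hasCup_singleton (n := k + 1) (by rw [Finset.card_singleton]) (by omega)
  · exact not_hasCap_singleton (n := l + 1) (by rw [Finset.card_singleton]) (by omega)
  · rintro ⟨G, hG, hG4, -⟩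
    have := Finset.card_le_card hG
    rw [hG4, Finset.card_singleton] at this
    omega
  · intro m hm
    rw [Finset.mem_singleton] at hm
    subst hm
    norm_num
  · intro l₁ hl₁ l₂ hl₂ hne
    rw [Finset.mem_singleton] at hl₁ hl₂
    exact absurd (hl₁.trans hl₂.symm) hne

set_option maxHeartbeats 1000000 in
lemma good_combine (a b : ℕ) (F1 F2 : Finset (ℝ × ℝ))
    (h1 : Good (a + 1) (b + 2) F1) (h2 : Good (a + 2) (b + 1) F2) :
    ∃ F, Good (a + 2) (b + 2) F := by
  classical
  obtain ⟨hgp1, hcard1, hcup1, hcap1, hur1, hstd1⟩ := h1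
  obtain ⟨hgp2, hcard2, hcup2, hcap2, hur2, hstd2⟩ := h2
  set t1 : (ℝ × ℝ) → (ℝ × ℝ) := tmap (1/10) (-9/10) (1/80) (11/80) (1/1000) with ht1
  set t2 : (ℝ × ℝ) → (ℝ × ℝ) := tmap (1/10) (-9/10) (1/16) (-1/16) (1/1000) with ht2
  have hlam : (0:ℝ) < 1/10 := by norm_num
  have hd : (0:ℝ) < 1/1000 := by norm_num
  have hlam' : (1/10 : ℝ) ≠ 0 := by norm_num
  have hd' : (1/1000 : ℝ) ≠ 0 := by norm_num
  set C1 := F1.image t1 with hC1def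
  set C2 := F2.image t2 with hC2def
  set F := C1 ∪ C2 with hFdef
  -- coordinate ranges
  have hR1 : ∀ m ∈ C1, 1/8 < m.1 ∧ m.1 < 27/200 ∧ 1/4 < m.2 ∧ m.2 < 13/50 := by
    intro m hm
    obtain ⟨l, hl, rfl⟩ := Finset.mem_image.1 hm
    obtain ⟨hs1, hs2, hs3, hs4⟩ := hstd1.1 l hl
    have e1 : (t1 l).1 = 1/8 + l.1/100 := by
      rw [ht1, tmap_fst]; field_simp; ring
    have e2 : (t1 l).2 = 1/4 + 9*l.1/1000 + l.2/1000 := by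
      rw [ht1]
      show (11/80 + (1/1000) * l.2 - (-9/10) * ((1/80 + (1/1000) * l.1)/(1/10))) = _
      field_simp
      ring
    rw [e1, e2]
    refine ⟨by linarith, by linarith, by linarith, by linarith⟩
  have hR2 : ∀ m ∈ C2, 5/8 < m.1 ∧ m.1 < 127/200 ∧ 1/2 < m.2 ∧ m.2 < 51/100 := by
    intro m hm
    obtain ⟨l, hl, rfl⟩ := Finset.mem_image.1 hm
    obtain ⟨hs1, hs2, hs3, hs4⟩ := hstd2.1 l hl
    have e1 : (t2 l).1 = 5/8 + l.1/100 := by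
      rw [ht2, tmap_fst]; field_simp; ring
    have e2 : (t2 l).2 = 1/2 + 9*l.1/1000 + l.2/1000 := by
      rw [ht2]
      show (-1/16 + (1/1000) * l.2 - (-9/10) * ((1/16 + (1/1000) * l.1)/(1/10))) = _
      field_simp
      ring
    rw [e1, e2]
    refine ⟨by linarith, by linarith, by linarith, by linarith⟩
  -- intra-cluster intersections
  have hI1 : ∀ m₁ ∈ C1, ∀ m₂ ∈ C1, m₁ ≠ m₂ →
      -1 < (interPt m₁ m₂).1 ∧ (interPt m₁ m₂).1 < -9/10 := by
    intro m₁ hm₁ m₂ hm₂ hne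
    obtain ⟨l₁, hl₁, rfl⟩ := Finset.mem_image.1 hm₁
    obtain ⟨l₂, hl₂, rfl⟩ := Finset.mem_image.1 hm₂
    have hlne : l₁ ≠ l₂ := fun he => hne (by rw [he])
    have hsne : l₁.1 ≠ l₂.1 := hgp1.1 l₁ hl₁ l₂ hl₂ hlne
    obtain ⟨hx1, hx2⟩ := hstd1.2 l₁ hl₁ l₂ hl₂ hlne
    rw [ht1, interPt_tmap hlam' hd' hsne]
    show -1 < (1/10) * (interPt l₁ l₂).1 + (-9/10) ∧ (1/10) * (interPt l₁ l₂).1 + (-9/10) < -9/10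
    constructor <;> linarith
  have hI2 : ∀ m₁ ∈ C2, ∀ m₂ ∈ C2, m₁ ≠ m₂ →
      -1 < (interPt m₁ m₂).1 ∧ (interPt m₁ m₂).1 < -9/10 := by
    intro m₁ hm₁ m₂ hm₂ hne
    obtain ⟨l₁, hl₁, rfl⟩ := Finset.mem_image.1 hm₁
    obtain ⟨l₂, hl₂, rfl⟩ := Finset.mem_image.1 hm₂
    have hlne : l₁ ≠ l₂ := fun he => hne (by rw [he])
    have hsne : l₁.1 ≠ l₂.1 := hgp2.1 l₁ hl₁ l₂ hl₂ hlne
    obtain ⟨hx1, hx2⟩ := hstd2.2 l₁ hl₁ l₂ hl₂ hlne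
    rw [ht2, interPt_tmap hlam' hd' hsne]
    show -1 < (1/10) * (interPt l₁ l₂).1 + (-9/10) ∧ (1/10) * (interPt l₁ l₂).1 + (-9/10) < -9/10
    constructor <;> linarith
  -- cross intersections
  have hX : ∀ m₁ ∈ C1, ∀ m₂ ∈ C2,
      -7/10 < (interPt m₁ m₂).1 ∧ (interPt m₁ m₂).1 < 0 := by
    intro m₁ hm₁ m₂ hm₂
    obtain ⟨ha1, ha2, ha3, ha4⟩ := hR1 m₁ hm₁
    obtain ⟨hb1, hb2, hb3, hb4⟩ := hR2 m₂ hm₂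
    rw [interPt_fst]
    have hnum : 6/25 < m₂.2 - m₁.2 ∧ m₂.2 - m₁.2 < 13/50 := by constructor <;> linarith
    have hden : m₁.1 - m₂.1 < -49/100 := by linarith
    have hden0 : m₁.1 - m₂.1 < 0 := by linarith
    constructor
    · rw [lt_div_iff_of_neg hden0]
      nlinarith [hnum.1, hden]
    · exact div_neg_of_pos_of_neg (by linarith) hden0
  have hsep12 : ∀ m₁ ∈ C1, ∀ m₂ ∈ C2, m₁.1 < 1/2 ∧ 1/2 < m₂.1 := by
    intro m₁ hm₁ m₂ hm₂
    obtain ⟨ha1, ha2, -, -⟩ := hR1 m₁ hm₁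
    obtain ⟨hb1, -, -, -⟩ := hR2 m₂ hm₂
    constructor <;> linarith
  have hdisj : Disjoint C1 C2 := by
    rw [Finset.disjoint_left]
    intro m hm1 hm2
    obtain ⟨-, h2', -, -⟩ := hR1 m hm1
    obtain ⟨h1', -, -, -⟩ := hR2 m hm2
    linarith
  have hGP1 : GenPos C1 := by rw [hC1def, ht1]; exact genPos_image hlam hd hgp1
  have hGP2 : GenPos C2 := by rw [hC2def, ht2]; exact genPos_image hlam hd hgp2
  -- general position of the union
  have hgpF : GenPos F := by
    constructor
    · intro l₁ hl₁ l₂ hl₂ hne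
      rcases Finset.mem_union.1 hl₁ with h₁ | h₁ <;> rcases Finset.mem_union.1 hl₂ with h₂ | h₂
      · exact hGP1.1 l₁ h₁ l₂ h₂ hne
      · obtain ⟨hs, hs2⟩ := hsep12 l₁ h₁ l₂ h₂
        intro hc; rw [hc] at hs; linarith
      · obtain ⟨hs, hs2⟩ := hsep12 l₂ h₂ l₁ h₁
        intro hc; rw [hc] at hs2; linarith
      · exact hGP2.1 l₁ h₁ l₂ h₂ hne
    · have hmix3 : ∀ u v w : ℝ × ℝ, u ∈ C1 → v ∈ C1 → w ∈ C2 → u ≠ v →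
          ¬ ∃ q, q ∈ lineSet u ∧ q ∈ lineSet v ∧ q ∈ lineSet w := by
        rintro u v w hu hv hw huv ⟨q, hq1, hq2, hq3⟩
        have hsne : u.1 ≠ v.1 := hGP1.1 u hu v hv huv
        have hsuw : u.1 ≠ w.1 := by
          obtain ⟨x1, x2⟩ := hsep12 u hu w hw
          linarith
        have he1 : q = interPt u v := eq_interPt hsne hq1 hq2
        have he2 : q = interPt u w := eq_interPt hsuw hq1 hq3
        have b1 := (hI1 u hu v hv huv).2
        have b2 := (hX u hu w hw).1
        rw [← he1] at b1
        rw [← he2] at b2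
        linarith
      have hmix3' : ∀ u v w : ℝ × ℝ, u ∈ C2 → v ∈ C2 → w ∈ C1 → u ≠ v →
          ¬ ∃ q, q ∈ lineSet u ∧ q ∈ lineSet v ∧ q ∈ lineSet w := by
        rintro u v w hu hv hw huv ⟨q, hq1, hq2, hq3⟩
        have hsne : u.1 ≠ v.1 := hGP2.1 u hu v hv huv
        have hswu : w.1 ≠ u.1 := by
          obtain ⟨x1, x2⟩ := hsep12 w hw u hu
          linarith
        have he1 : q = interPt u v := eq_interPt hsne hq1 hq2
        have he2 : q = interPt w u := eq_interPt hswu hq3 hq1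
        have b1 := (hI2 u hu v hv huv).2
        have b2 := (hX w hw u hu).1
        rw [← he1] at b1
        rw [← he2] at b2
        linarith
      intro l₁ hl₁ l₂ hl₂ l₃ hl₃ h12 h13 h23
      rcases Finset.mem_union.1 hl₁ with h₁ | h₁ <;>
        rcases Finset.mem_union.1 hl₂ with h₂ | h₂ <;>
        rcases Finset.mem_union.1 hl₃ with h₃ | h₃
      · exact hGP1.2 l₁ h₁ l₂ h₂ l₃ h₃ h12 h13 h23
      · exact hmix3 l₁ l₂ l₃ h₁ h₂ h₃ h12
      · rintro ⟨q, hq1, hq2, hq3⟩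
        exact hmix3 l₁ l₃ l₂ h₁ h₃ h₂ h13 ⟨q, hq1, hq3, hq2⟩
      · rintro ⟨q, hq1, hq2, hq3⟩
        exact hmix3' l₂ l₃ l₁ h₂ h₃ h₁ h23 ⟨q, hq2, hq3, hq1⟩
      · rintro ⟨q, hq1, hq2, hq3⟩
        exact hmix3 l₂ l₃ l₁ h₂ h₃ h₁ h23 ⟨q, hq2, hq3, hq1⟩
      · rintro ⟨q, hq1, hq2, hq3⟩
        exact hmix3' l₁ l₃ l₂ h₁ h₃ h₂ h13 ⟨q, hq1, hq3, hq2⟩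
      · rintro ⟨q, hq1, hq2, hq3⟩
        exact hmix3' l₁ l₂ l₃ h₁ h₂ h₃ h12 ⟨q, hq1, hq2, hq3⟩
      · exact hGP2.2 l₁ h₁ l₂ h₂ l₃ h₃ h12 h13 h23
  refine ⟨F, hgpF, ?_, ?_, ?_, ?_, ?_⟩
  -- cardinality
  · rw [hFdef, Finset.card_union_of_disjoint hdisj, hC1def, hC2def, ht1, ht2,
      Finset.card_image_of_injective _ (tmap_injective hlam' hd'),
      Finset.card_image_of_injective _ (tmap_injective hlam' hd'), hcard1, hcard2]
    have e1 : a + 1 + (b + 2) - 2 = a + b + 1 := by omega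
    have e2 : a + 1 - 1 = a := by omega
    have e3 : a + 2 + (b + 1) - 2 = a + b + 1 := by omega
    have e4 : a + 2 - 1 = a + 1 := by omega
    have e5 : a + 2 + (b + 2) - 2 = a + b + 2 := by omega
    rw [e1, e2, e3, e4, e5]
    have hps := Nat.choose_succ_succ (a + b + 1) a
    simp only [Nat.succ_eq_add_one] at hps
    rw [show a + b + 1 + 1 = a + b + 2 by omega] at hps
    omega
  -- no (a+3)-cup
  · rintro ⟨c, hmem, hcup⟩
    set T := Finset.univ.filter (fun i : Fin (a + 2 + 1) => c i ∈ C2) with hT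
    by_cases hTe : T.Nonempty
    · set t := T.min' hTe with htdef
      set n := (t : ℕ) with hn
      have htC2 : c t ∈ C2 := (Finset.mem_filter.1 (T.min'_mem hTe)).2
      have hlow : ∀ i : Fin (a + 2 + 1), (i : ℕ) < n → c i ∈ C1 := by
        intro i hi
        rcases Finset.mem_union.1 (hmem i) with h | h
        · exact h
        · have : i ∈ T := Finset.mem_filter.2 ⟨Finset.mem_univ _, h⟩
          have := T.min'_le i this
          rw [← htdef] at this
          have : (t : ℕ) ≤ (i : ℕ) := this
          omega
      have hhigh : ∀ i : Fin (a + 2 + 1), n < (i : ℕ) → c i ∈ C2 := by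
        intro i hi
        rcases Finset.mem_union.1 (hmem i) with h | h
        · exfalso
          have hlt : t < i := by rw [Fin.lt_def]; omega
          have hs := hcup.1 hlt
          obtain ⟨hb1, -, -, -⟩ := hR2 (c t) htC2
          obtain ⟨-, hb2, -, -⟩ := hR1 (c i) h
          simp only at hs
          linarith
        · exact h
      have hcases : n = 0 ∨ (1 ≤ n ∧ n ≤ a + 1) ∨ n = a + 2 := by
        have := t.isLt
        omega
      rcases hcases with h0 | hmid | hlast
      · -- everything is in C2
        have hall : ∀ i, c i ∈ C2 := by
          intro i
          rcases Nat.eq_zero_or_pos (i : ℕ) with hz | hpos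
          · have : i = t := Fin.ext (by omega)
            rw [this]; exact htC2
          · exact hhigh i (by omega)
        apply hcup2
        apply hasCup_of_image hlam hd (n := a + 2 + 1)
        rw [← ht2, ← hC2def]
        exact ⟨c, hall, hcup⟩
      · -- mixed triple around position n
        obtain ⟨hm1, hm2⟩ := hmid
        have h2' : n + 1 < a + 2 + 1 := by omega
        have hcond := hcup.2 ⟨n, by omega⟩ (by show 0 < n; omega) h2'
        have hp : c ⟨n - 1, by omega⟩ ∈ C1 := hlow _ (by show n - 1 < n; omega)
        have hqeq : (⟨n, by omega⟩ : Fin (a + 2 + 1)) = t := Fin.ext (by show n = n; rfl)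
        have hr : c ⟨n + 1, h2'⟩ ∈ C2 := hhigh _ (by show n < n + 1; omega)
        refine notBelow_mid (mth := -7/10) (p := c ⟨n - 1, by omega⟩)
          (q := c ⟨n, by omega⟩) (r := c ⟨n + 1, h2'⟩) ?_ ?_ ?_ ?_ hcond
        · show (c ⟨n, by omega⟩).1 < (c ⟨n + 1, h2'⟩).1
          exact hcup.1 (by rw [Fin.lt_def]; show n < n + 1; omega)
        · obtain ⟨-, hb2, -, -⟩ := hR1 (c ⟨n - 1, by omega⟩) hp
          obtain ⟨hb1, -, -, -⟩ := hR2 (c ⟨n + 1, h2'⟩) hr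
          intro hc'; rw [hc'] at hb2; linarith
        · have hq : c ⟨n, by omega⟩ ∈ C2 := by rw [hqeq]; exact htC2
          have hne : c ⟨n, by omega⟩ ≠ c ⟨n + 1, h2'⟩ := by
            intro he
            have hs := hcup.1 (show (⟨n, by omega⟩ : Fin (a+2+1)) < ⟨n + 1, h2'⟩ by
              rw [Fin.lt_def]; show n < n + 1; omega)
            simp only at hs
            rw [he] at hs
            exact lt_irrefl _ hs
          have := (hI2 _ hq _ hr hne).2
          linarith
        · exact (hX _ hp _ hr).1
      · -- first a+2 lines are in C1
        have hall : ∀ j : Fin (a + 2), c ⟨0 + (j : ℕ), by omega⟩ ∈ C1 := by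
          intro j
          exact hlow _ (by show 0 + (j : ℕ) < n; omega)
        apply hcup1
        apply hasCup_of_image hlam hd (n := a + 2)
        rw [← ht1, ← hC1def]
        exact ⟨_, hall, isCup_sub hcup 0 (a + 2) (by omega)⟩
    · -- everything is in C1
      have hall : ∀ j : Fin (a + 2), c ⟨0 + (j : ℕ), by omega⟩ ∈ C1 := by
        intro j
        rcases Finset.mem_union.1 (hmem _) with h | h
        · exact h
        · exact absurd ⟨_, Finset.mem_filter.2 ⟨Finset.mem_univ _, h⟩⟩ hTe
      apply hcup1
      apply hasCup_of_image hlam hd (n := a + 2)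
      rw [← ht1, ← hC1def]
      exact ⟨_, hall, isCup_sub hcup 0 (a + 2) (by omega)⟩
  -- no (b+3)-cap
  · rintro ⟨c, hmem, hcap⟩
    set T := Finset.univ.filter (fun i : Fin (b + 2 + 1) => c i ∈ C2) with hT
    by_cases hTe : T.Nonempty
    · set t := T.min' hTe with htdef
      set n := (t : ℕ) with hn
      have htC2 : c t ∈ C2 := (Finset.mem_filter.1 (T.min'_mem hTe)).2
      have hlow : ∀ i : Fin (b + 2 + 1), (i : ℕ) < n → c i ∈ C1 := by
        intro i hi
        rcases Finset.mem_union.1 (hmem i) with h | h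
        · exact h
        · have : i ∈ T := Finset.mem_filter.2 ⟨Finset.mem_univ _, h⟩
          have := T.min'_le i this
          rw [← htdef] at this
          have : (t : ℕ) ≤ (i : ℕ) := this
          omega
      have hhigh : ∀ i : Fin (b + 2 + 1), n < (i : ℕ) → c i ∈ C2 := by
        intro i hi
        rcases Finset.mem_union.1 (hmem i) with h | h
        · exfalso
          have hlt : t < i := by rw [Fin.lt_def]; omega
          have hs := hcap.1 hlt
          obtain ⟨hb1, -, -, -⟩ := hR2 (c t) htC2
          obtain ⟨-, hb2, -, -⟩ := hR1 (c i) h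
          simp only at hs
          linarith
        · exact h
      have hcases : n ≤ 1 ∨ 2 ≤ n := by omega
      rcases hcases with hsmall | hbig
      · -- positions 1..b+2 are all in C2
        have hall : ∀ j : Fin (b + 2), c ⟨1 + (j : ℕ), by omega⟩ ∈ C2 := by
          intro j
          rcases Nat.lt_or_ge n (1 + (j : ℕ)) with hlt | hge
          · exact hhigh _ hlt
          · have : (⟨1 + (j : ℕ), by omega⟩ : Fin (b + 2 + 1)) = t :=
              Fin.ext (by show 1 + (j : ℕ) = n; omega)
            rw [this]; exact htC2
        apply hcap2
        apply hasCap_of_image hlam hd (n := b + 2)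
        rw [← ht2, ← hC2def]
        exact ⟨_, hall, isCap_sub hcap 1 (b + 2) (by omega)⟩
      · -- mixed triple ending at position n
        have hnlt : n < b + 2 + 1 := t.isLt
        have h2' : (n - 1) + 1 < b + 2 + 1 := by omega
        have hcond := hcap.2 ⟨n - 1, by omega⟩ (by show 0 < n - 1; omega) h2'
        have hp : c ⟨n - 1 - 1, by omega⟩ ∈ C1 := hlow _ (by show n - 1 - 1 < n; omega)
        have hq : c ⟨n - 1, by omega⟩ ∈ C1 := hlow _ (by show n - 1 < n; omega)
        have hreq : (⟨(n - 1) + 1, h2'⟩ : Fin (b + 2 + 1)) = t :=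
          Fin.ext (by show (n - 1) + 1 = n; omega)
        have hr : c ⟨(n - 1) + 1, h2'⟩ ∈ C2 := by rw [hreq]; exact htC2
        refine notAbove_mid (mth := -7/10) ?_ ?_ ?_ hcond
        · show (c ⟨n - 1 - 1, by omega⟩).1 < (c ⟨n - 1, by omega⟩).1
          exact hcap.1 (by rw [Fin.lt_def]; show n - 1 - 1 < n - 1; omega)
        · have hne : c ⟨n - 1 - 1, by omega⟩ ≠ c ⟨n - 1, by omega⟩ := by
            intro he
            have hs := hcap.1 (show (⟨n - 1 - 1, by omega⟩ : Fin (b+2+1)) < ⟨n - 1, by omega⟩ by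
              rw [Fin.lt_def]; show n - 1 - 1 < n - 1; omega)
            simp only at hs
            rw [he] at hs
            exact lt_irrefl _ hs
          have := (hI1 _ hp _ hq hne).2
          linarith
        · exact (hX _ hp _ hr).1
    · -- everything is in C1
      have hall : ∀ i, c i ∈ C1 := by
        intro i
        rcases Finset.mem_union.1 (hmem i) with h | h
        · exact h
        · exact absurd ⟨_, Finset.mem_filter.2 ⟨Finset.mem_univ _, h⟩⟩ hTe
      apply hcap1
      apply hasCap_of_image hlam hd (n := b + 2 + 1)
      rw [← ht1, ← hC1def]
      exact ⟨c, hall, hcap⟩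
  -- no unbounded-right 4-cell
  · rintro ⟨G, hGF, hG4, P, hNC, hUR⟩
    by_cases hGC1 : G ⊆ C1
    · apply noURCell_image hlam hd hur1
      rw [← ht1, ← hC1def]
      exact ⟨G, hGC1, hG4, P, hNC, hUR⟩
    by_cases hGC2 : G ⊆ C2
    · apply noURCell_image hlam hd hur2
      rw [← ht2, ← hC2def]
      exact ⟨G, hGC2, hG4, P, hNC, hUR⟩
    · -- mixed: kill it
      have hmix1 : ∃ l ∈ G, l ∈ C1 := by
        by_contra hng
        push_neg at hng
        apply hGC2
        intro l hl
        rcases Finset.mem_union.1 (hGF hl) with h | h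
        · exact absurd h (hng l hl)
        · exact h
      have hmix2 : ∃ l ∈ G, l ∉ C1 := by
        by_contra hng
        push_neg at hng
        exact hGC1 (fun l hl => hng l hl)
      have hinC2 : ∀ l ∈ G, l ∉ C1 → l ∈ C2 := by
        intro l hl hn
        rcases Finset.mem_union.1 (hGF hl) with h | h
        · exact absurd h hn
        · exact h
      refine cellKill (χ := fun m => m ∈ C1) (θ := 1/2) (mth := -7/10)
        ?_ ?_ ?_ ?_ hmix1 hmix2 hG4 hNC hUR
      · intro l₁ hl₁ l₂ hl₂ hne
        exact hgpF.1 l₁ (hGF hl₁) l₂ (hGF hl₂) hne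
      · intro l hl
        constructor
        · intro hc
          obtain ⟨-, hb, -, -⟩ := hR1 l hc
          linarith
        · intro hc
          obtain ⟨hb, -, -, -⟩ := hR2 l (hinC2 l hl hc)
          linarith
      · intro l₁ hl₁ l₂ hl₂ hne hiff
        by_cases hc : l₁ ∈ C1
        · have := (hI1 l₁ hc l₂ (hiff.1 hc) hne).2
          linarith
        · have := (hI2 l₁ (hinC2 l₁ hl₁ hc) l₂ (hinC2 l₂ hl₂ (fun hh => hc (hiff.2 hh)))
            hne).2
          linarith
      · intro l₁ hl₁ l₂ hl₂ hχ1 hχ2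
        exact (hX l₁ hχ1 l₂ (hinC2 l₂ hl₂ hχ2)).1
  -- standard position
  · constructor
    · intro l hl
      rcases Finset.mem_union.1 hl with h | h
      · obtain ⟨x1, x2, x3, x4⟩ := hR1 l h
        refine ⟨by linarith, by linarith, by linarith, by linarith⟩
      · obtain ⟨x1, x2, x3, x4⟩ := hR2 l h
        refine ⟨by linarith, by linarith, by linarith, by linarith⟩
    · intro l₁ hl₁ l₂ hl₂ hne
      rcases Finset.mem_union.1 hl₁ with h₁ | h₁ <;> rcases Finset.mem_union.1 hl₂ with h₂ | h₂
      · obtain ⟨x1, x2⟩ := hI1 l₁ h₁ l₂ h₂ hne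
        exact ⟨x1, by linarith⟩
      · obtain ⟨x1, x2⟩ := hX l₁ h₁ l₂ h₂
        exact ⟨by linarith, x2⟩
      · obtain ⟨x1, x2⟩ := hX l₂ h₂ l₁ h₁
        rw [interPt_symm_fst]
        exact ⟨by linarith, x2⟩
      · obtain ⟨x1, x2⟩ := hI2 l₁ h₁ l₂ h₂ hne
        exact ⟨x1, by linarith⟩

lemma good_main : ∀ n k l : ℕ, 1 ≤ k → 1 ≤ l → k + l ≤ n → ∃ F, Good k l F := by
  intro n
  induction n with
  | zero => intro k l hk hl hkl; omega
  | succ n ih =>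
    intro k l hk hl hkl
    rcases Nat.lt_or_ge k 2 with hk2 | hk2
    · exact good_base k l hk hl (Or.inl (by omega))
    rcases Nat.lt_or_ge l 2 with hl2 | hl2
    · exact good_base k l hk hl (Or.inr (by omega))
    obtain ⟨a, rfl⟩ : ∃ a, k = a + 2 := ⟨k - 2, by omega⟩
    obtain ⟨b, rfl⟩ : ∃ b, l = b + 2 := ⟨l - 2, by omega⟩
    obtain ⟨F1, hF1⟩ := ih (a + 1) (b + 2) (by omega) (by omega) (by omega)
    obtain ⟨F2, hF2⟩ := ih (a + 2) (b + 1) (by omega) (by omega) (by omega)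
    exact good_combine a b F1 F2 hF1 hF2

end Construction


/-- For all k, l ≥ 1 there is a family F_{k,l} of C(k+l-2, k-1) lines in general
position with no (k+1)-cup, no (l+1)-cap, and no 4-cell unbounded to the right. -/
theorem stmt13 (k l : ℕ) (hk : 1 ≤ k) (hl : 1 ≤ l) :
    ∃ F : Finset (ℝ × ℝ), GenPos F ∧ F.card = Nat.choose (k + l - 2) (k - 1) ∧
      ¬ HasCup (k + 1) F ∧ ¬ HasCap (l + 1) F ∧
      ¬ ∃ G ⊆ F, G.card = 4 ∧ ∃ P, IsNCell G P ∧ UnboundedRight P := by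
  obtain ⟨F, h1, h2, h3, h4, h5, h6⟩ := good_main (k + l) k l hk hl le_rfl
  exact ⟨F, h1, h2, h3, h4, h5⟩
end

section
/- In a vertical configuration of lines a₁, …, a_N (ordered by slope, with the intersection of a₁ and a_N having strictly the largest y-coordinate among all pairwise intersections), if a₁, a_{i₂}, …, a_{i_{n-1}} form an (n-1)-cup starting with a₁, then a₁, a_{i₂}, …, a_{i_{n-1}}, a_N are n lines in convex position. -/
open Set

/-!
The cell is the region above every line of the cup and below `a_N`. As an intersection of open
half-planes it is convex, and it is a whole connected component of the complement of the lines
since none of them crosses it. Verticality makes every cup line pass below the apex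
`q = a₁ ∩ a_N`, so to the right of `q` the line `a_N` lies above the whole cup and bounds the
cell from above along a ray. From below the cell is bounded by the upper envelope of the cup:
by the cup condition the crossings of consecutive cup lines increase from left to right, all to
the right of `q`, and each cup line forms the envelope between its crossings with its neighbours.
-/

def lineVal (l : ℝ × ℝ) (x : ℝ) : ℝ := l.1 * x + l.2

section TwoLines

variable {l₁ l₂ : ℝ × ℝ} {x : ℝ}

lemma interPt_snd_eq (l₁ l₂ : ℝ × ℝ) : (interPt l₁ l₂).2 = lineVal l₁ (interPt l₁ l₂).1 := rfl

lemma lineVal_sub_lineVal (h : l₁.1 ≠ l₂.1) (x : ℝ) :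
    lineVal l₂ x - lineVal l₁ x = (l₂.1 - l₁.1) * (x - (interPt l₁ l₂).1) := by
  have : l₁.1 - l₂.1 ≠ 0 := sub_ne_zero.mpr h
  simp only [lineVal, interPt]
  field_simp
  ring

lemma lineVal_interPt_fst (h : l₁.1 ≠ l₂.1) :
    lineVal l₂ (interPt l₁ l₂).1 = (interPt l₁ l₂).2 := by
  have := lineVal_sub_lineVal h (interPt l₁ l₂).1
  rw [sub_self, mul_zero, sub_eq_zero] at this
  exact this

lemma lineVal_lt_lineVal_iff (h : l₁.1 < l₂.1) :
    lineVal l₁ x < lineVal l₂ x ↔ (interPt l₁ l₂).1 < x := by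
  rw [← sub_pos, lineVal_sub_lineVal h.ne, mul_pos_iff_of_pos_left (sub_pos.mpr h), sub_pos]

lemma lineVal_le_lineVal_iff (h : l₁.1 < l₂.1) :
    lineVal l₁ x ≤ lineVal l₂ x ↔ (interPt l₁ l₂).1 ≤ x := by
  rw [← sub_nonneg, lineVal_sub_lineVal h.ne, mul_nonneg_iff_of_pos_left (sub_pos.mpr h),
    sub_nonneg]

lemma lineVal_lt_lineVal_iff_lt_interPt (h : l₁.1 < l₂.1) :
    lineVal l₂ x < lineVal l₁ x ↔ x < (interPt l₁ l₂).1 := by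
  rw [← not_le, lineVal_le_lineVal_iff h, not_le]

lemma lineVal_le_lineVal_iff_le_interPt (h : l₁.1 < l₂.1) :
    lineVal l₂ x ≤ lineVal l₁ x ↔ x ≤ (interPt l₁ l₂).1 := by
  rw [← not_lt, lineVal_lt_lineVal_iff h, not_lt]

lemma lineVal_le_lineVal_of_le {x₀ : ℝ} (h : l₁.1 < l₂.1)
    (h₀ : lineVal l₁ x₀ ≤ lineVal l₂ x₀) (hx : x₀ ≤ x) : lineVal l₁ x ≤ lineVal l₂ x :=
  (lineVal_le_lineVal_iff h).mpr (((lineVal_le_lineVal_iff h).mp h₀).trans hx)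

lemma lineVal_lt_lineVal_of_lt {x₀ : ℝ} (h : l₁.1 < l₂.1)
    (h₀ : lineVal l₁ x₀ ≤ lineVal l₂ x₀) (hx : x₀ < x) : lineVal l₁ x < lineVal l₂ x :=
  (lineVal_lt_lineVal_iff h).mpr (((lineVal_le_lineVal_iff h).mp h₀).trans_lt hx)

end TwoLines

/-- Otherwise the affine function `l` would be larger at `q.1` than at its crossings with `l₀`
and `L`, which lie on either side of `q.1`. -/
lemma lineVal_lt_of_interPt_snd_lt {l₀ l L : ℝ × ℝ} (h₀ : l₀.1 < l.1) (hL : l.1 < L.1)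
    (hl₀ : (interPt l₀ l).2 < (interPt l₀ L).2) (hlL : (interPt l L).2 < (interPt l₀ L).2) :
    lineVal l (interPt l₀ L).1 < (interPt l₀ L).2 := by
  set q := interPt l₀ L
  by_contra! hq
  have h₁ : (interPt l₀ l).1 ≤ q.1 := by
    rw [← lineVal_le_lineVal_iff h₀, ← interPt_snd_eq]
    exact hq
  have h₂ : q.1 ≤ (interPt l L).1 := by
    rw [← lineVal_le_lineVal_iff_le_interPt hL, lineVal_interPt_fst (h₀.trans hL).ne]
    exact hq
  rw [← lineVal_interPt_fst h₀.ne] at hl₀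
  rw [interPt_snd_eq] at hlL
  simp only [lineVal] at hl₀ hlL hq
  rcases le_total 0 l.1 with hs | hs <;> nlinarith

lemma le_of_forall_Ico_le_succ {α : Type*} [Preorder α] {f : ℕ → α} {i j : ℕ} (hij : i ≤ j)
    (h : ∀ n, i ≤ n → n < j → f n ≤ f (n + 1)) : f i ≤ f j := by
  induction j, hij using Nat.le_induction with
  | base => exact le_rfl
  | succ n hin ih => exact (ih fun k hik hkn => h k hik (by omega)).trans (h n hin (by omega))

noncomputable def crossing (b : ℕ → ℝ × ℝ) (k : ℕ) : ℝ := (interPt (b k) (b (k + 1))).1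

section Cup

variable {b : ℕ → ℝ × ℝ} {m : ℕ}

lemma crossing_lt_crossing_succ (hs : StrictMonoOn (fun k => (b k).1) (Iio m))
    (hcup : ∀ k, k + 2 < m → Below (interPt (b k) (b (k + 2))) (b (k + 1)))
    {k : ℕ} (hk : k + 2 < m) : crossing b k < crossing b (k + 1) := by
  have slope (i j : ℕ) (hij : i < j) (hj : j ≤ k + 2) : (b i).1 < (b j).1 :=
    hs (show i < m by omega) (show j < m by omega) hij
  set q := interPt (b k) (b (k + 2))
  have hq : lineVal (b k) q.1 < lineVal (b (k + 1)) q.1 := hcup k hk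
  have hq' : lineVal (b (k + 2)) q.1 < lineVal (b (k + 1)) q.1 := by
    rwa [lineVal_interPt_fst (slope k (k + 2) (by omega) le_rfl).ne]
  exact ((lineVal_lt_lineVal_iff (slope k (k + 1) (by omega) (by omega))).mp hq).trans
    ((lineVal_lt_lineVal_iff_lt_interPt (slope (k + 1) (k + 2) (by omega) le_rfl)).mp hq')

lemma crossing_le_crossing (hs : StrictMonoOn (fun k => (b k).1) (Iio m))
    (hcup : ∀ k, k + 2 < m → Below (interPt (b k) (b (k + 2))) (b (k + 1)))
    {i j : ℕ} (hij : i ≤ j) (hj : j + 1 < m) : crossing b i ≤ crossing b j :=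
  le_of_forall_Ico_le_succ hij fun _ _ hn => (crossing_lt_crossing_succ hs hcup (by omega)).le

lemma lineVal_le_of_crossing_le_of_le_crossing (hs : StrictMonoOn (fun k => (b k).1) (Iio m))
    {j k : ℕ} {x : ℝ} (hj : j < m) (hk : k < m) (hlo : ∀ i < k, crossing b i ≤ x)
    (hhi : ∀ i, k ≤ i → i + 1 < m → x ≤ crossing b i) :
    lineVal (b j) x ≤ lineVal (b k) x := by
  have slope (n : ℕ) (hn : n + 1 < m) : (b n).1 < (b (n + 1)).1 :=
    hs (show n < m by omega) hn (Nat.lt_succ_self n)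
  rcases le_total j k with hjk | hkj
  · exact le_of_forall_Ico_le_succ (f := fun n => lineVal (b n) x) hjk fun n _ hn =>
      (lineVal_le_lineVal_iff (slope n (by omega))).mpr (hlo n hn)
  · exact le_of_forall_Ico_le_succ (α := ℝᵒᵈ) (f := fun n => lineVal (b n) x) hkj fun n hkn hn =>
      (lineVal_le_lineVal_iff_le_interPt (slope n (by omega))).mpr (hhi n hkn (by omega))

lemma exists_envelope_interval (hs : StrictMonoOn (fun k => (b k).1) (Iio m))
    (hcup : ∀ k, k + 2 < m → Below (interPt (b k) (b (k + 2))) (b (k + 1)))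
    {x₀ : ℝ} (hx₀ : 1 < m → x₀ < crossing b 0) {k : ℕ} (hk : k < m) :
    ∃ x₁ x₂, x₁ < x₂ ∧ x₀ ≤ x₁ ∧ (∀ i < k, crossing b i ≤ x₁) ∧
      ∀ i, k ≤ i → i + 1 < m → x₂ ≤ crossing b i := by
  cases k with
  | zero =>
    by_cases h : 1 < m
    · exact ⟨x₀, crossing b 0, hx₀ h, le_rfl, by simp,
        fun i _ hi => crossing_le_crossing hs hcup i.zero_le hi⟩
    · exact ⟨x₀, x₀ + 1, by linarith, le_rfl, by simp, fun i _ hi => by omega⟩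
  | succ j =>
    have hx₀j : x₀ ≤ crossing b j :=
      (hx₀ (by omega)).le.trans (crossing_le_crossing hs hcup j.zero_le (by omega))
    have hlo : ∀ i < j + 1, crossing b i ≤ crossing b j :=
      fun i hi => crossing_le_crossing hs hcup (by omega) (by omega)
    by_cases h : j + 2 < m
    · exact ⟨crossing b j, crossing b (j + 1), crossing_lt_crossing_succ hs hcup h, hx₀j, hlo,
        fun i hi hi' => crossing_le_crossing hs hcup hi hi'⟩
    · exact ⟨crossing b j, crossing b j + 1, by linarith, hx₀j, hlo, fun i _ _ => by omega⟩

end Cup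

lemma Finset.image_univ_eq_image_range {α : Type*} [DecidableEq α] {m : ℕ} {f : Fin m → α}
    {b : ℕ → α} (hb : ∀ k (hk : k < m), b k = f ⟨k, hk⟩) :
    Finset.univ.image f = (Finset.range m).image b := by
  ext l
  simp only [Finset.mem_image, Finset.mem_univ, true_and, Finset.mem_range]
  exact ⟨fun ⟨k, hk⟩ => ⟨k, k.2, (hb k k.2).trans hk⟩, fun ⟨k, hk, h⟩ => ⟨⟨k, hk⟩, hb k hk ▸ h⟩⟩

section IsCup

variable {k : ℕ} {a : Fin k → ℝ × ℝ} {b : ℕ → ℝ × ℝ}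

lemma IsCup.strictMonoOn_of_eq (h : IsCup a) (hb : ∀ i (hi : i < k), b i = a ⟨i, hi⟩) :
    StrictMonoOn (fun i => (b i).1) (Iio k) := by
  intro i hi j hj hij
  simp only [hb i hi, hb j hj]
  exact h.1 (Fin.mk_lt_mk.mpr hij)

lemma IsCup.below_of_eq (h : IsCup a) (hb : ∀ i (hi : i < k), b i = a ⟨i, hi⟩) (i : ℕ)
    (hi : i + 2 < k) : Below (interPt (b i) (b (i + 2))) (b (i + 1)) := by
  rw [hb i (by omega), hb (i + 2) hi, hb (i + 1) (by omega)]
  exact h.2 ⟨i + 1, by omega⟩ (Nat.succ_pos i) hi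

end IsCup

def heightAbove (l : ℝ × ℝ) (p : ℝ × ℝ) : ℝ := p.2 - lineVal l p.1

lemma heightAbove_add_smul (l p q : ℝ × ℝ) {s t : ℝ} (hst : s + t = 1) :
    heightAbove l (s • p + t • q) = s * heightAbove l p + t * heightAbove l q := by
  simp only [heightAbove, lineVal, Prod.fst_add, Prod.snd_add, Prod.smul_fst, Prod.smul_snd,
    smul_eq_mul]
  linear_combination l.2 * hst

lemma continuous_heightAbove (l : ℝ × ℝ) : Continuous (heightAbove l) := by
  unfold heightAbove lineVal
  fun_prop

def sideCell (F : Finset (ℝ × ℝ)) (ε : ℝ × ℝ → ℝ) : Set (ℝ × ℝ) :=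
  {p | ∀ l ∈ F, 0 < ε l * heightAbove l p}

section SideCell

variable {F : Finset (ℝ × ℝ)} {ε : ℝ × ℝ → ℝ}

lemma openSegment_subset_sideCell {p z : ℝ × ℝ} (hp : p ∈ sideCell F ε)
    (hz : ∀ l ∈ F, 0 ≤ ε l * heightAbove l z) : openSegment ℝ p z ⊆ sideCell F ε := by
  rw [openSegment_subset_iff]
  intro s t hs ht hst l hl
  have := hp l hl
  have := hz l hl
  rw [heightAbove_add_smul l p z hst]
  nlinarith

lemma convex_sideCell : Convex ℝ (sideCell F ε) :=
  convex_iff_openSegment_subset.mpr fun _ hp _ hq =>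
    openSegment_subset_sideCell hp fun l hl => (hq l hl).le

lemma sideCell_subset_compl_linesUnion : sideCell F ε ⊆ (linesUnion F)ᶜ := by
  intro p hp hpF
  simp only [linesUnion, mem_iUnion] at hpF
  obtain ⟨l, hl, hpl⟩ := hpF
  have := hp l hl
  rw [heightAbove, show p.2 = lineVal l p.1 from hpl, sub_self, mul_zero] at this
  exact lt_irrefl 0 this

lemma IsPreconnected.pos_of_pos {X : Type*} [TopologicalSpace X] {C : Set X}
    (hC : IsPreconnected C) {g : X → ℝ} (hg : Continuous g) (hg0 : ∀ p ∈ C, g p ≠ 0)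
    {p₀ p : X} (hp₀ : p₀ ∈ C) (hp : p ∈ C) (hpos : 0 < g p₀) : 0 < g p := by
  by_contra! hle
  obtain ⟨z, hz, hz0⟩ := hC.intermediate_value hp hp₀ hg.continuousOn ⟨hle, hpos.le⟩
  exact hg0 z hz hz0

/-- Along the connected component no `heightAbove l` with `l ∈ F` vanishes, so none changes
sign. -/
lemma isCellOf_sideCell (hne : (sideCell F ε).Nonempty) : IsCellOf F (sideCell F ε) := by
  obtain ⟨p₀, hp₀⟩ := hne
  set C := connectedComponentIn (linesUnion F)ᶜ p₀
  refine ⟨p₀, sideCell_subset_compl_linesUnion hp₀, subset_antisymm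
    (convex_sideCell.isPreconnected.subset_connectedComponentIn hp₀
      sideCell_subset_compl_linesUnion) fun p hp l hl => ?_⟩
  have hε : ε l ≠ 0 := fun h => by simpa [h] using hp₀ l hl
  have hne : ∀ z ∈ C, ε l * heightAbove l z ≠ 0 := by
    intro z hz hz0
    refine connectedComponentIn_subset _ _ hz ?_
    simp only [linesUnion, mem_iUnion]
    exact ⟨l, hl, sub_eq_zero.mp ((mul_eq_zero.mp hz0).resolve_left hε)⟩
  exact isPreconnected_connectedComponentIn.pos_of_pos
    (continuous_const.mul (continuous_heightAbove l)) hne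
    (mem_connectedComponentIn (sideCell_subset_compl_linesUnion hp₀)) hp (hp₀ l hl)

lemma mem_closure_sideCell (hne : (sideCell F ε).Nonempty) {z : ℝ × ℝ}
    (hz : ∀ l ∈ F, 0 ≤ ε l * heightAbove l z) : z ∈ closure (sideCell F ε) := by
  obtain ⟨p₀, hp₀⟩ := hne
  exact closure_mono (openSegment_subset_sideCell hp₀ hz)
    (segment_subset_closure_openSegment (right_mem_segment ℝ p₀ z))

lemma contributes_sideCell (hne : (sideCell F ε).Nonempty) {l : ℝ × ℝ} {x₁ x₂ : ℝ}
    (hx : x₁ ≠ x₂) (h₁ : ∀ l' ∈ F, 0 ≤ ε l' * heightAbove l' (x₁, lineVal l x₁))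
    (h₂ : ∀ l' ∈ F, 0 ≤ ε l' * heightAbove l' (x₂, lineVal l x₂)) :
    Contributes l (sideCell F ε) :=
  ⟨_, _, fun h => hx (congrArg Prod.fst h), ⟨mem_closure_sideCell hne h₁, rfl⟩,
    ⟨mem_closure_sideCell hne h₂, rfl⟩⟩

end SideCell

theorem convexPos_cup_union {b : ℕ → ℝ × ℝ} {m : ℕ} {L : ℝ × ℝ} {x₀ : ℝ}
    (hs : StrictMonoOn (fun k => (b k).1) (Iio m))
    (hcup : ∀ k, k + 2 < m → Below (interPt (b k) (b (k + 2))) (b (k + 1)))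
    (hL : ∀ k < m, (b k).1 < L.1) (hx₀L : ∀ k < m, lineVal (b k) x₀ ≤ lineVal L x₀)
    (hx₀ : 1 < m → x₀ < crossing b 0) :
    ConvexPos ((Finset.range m).image b ∪ {L}) := by
  set F := (Finset.range m).image b ∪ {L}
  set ε : ℝ × ℝ → ℝ := fun l => if l = L then -1 else 1
  have forall_mem_F (g : ℝ × ℝ → Prop) : (∀ l ∈ F, g l) ↔ (∀ k < m, g (b k)) ∧ g L := by
    simpa [F, or_imp, forall_and] using and_comm
  have hεb : ∀ k < m, ε (b k) = 1 := fun k hk => if_neg fun h => (hL k hk).ne (congrArg _ h)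
  have hεL : ε L = -1 := if_pos rfl
  have mem_closure_iff (x y : ℝ) : (∀ l ∈ F, 0 ≤ ε l * heightAbove l (x, y)) ↔
      (∀ k < m, lineVal (b k) x ≤ y) ∧ y ≤ lineVal L x := by
    rw [forall_mem_F]
    refine and_congr (forall₂_congr fun k hk => ?_) ?_
    · rw [hεb k hk, one_mul, heightAbove, sub_nonneg]
    · rw [hεL, heightAbove, neg_one_mul, neg_nonneg, sub_nonpos]
  have below_L (k : ℕ) (hk : k < m) {x : ℝ} (hx : x₀ ≤ x) : lineVal (b k) x ≤ lineVal L x :=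
    lineVal_le_lineVal_of_le (hL k hk) (hx₀L k hk) hx
  have hne : (sideCell F ε).Nonempty := by
    obtain ⟨y, hby, hyL⟩ := Finset.exists_between' ((Finset.range m).image
      fun k => lineVal (b k) (x₀ + 1)) {lineVal L (x₀ + 1)} (by
        simp only [Finset.mem_image, Finset.mem_range, Finset.mem_singleton]
        rintro _ ⟨k, hk, rfl⟩ _ rfl
        exact lineVal_lt_lineVal_of_lt (hL k hk) (hx₀L k hk) (lt_add_one x₀))
    refine ⟨(x₀ + 1, y), (forall_mem_F _).mpr ⟨fun k hk => ?_, ?_⟩⟩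
    · rw [hεb k hk, one_mul, heightAbove, sub_pos]
      exact hby _ (Finset.mem_image_of_mem _ (Finset.mem_range.mpr hk))
    · rw [hεL, heightAbove, neg_one_mul, neg_pos, sub_neg]
      exact hyL _ (Finset.mem_singleton_self _)
  refine ⟨sideCell F ε, isCellOf_sideCell hne, (forall_mem_F _).mpr ⟨fun k hk => ?_, ?_⟩⟩
  · obtain ⟨x₁, x₂, h12, hx₀₁, hlo, hhi⟩ := exists_envelope_interval hs hcup hx₀ hk
    have on_envelope (x : ℝ) (h₁ : x₁ ≤ x) (h₂ : x ≤ x₂) :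
        ∀ l ∈ F, 0 ≤ ε l * heightAbove l (x, lineVal (b k) x) :=
      (mem_closure_iff _ _).mpr ⟨fun j hj => lineVal_le_of_crossing_le_of_le_crossing hs hj hk
        (fun i hi => (hlo i hi).trans h₁) (fun i hi hi' => h₂.trans (hhi i hi hi')),
        below_L k hk (hx₀₁.trans h₁)⟩
    exact contributes_sideCell hne h12.ne (on_envelope x₁ le_rfl h12.le)
      (on_envelope x₂ h12.le le_rfl)
  · have on_L (x : ℝ) (hx : x₀ ≤ x) : ∀ l ∈ F, 0 ≤ ε l * heightAbove l (x, lineVal L x) :=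
      (mem_closure_iff _ _).mpr ⟨fun k hk => below_L k hk hx, le_rfl⟩
    exact contributes_sideCell hne (lt_add_one x₀).ne (on_L x₀ le_rfl) (on_L _ (by linarith))

lemma card_image_union_singleton {b : ℕ → ℝ × ℝ} {m : ℕ} {L : ℝ × ℝ}
    (hs : StrictMonoOn (fun k => (b k).1) (Iio m)) (hL : ∀ k < m, (b k).1 < L.1) :
    ((Finset.range m).image b ∪ {L}).card = m + 1 := by
  have hinj : InjOn b (Finset.range m) :=
    InjOn.of_comp (f := b) (g := Prod.fst) (hs.injOn.mono fun k hk => by simpa using hk)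
  have hL_notMem : L ∉ (Finset.range m).image b := by
    simp only [Finset.mem_image, Finset.mem_range, not_exists, not_and]
    exact fun k hk h => (hL k hk).ne (congrArg Prod.fst h)
  rw [Finset.card_union_of_disjoint (Finset.disjoint_singleton_right.mpr hL_notMem),
    Finset.card_image_of_injOn hinj, Finset.card_range, Finset.card_singleton]

lemma cup_below_apex {b : ℕ → ℝ × ℝ} {m : ℕ} {L : ℝ × ℝ}
    (hs : StrictMonoOn (fun k => (b k).1) (Iio m)) (hL : ∀ k < m, (b k).1 < L.1)
    (hvert : ∀ k, 0 < k → k < m → (interPt (b 0) (b k)).2 < (interPt (b 0) L).2 ∧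
      (interPt (b k) L).2 < (interPt (b 0) L).2) :
    (∀ k < m, lineVal (b k) (interPt (b 0) L).1 ≤ lineVal L (interPt (b 0) L).1) ∧
      (1 < m → (interPt (b 0) L).1 < crossing b 0) := by
  have below (k : ℕ) (hk0 : 0 < k) (hk : k < m) :
      lineVal (b k) (interPt (b 0) L).1 < (interPt (b 0) L).2 :=
    lineVal_lt_of_interPt_snd_lt (hs (show 0 < m by omega) hk hk0) (hL k hk) (hvert k hk0 hk).1
      (hvert k hk0 hk).2
  refine ⟨fun k hk => ?_, fun h1 => ?_⟩
  · rw [lineVal_interPt_fst (hL 0 (by omega)).ne]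
    rcases Nat.eq_zero_or_pos k with rfl | hk0
    · exact le_rfl
    · exact (below k hk0 hk).le
  · exact (lineVal_lt_lineVal_iff_lt_interPt (hs (show 0 < m by omega) h1 zero_lt_one)).mp
      (below 1 one_pos h1)

/-- In a vertical configuration, an (m)-cup starting with the line of smallest slope,
together with the line of largest slope, gives m + 1 lines in convex position. -/
theorem stmt16 (N m : ℕ) (hN : 2 ≤ N) (hm : 2 ≤ m)
    (a : Fin N → ℝ × ℝ) (hmono : StrictMono fun i => (a i).1)
    (hvert : ∀ i j : Fin N, i < j → ¬((i : ℕ) = 0 ∧ (j : ℕ) = N - 1) →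
      (interPt (a i) (a j)).2 < (interPt (a ⟨0, by omega⟩) (a ⟨N - 1, by omega⟩)).2)
    (c : Fin m → Fin N) (hc : StrictMono c) (hc0 : (c ⟨0, by omega⟩ : ℕ) = 0)
    (hclt : ∀ t : Fin m, (c t : ℕ) < N - 1)
    (hcup : IsCup (a ∘ c)) :
    (Finset.univ.image (a ∘ c) ∪ {a ⟨N - 1, by omega⟩}).card = m + 1 ∧
      ConvexPos (Finset.univ.image (a ∘ c) ∪ {a ⟨N - 1, by omega⟩}) := by
  set L := a ⟨N - 1, by omega⟩
  obtain ⟨b, hb⟩ : ∃ b : ℕ → ℝ × ℝ, ∀ k (hk : k < m), b k = (a ∘ c) ⟨k, hk⟩ :=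
    ⟨fun k => if hk : k < m then a (c ⟨k, hk⟩) else 0, fun k hk => dif_pos hk⟩
  have hs := hcup.strictMonoOn_of_eq hb
  have hL (k : ℕ) (hk : k < m) : (b k).1 < L.1 := by
    rw [hb k hk]
    exact hmono (Fin.lt_def.mpr (hclt ⟨k, hk⟩))
  have hac0 : a (c ⟨0, by omega⟩) = a ⟨0, by omega⟩ := congrArg a (Fin.ext hc0)
  have hb0 : b 0 = a ⟨0, by omega⟩ := (hb 0 (by omega)).trans hac0
  have hvert_b (k : ℕ) (hk0 : 0 < k) (hk : k < m) :
      (interPt (b 0) (b k)).2 < (interPt (b 0) L).2 ∧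
        (interPt (b k) L).2 < (interPt (b 0) L).2 := by
    have hck : c ⟨0, by omega⟩ < c ⟨k, hk⟩ := hc (Fin.mk_lt_mk.mpr hk0)
    have hck0 : 0 < (c ⟨k, hk⟩ : ℕ) := hc0 ▸ Fin.lt_def.mp hck
    have h₀ := hvert _ _ hck fun h => (hclt ⟨k, hk⟩).ne h.2
    rw [hac0] at h₀
    rw [hb0, hb k hk]
    exact ⟨h₀, hvert _ _ (Fin.lt_def.mpr (hclt ⟨k, hk⟩)) fun h => hck0.ne' h.1⟩
  obtain ⟨hqL, hq⟩ := cup_below_apex hs hL hvert_b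
  rw [Finset.image_univ_eq_image_range hb]
  exact ⟨card_image_union_singleton hs hL, convexPos_cup_union hs (hcup.below_of_eq hb) hL hqL hq⟩
end
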